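/- arXiv:1406.0447 — 15 statements merged into one kernel-verified Lean document; each statement's English description precedes it below -/
import Mathlib

section
/- For distinct real numbers λ₁,…,λ_{n+1}, ∑_{σ∈S_{n+1}} ∑_{k=1}^{n} (λ_{σ(1)} + ⋯ + λ_{σ(k)})/(λ_{σ(k)} − λ_{σ(k+1)}) = C(n+1,2)·n!. -/
/-!
Swapping the positions `k` and `k + 1` of `σ` pairs the `k`-th summand `(S + x) / (x - y)`,
with `S` the sum of the first `k - 1` values and `x = λ_{σ(k)}`, `y = λ_{σ(k+1)}`, with
`(S + y) / (y - x)`, and the two add up to `1`. Hence each `k` contributes `(n+1)!/2`, and the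
`n` values of `k` give `n (n+1)!/2 = C(n+1,2) n!`.
-/

open Finset

theorem Fintype.two_nsmul_sum_eq_card_nsmul_of_add_comp_equiv {α M : Type*} [Fintype α]
    [AddCommMonoid M] (e : α ≃ α) (f : α → M) (c : M) (h : ∀ x, f x + f (e x) = c) :
    2 • ∑ x, f x = Fintype.card α • c := by
  calc 2 • ∑ x, f x = ∑ x, f x + ∑ x, f (e x) := by rw [two_nsmul, Equiv.sum_comp]
    _ = ∑ _x : α, c := by rw [← sum_add_distrib]; exact sum_congr _ _ h
    _ = Fintype.card α • c := by rw [sum_const, card_univ]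

theorem Finset.sum_Iic_comp_swap_of_lt {α M : Type*} [LinearOrder α] [LocallyFiniteOrderBot α]
    [AddCommMonoid M] {a b : α} (hab : a < b) (g : α → M) :
    ∑ i ∈ Iic a, g (Equiv.swap a b i) = g b + ∑ i ∈ Iio a, g i := by
  rw [← Iio_insert, sum_insert (by simp), Equiv.swap_apply_left]
  refine congrArg _ (sum_congr rfl fun i hi => ?_)
  have hia : i < a := mem_Iio.mp hi
  rw [Equiv.swap_apply_of_ne_of_ne hia.ne (hia.trans hab).ne]

theorem add_div_sub_add_add_div_sub_eq_one {K : Type*} [Field K] {x y : K} (hxy : x ≠ y)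
    (s : K) : (x + s) / (x - y) + (y + s) / (y - x) = 1 := by
  rw [← neg_sub x y, div_neg, ← sub_eq_add_neg, ← sub_div, div_eq_one_iff_eq (sub_ne_zero.mpr hxy)]
  ring

theorem sum_perm_sum_Iic_div_sub {α K : Type*} [Fintype α] [LinearOrder α]
    [LocallyFiniteOrderBot α] [Field K] [CharZero K] {l : α → K} (hl : Function.Injective l)
    {a b : α} (hab : a < b) :
    ∑ σ : Equiv.Perm α, (∑ i ∈ Iic a, l (σ i)) / (l (σ a) - l (σ b))
      = (Fintype.card α).factorial / 2 := by
  have hpair : ∀ σ : Equiv.Perm α,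
      (∑ i ∈ Iic a, l (σ i)) / (l (σ a) - l (σ b))
        + (∑ i ∈ Iic a, l ((σ * Equiv.swap a b) i))
          / (l ((σ * Equiv.swap a b) a) - l ((σ * Equiv.swap a b) b)) = 1 := by
    intro σ
    have hne : l (σ a) ≠ l (σ b) := fun h => hab.ne (σ.injective (hl h))
    simp only [Equiv.Perm.mul_apply, Equiv.swap_apply_left, Equiv.swap_apply_right,
      sum_Iic_comp_swap_of_lt hab (fun i => l (σ i))]
    rw [← Iio_insert, sum_insert (by simp)]
    exact add_div_sub_add_add_div_sub_eq_one hne _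
  have h2 := Fintype.two_nsmul_sum_eq_card_nsmul_of_add_comp_equiv
    (Equiv.mulRight (Equiv.swap a b)) _ 1 hpair
  rw [Fintype.card_perm, nsmul_eq_mul, nsmul_one] at h2
  push_cast at h2
  rw [eq_div_iff two_ne_zero, mul_comm]
  exact h2

theorem stmt1 (n : ℕ) (l : Fin (n+1) → ℝ) (hl : Function.Injective l) :
    ∑ σ : Equiv.Perm (Fin (n+1)), ∑ k : Fin n,
      (∑ i ∈ Finset.Iic k.castSucc, l (σ i)) / (l (σ k.castSucc) - l (σ k.succ))
    = ((n+1).choose 2 : ℝ) * n.factorial := by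
  rw [sum_comm, sum_congr rfl fun k _ => sum_perm_sum_Iic_div_sub hl (Fin.castSucc_lt_succ (i := k)),
    sum_const, card_univ, Fintype.card_fin, Fintype.card_fin, nsmul_eq_mul, Nat.cast_choose_two,
    Nat.factorial_succ]
  push_cast
  ring
end

section
/- For distinct real numbers λ₁,…,λ_{n+1}, ∑_{σ∈S_{n+1}} ∑_{k=1}^{n} (λ_{σ(1)}² + ⋯ + λ_{σ(k)}²)/(λ_{σ(k)} − λ_{σ(k+1)}) = n·(λ₁ + ⋯ + λ_{n+1})·n!. -/
open Finset

/-
Fix k and pair each permutation σ with σ ∘ (k k+1). The two prefix sums of squares share everything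
but their last term, so with a = λ_{σ(k)}, b = λ_{σ(k+1)} the two summands add up to
(a² - b²)/(a - b) = a + b. Hence twice the k-th sum is ∑_σ (λ_{σ(k)} + λ_{σ(k+1)}) = 2 n! ∑_j λ_j,
since each value λ_j sits at a given position in exactly n! permutations.
-/

theorem Equiv.Perm.card_smul_sum_apply {α M : Type*} [Fintype α] [DecidableEq α]
    [AddCommMonoid M] (f : α → M) (x : α) :
    Fintype.card α • ∑ σ : Equiv.Perm α, f (σ x) = (Fintype.card α).factorial • ∑ y, f y := by
  have h_indep : ∀ y, ∑ σ : Equiv.Perm α, f (σ y) = ∑ σ : Equiv.Perm α, f (σ x) := fun y => by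
    rw [← Equiv.sum_comp (Equiv.mulRight (Equiv.swap x y))]
    simp [Equiv.Perm.mul_apply]
  calc Fintype.card α • ∑ σ : Equiv.Perm α, f (σ x)
      = ∑ y, ∑ σ : Equiv.Perm α, f (σ y) := by simp [h_indep]
    _ = ∑ σ : Equiv.Perm α, ∑ y, f (σ y) := Finset.sum_comm
    _ = (Fintype.card α).factorial • ∑ y, f y := by
      simp [Equiv.sum_comp, Fintype.card_perm]

theorem Equiv.Perm.sum_fin_apply {K : Type*} [Field K] [CharZero K] {n : ℕ}
    (f : Fin (n+1) → K) (x : Fin (n+1)) :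
    ∑ σ : Equiv.Perm (Fin (n+1)), f (σ x) = n.factorial * ∑ j, f j := by
  have h := Equiv.Perm.card_smul_sum_apply f x
  rw [Fintype.card_fin, Nat.factorial_succ, nsmul_eq_mul, mul_nsmul, nsmul_eq_mul,
    nsmul_eq_mul] at h
  exact mul_left_cancel₀ (Nat.cast_add_one_ne_zero n) (by push_cast at h ⊢; linear_combination h)

theorem add_sq_div_sub_add_add_sq_div_sub {K : Type*} [Field K] {a b : K} (hab : a ≠ b)
    (A : K) : (a ^ 2 + A) / (a - b) + (b ^ 2 + A) / (b - a) = a + b := by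
  have hab' : a - b ≠ 0 := sub_ne_zero.mpr hab
  rw [← neg_sub a b, div_neg, ← sub_eq_add_neg, ← sub_div]
  field_simp
  ring

theorem sum_Iic_castSucc_mul_swap {M : Type*} [AddCommMonoid M] {n : ℕ} (g : Fin (n+1) → M)
    (σ : Equiv.Perm (Fin (n+1))) (k : Fin n) :
    ∑ i ∈ Iic k.castSucc, g ((σ * Equiv.swap k.castSucc k.succ) i)
      = g (σ k.succ) + ∑ i ∈ Iio k.castSucc, g (σ i) := by
  rw [Iic_eq_cons_Iio, sum_cons]
  congr 1
  · simp
  · refine sum_congr rfl fun i hi => ?_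
    have hi' : i < k.castSucc := mem_Iio.mp hi
    rw [Equiv.Perm.mul_apply, Equiv.swap_apply_of_ne_of_ne hi'.ne
      (hi'.trans Fin.castSucc_lt_succ).ne]

theorem sum_perm_prefix_sq_div {K : Type*} [Field K] [CharZero K] {n : ℕ}
    (l : Fin (n+1) → K) (hl : Function.Injective l) (k : Fin n) :
    ∑ σ : Equiv.Perm (Fin (n+1)),
      (∑ i ∈ Iic k.castSucc, (l (σ i))^2) / (l (σ k.castSucc) - l (σ k.succ))
    = n.factorial * ∑ j, l j := by
  set τ := Equiv.swap k.castSucc k.succ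
  set f : Equiv.Perm (Fin (n+1)) → K := fun σ =>
    (∑ i ∈ Iic k.castSucc, (l (σ i))^2) / (l (σ k.castSucc) - l (σ k.succ))
  have h_pair : ∀ σ, f σ + f (σ * τ) = l (σ k.castSucc) + l (σ k.succ) := fun σ => by
    have hne : l (σ k.castSucc) ≠ l (σ k.succ) :=
      (hl.comp σ.injective).ne Fin.castSucc_lt_succ.ne
    have h_swap_castSucc : (σ * τ) k.castSucc = σ k.succ := by simp [τ]
    have h_swap_succ : (σ * τ) k.succ = σ k.castSucc := by simp [τ]
    have h_num : ∑ i ∈ Iic k.castSucc, l ((σ * τ) i) ^ 2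
        = l (σ k.succ) ^ 2 + ∑ i ∈ Iio k.castSucc, l (σ i) ^ 2 :=
      sum_Iic_castSucc_mul_swap (fun j => l j ^ 2) σ k
    simp only [f]
    rw [h_num, h_swap_castSucc, h_swap_succ, Iic_eq_cons_Iio, sum_cons]
    exact add_sq_div_sub_add_add_sq_div_sub hne _
  have h_double :
      2 * ∑ σ, f σ = ∑ σ : Equiv.Perm (Fin (n+1)), (l (σ k.castSucc) + l (σ k.succ)) := by
    rw [two_mul]
    nth_rewrite 2 [← Equiv.sum_comp (Equiv.mulRight τ) f]
    rw [← sum_add_distrib]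
    exact sum_congr rfl fun σ _ => h_pair σ
  rw [sum_add_distrib, Equiv.Perm.sum_fin_apply, Equiv.Perm.sum_fin_apply] at h_double
  linear_combination h_double / 2

theorem stmt2 (n : ℕ) (l : Fin (n+1) → ℝ) (hl : Function.Injective l) :
    ∑ σ : Equiv.Perm (Fin (n+1)), ∑ k : Fin n,
      (∑ i ∈ Finset.Iic k.castSucc, (l (σ i))^2) / (l (σ k.castSucc) - l (σ k.succ))
    = (n : ℝ) * (∑ j, l j) * n.factorial := by
  rw [sum_comm, sum_congr rfl fun k _ => sum_perm_prefix_sq_div l hl k, sum_const, card_univ,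
    Fintype.card_fin, nsmul_eq_mul]
  ring
end

section
/- For any real number Y and pairwise distinct real numbers λ₁,…,λ_{n+1}, ∑_{σ∈S_{n+1}} ∏_{k=1}^{n} (λ_{σ(k)} − Y)/(λ_{σ(k)} − λ_{σ(k+1)}) = 1. -/
/-! As a function of `Y` the sum is a polynomial of degree at most `n`. At `Y = λ_j` every
permutation not ending in `j` has a vanishing numerator, and for those ending in `j` the last
factor is `1`, leaving the same sum over the remaining `n` points, which is `1` by induction.
A polynomial of degree at most `n` taking the value `1` at `n + 1` distinct points is `1`. -/

open Equiv Finset Polynomial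

variable {K : Type*} [Field K]

/- The sum of the theorem with every chain read backwards (see `sum_prod_castSucc_succ_eq_chainSum`),
so that the point the chain ends at sits at position `0`, where `Perm.decomposeFin` splits it off. -/
def chainSum {n : ℕ} (l : Fin (n + 1) → K) (y : K) : K :=
  ∑ σ : Perm (Fin (n + 1)), ∏ i : Fin n,
    (l (σ i.succ) - y) / (l (σ i.succ) - l (σ i.castSucc))

noncomputable def chainPoly {n : ℕ} (l : Fin (n + 1) → K) : K[X] :=
  ∑ σ : Perm (Fin (n + 1)), ∏ i : Fin n,
    C (l (σ i.succ) - l (σ i.castSucc))⁻¹ * (C (l (σ i.succ)) - X)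

theorem eval_chainPoly {n : ℕ} (l : Fin (n + 1) → K) (y : K) :
    (chainPoly l).eval y = chainSum l y := by
  simp only [chainPoly, chainSum, eval_finsetSum, eval_prod, eval_mul, eval_C, eval_sub, eval_X,
    div_eq_inv_mul]

theorem natDegree_chainPoly_le {n : ℕ} (l : Fin (n + 1) → K) : (chainPoly l).natDegree ≤ n := by
  refine natDegree_sum_le_of_forall_le _ _ fun σ _ => (natDegree_prod_le _ _).trans ?_
  refine (sum_le_card_nsmul _ _ 1 fun i _ => ?_).trans (by simp)
  exact (natDegree_C_mul_le _ _).trans (natDegree_sub_le_of_le (natDegree_C _).le natDegree_X_le)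

theorem chainSum_comp_perm {n : ℕ} (l : Fin (n + 1) → K) (τ : Perm (Fin (n + 1))) (y : K) :
    chainSum (l ∘ τ) y = chainSum l y :=
  Equiv.sum_comp (Equiv.mulLeft τ) fun σ => ∏ i : Fin n,
    (l (σ i.succ) - y) / (l (σ i.succ) - l (σ i.castSucc))

theorem chainSum_self_zero {n : ℕ} {l : Fin (n + 2) → K} (hl : Function.Injective l) :
    chainSum l (l 0) = chainSum (l ∘ Fin.succ) (l 0) := by
  rw [chainSum, ← Equiv.sum_comp Perm.decomposeFin.symm, Fintype.sum_prod_type,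
    sum_eq_single_of_mem 0 (mem_univ 0)]
  · refine sum_congr rfl fun e _ => ?_
    set σ := Perm.decomposeFin.symm (0, e)
    have hσ0 : σ 0 = 0 := Perm.decomposeFin_symm_apply_zero 0 e
    have hσ : ∀ x, σ x.succ = (e x).succ := by
      simp [σ, Perm.decomposeFin_symm_apply_succ]
    rw [Fin.prod_univ_succ, Fin.castSucc_zero, hσ0, hσ,
      div_self (sub_ne_zero.2 (hl.ne (Fin.succ_ne_zero _))), one_mul]
    refine prod_congr rfl fun i _ => ?_
    rw [← Fin.succ_castSucc, hσ, hσ]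
    rfl
  · intro p _ hp
    refine sum_eq_zero fun e _ => ?_
    obtain ⟨i, hi⟩ : ∃ i, Fin.succ i = (Perm.decomposeFin.symm (p, e)).symm 0 := by
      rw [Fin.exists_succ_eq, Ne, symm_apply_eq, Perm.decomposeFin_symm_apply_zero]
      exact Ne.symm hp
    exact prod_eq_zero (mem_univ i) (by rw [hi, apply_symm_apply, sub_self, zero_div])

theorem sum_prod_castSucc_succ_eq_chainSum {n : ℕ} (l : Fin (n + 1) → K) (y : K) :
    ∑ σ : Perm (Fin (n + 1)), ∏ k : Fin n,
      (l (σ k.castSucc) - y) / (l (σ k.castSucc) - l (σ k.succ)) = chainSum l y := by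
  rw [chainSum, ← Equiv.sum_comp (Equiv.mulRight Fin.revPerm)]
  refine sum_congr rfl fun σ _ => ?_
  rw [← Equiv.prod_comp Fin.revPerm]
  simp [Fin.rev_castSucc, Fin.rev_succ]

theorem chainSum_eq_one_of_forall_apply_eq_one {n : ℕ} {l : Fin (n + 1) → K}
    (hl : Function.Injective l) (h : ∀ j, chainSum l (l j) = 1) (y : K) : chainSum l y = 1 := by
  have hP : chainPoly l = C 1 :=
    eq_of_natDegree_lt_card_of_eval_eq _ _ hl (fun j => by rw [eval_chainPoly, h, eval_C])
      (by simpa using Nat.lt_succ_of_le (natDegree_chainPoly_le l))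
  rw [← eval_chainPoly, hP, eval_C]

theorem chainSum_eq_one {n : ℕ} {l : Fin (n + 1) → K} (hl : Function.Injective l) (y : K) :
    chainSum l y = 1 := by
  induction n generalizing y with
  | zero => simp [chainSum]
  | succ n ih =>
    refine chainSum_eq_one_of_forall_apply_eq_one hl (fun j => ?_) y
    have hl' : Function.Injective (l ∘ swap 0 j) := hl.comp (swap 0 j).injective
    calc chainSum l (l j) = chainSum (l ∘ swap 0 j) ((l ∘ swap 0 j) 0) := by
          rw [chainSum_comp_perm, Function.comp_apply, swap_apply_left]
      _ = chainSum (l ∘ swap 0 j ∘ Fin.succ) ((l ∘ swap 0 j) 0) := chainSum_self_zero hl'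
      _ = 1 := ih (hl'.comp (Fin.succ_injective _)) _

theorem stmt3 (n : ℕ) (Y : ℝ) (l : Fin (n+1) → ℝ) (hl : Function.Injective l) :
    ∑ σ : Equiv.Perm (Fin (n+1)), ∏ k : Fin n,
      (l (σ k.castSucc) - Y) / (l (σ k.castSucc) - l (σ k.succ)) = 1 :=
  (sum_prod_castSucc_succ_eq_chainSum l Y).trans (chainSum_eq_one hl Y)
end

section
/- For any real number Y and pairwise distinct real numbers λ₁,…,λ_{n+1}, ∑_{σ∈S_{n+1}} ∏_{k=1}^{n} (Y − λ_{σ(k+1)})/(λ_{σ(k)} − λ_{σ(k+1)}) = 1. -/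
open Finset

lemma lagrangeA {m : ℕ} (z : ℝ) (g : Fin (m+1) → ℝ) (hg : Function.Injective g) :
    ∑ p : Fin (m+1), ∏ i ∈ Finset.univ.erase p, (z - g i) / (g p - g i) = 1 := by
  have h := Lagrange.sum_basis (v := g) (s := (Finset.univ : Finset (Fin (m+1))))
      hg.injOn ⟨0, mem_univ 0⟩
  have h2 := congrArg (Polynomial.eval z) h
  rw [Polynomial.eval_finset_sum, Polynomial.eval_one] at h2
  rw [← h2]
  refine Finset.sum_congr rfl fun p _ => ?_
  rw [Lagrange.basis, Polynomial.eval_prod]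
  refine Finset.prod_congr rfl fun i _ => ?_
  simp [Lagrange.basisDivisor, div_eq_inv_mul, mul_comm]

lemma swap_succ_ne {n : ℕ} (p : Fin (n+1)) (i : Fin n) : Equiv.swap 0 p i.succ ≠ p := by
  intro h
  have : i.succ = Equiv.swap 0 p p := by
    have := congrArg (Equiv.swap 0 p) h
    rwa [Equiv.swap_apply_self] at this
  rw [Equiv.swap_apply_right] at this
  exact (Fin.succ_ne_zero i) this

lemma swap_ne_zero_of_ne {n : ℕ} (p j : Fin (n+1)) (hj : j ≠ p) : Equiv.swap 0 p j ≠ 0 := by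
  intro h
  have : j = Equiv.swap 0 p 0 := by
    have := congrArg (Equiv.swap 0 p) h
    rwa [Equiv.swap_apply_self] at this
  rw [Equiv.swap_apply_left] at this
  exact hj this

lemma reindexP {n : ℕ} (p : Fin (n+1)) (F : Fin (n+1) → ℝ) :
    ∏ i : Fin n, F (Equiv.swap 0 p i.succ) = ∏ j ∈ Finset.univ.erase p, F j := by
  refine Finset.prod_bij' (fun i _ => Equiv.swap 0 p i.succ)
    (fun j hj => (Equiv.swap 0 p j).pred
      (swap_ne_zero_of_ne p j (Finset.mem_erase.mp hj).1))
    (fun i _ => Finset.mem_erase.mpr ⟨swap_succ_ne p i, Finset.mem_univ _⟩)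
    (fun j _ => Finset.mem_univ _) ?_ ?_ ?_
  · intro i _
    simp
  · intro j hj
    simp [Fin.succ_pred, Equiv.swap_apply_self]
  · intro i _
    rfl

lemma alg {m : ℕ} (Y x : ℝ) (g : Fin (m+1) → ℝ) (hg : Function.Injective g)
    (hx : ∀ i, g i ≠ x) :
    ∑ p : Fin (m+1), (Y - g p) / (x - g p) * ∏ i ∈ Finset.univ.erase p, (Y - g i) / (g p - g i)
      = ∏ i : Fin (m+1), (Y - g i) / (x - g i) := by
  set N := ∏ i : Fin (m+1), (Y - g i) with hN
  set D := ∏ i : Fin (m+1), (x - g i) with hD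
  have hxp : ∀ p : Fin (m+1), x - g p ≠ 0 := fun p => sub_ne_zero.mpr fun h => hx p h.symm
  have hDne : D ≠ 0 := Finset.prod_ne_zero_iff.mpr fun i _ => hxp i
  have hterm : ∀ p : Fin (m+1),
      (Y - g p) / (x - g p) * ∏ i ∈ univ.erase p, (Y - g i) / (g p - g i)
        = N / ((x - g p) * ∏ i ∈ univ.erase p, (g p - g i)) := by
    intro p
    rw [Finset.prod_div_distrib, div_mul_div_comm,
      Finset.mul_prod_erase univ (fun i => Y - g i) (mem_univ p)]
  have hlag := lagrangeA x g hg
  have hlag2 : ∀ p : Fin (m+1),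
      ∏ i ∈ univ.erase p, (x - g i) / (g p - g i)
        = D / ((x - g p) * ∏ i ∈ univ.erase p, (g p - g i)) := by
    intro p
    rw [Finset.prod_div_distrib, hD, ← Finset.mul_prod_erase univ (fun i => x - g i) (mem_univ p)]
    rw [mul_div_mul_left _ _ (hxp p)]
  have hsum : ∑ p : Fin (m+1), D / ((x - g p) * ∏ i ∈ univ.erase p, (g p - g i)) = 1 := by
    rw [← hlag]; exact (Finset.sum_congr rfl fun p _ => (hlag2 p).symm)
  calc ∑ p : Fin (m+1), (Y - g p) / (x - g p) * ∏ i ∈ univ.erase p, (Y - g i) / (g p - g i)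
      = ∑ p : Fin (m+1), (N / D) * (D / ((x - g p) * ∏ i ∈ univ.erase p, (g p - g i))) := by
        refine Finset.sum_congr rfl fun p _ => ?_
        rw [hterm p, div_mul_div_comm, mul_comm N D, mul_div_mul_left _ _ hDne]
    _ = (N / D) * ∑ p : Fin (m+1), D / ((x - g p) * ∏ i ∈ univ.erase p, (g p - g i)) := by
        rw [Finset.mul_sum]
    _ = N / D := by rw [hsum, mul_one]
    _ = ∏ i : Fin (m+1), (Y - g i) / (x - g i) := by rw [hN, hD, Finset.prod_div_distrib]

lemma key (Y : ℝ) : ∀ (n : ℕ) (x : ℝ) (μ : Fin n → ℝ), Function.Injective μ →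
    (∀ i, μ i ≠ x) →
    ∑ e : Equiv.Perm (Fin n), ∏ k : Fin n,
      (Y - (Fin.cons x (μ ∘ e) : Fin (n+1) → ℝ) k.succ) /
        ((Fin.cons x (μ ∘ e) : Fin (n+1) → ℝ) k.castSucc -
          (Fin.cons x (μ ∘ e) : Fin (n+1) → ℝ) k.succ)
    = ∏ i : Fin n, (Y - μ i) / (x - μ i) := by
  intro n
  induction n with
  | zero => intro x μ _ _; simp
  | succ n ih =>
    intro x μ hμ hx
    rw [← Equiv.sum_comp (Equiv.Perm.decomposeFin (n := n)).symm, Fintype.sum_prod_type]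
    have hp : ∀ p : Fin (n+1), ∑ e' : Equiv.Perm (Fin n),
        ∏ k : Fin (n+1),
          (Y - (Fin.cons x (μ ∘ (Equiv.Perm.decomposeFin.symm (p, e'))) : Fin (n+2) → ℝ) k.succ) /
            ((Fin.cons x (μ ∘ (Equiv.Perm.decomposeFin.symm (p, e'))) : Fin (n+2) → ℝ) k.castSucc -
              (Fin.cons x (μ ∘ (Equiv.Perm.decomposeFin.symm (p, e'))) : Fin (n+2) → ℝ) k.succ)
        = (Y - μ p) / (x - μ p) *
            ∏ i : Fin n, (Y - μ (Equiv.swap 0 p i.succ)) / (μ p - μ (Equiv.swap 0 p i.succ)) := by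
      intro p
      set ν : Fin n → ℝ := fun i => μ (Equiv.swap 0 p i.succ) with hν
      have hcomp : ∀ e' : Equiv.Perm (Fin n),
          μ ∘ (Equiv.Perm.decomposeFin.symm (p, e')) = Fin.cons (μ p) (ν ∘ e') := by
        intro e'
        funext m
        induction m using Fin.cases with
        | zero => simp
        | succ j => simp [hν]
      have hsplit : ∀ e' : Equiv.Perm (Fin n),
          ∏ k : Fin (n+1),
            (Y - (Fin.cons x (μ ∘ (Equiv.Perm.decomposeFin.symm (p, e'))) : Fin (n+2) → ℝ) k.succ) /
              ((Fin.cons x (μ ∘ (Equiv.Perm.decomposeFin.symm (p, e'))) : Fin (n+2) → ℝ) k.castSucc -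
                (Fin.cons x (μ ∘ (Equiv.Perm.decomposeFin.symm (p, e'))) : Fin (n+2) → ℝ) k.succ)
          = (Y - μ p) / (x - μ p) *
              ∏ k : Fin n,
                (Y - (Fin.cons (μ p) (ν ∘ e') : Fin (n+1) → ℝ) k.succ) /
                  ((Fin.cons (μ p) (ν ∘ e') : Fin (n+1) → ℝ) k.castSucc -
                    (Fin.cons (μ p) (ν ∘ e') : Fin (n+1) → ℝ) k.succ) := by
        intro e'
        rw [hcomp e', Fin.prod_univ_succ]
        congr 1
      have hν_inj : Function.Injective ν := by
        intro a b hab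
        have := hμ hab
        have := (Equiv.swap 0 p).injective this
        exact Fin.succ_injective _ this
      have hν_ne : ∀ i, ν i ≠ μ p := by
        intro i h
        have h2 : Equiv.swap 0 p i.succ = p := hμ h
        exact swap_succ_ne p i h2
      calc ∑ e' : Equiv.Perm (Fin n), _ = _ := Finset.sum_congr rfl fun e' _ => hsplit e'
        _ = (Y - μ p) / (x - μ p) *
            ∑ e' : Equiv.Perm (Fin n), ∏ k : Fin n,
              (Y - (Fin.cons (μ p) (ν ∘ e') : Fin (n+1) → ℝ) k.succ) /
                ((Fin.cons (μ p) (ν ∘ e') : Fin (n+1) → ℝ) k.castSucc -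
                  (Fin.cons (μ p) (ν ∘ e') : Fin (n+1) → ℝ) k.succ) := by
          rw [Finset.mul_sum]
        _ = (Y - μ p) / (x - μ p) * ∏ i : Fin n, (Y - ν i) / (μ p - ν i) := by
          rw [ih (μ p) ν hν_inj hν_ne]
    calc ∑ p : Fin (n+1), _ = _ := Finset.sum_congr rfl fun p _ => hp p
      _ = ∑ p : Fin (n+1), (Y - μ p) / (x - μ p) *
            ∏ j ∈ univ.erase p, (Y - μ j) / (μ p - μ j) := by
        refine Finset.sum_congr rfl fun p _ => ?_
        rw [reindexP p (fun j => (Y - μ j) / (μ p - μ j))]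
      _ = ∏ i : Fin (n+1), (Y - μ i) / (x - μ i) := alg Y x μ hμ hx

theorem stmt4 (n : ℕ) (Y : ℝ) (l : Fin (n+1) → ℝ) (hl : Function.Injective l) :
    ∑ σ : Equiv.Perm (Fin (n+1)), ∏ k : Fin n,
      (Y - l (σ k.succ)) / (l (σ k.castSucc) - l (σ k.succ)) = 1 := by
  rw [← Equiv.sum_comp (Equiv.Perm.decomposeFin (n := n)).symm, Fintype.sum_prod_type]
  have hp : ∀ p : Fin (n+1), ∑ e : Equiv.Perm (Fin n), ∏ k : Fin n,
      (Y - l (Equiv.Perm.decomposeFin.symm (p, e) k.succ)) /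
        (l (Equiv.Perm.decomposeFin.symm (p, e) k.castSucc) -
          l (Equiv.Perm.decomposeFin.symm (p, e) k.succ))
      = ∏ j ∈ univ.erase p, (Y - l j) / (l p - l j) := by
    intro p
    set ν : Fin n → ℝ := fun i => l (Equiv.swap 0 p i.succ) with hν
    have hν_inj : Function.Injective ν := by
      intro a b hab
      have := hl hab
      have := (Equiv.swap 0 p).injective this
      exact Fin.succ_injective _ this
    have hν_ne : ∀ i, ν i ≠ l p := by
      intro i h
      exact swap_succ_ne p i (hl h)
    have hcomp : ∀ e : Equiv.Perm (Fin n),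
        l ∘ (Equiv.Perm.decomposeFin.symm (p, e)) = Fin.cons (l p) (ν ∘ e) := by
      intro e
      funext m
      induction m using Fin.cases with
      | zero => simp
      | succ j => simp [hν]
    calc ∑ e : Equiv.Perm (Fin n), ∏ k : Fin n,
        (Y - l (Equiv.Perm.decomposeFin.symm (p, e) k.succ)) /
          (l (Equiv.Perm.decomposeFin.symm (p, e) k.castSucc) -
            l (Equiv.Perm.decomposeFin.symm (p, e) k.succ))
        = ∑ e : Equiv.Perm (Fin n), ∏ k : Fin n,
          (Y - (Fin.cons (l p) (ν ∘ e) : Fin (n+1) → ℝ) k.succ) /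
            ((Fin.cons (l p) (ν ∘ e) : Fin (n+1) → ℝ) k.castSucc -
              (Fin.cons (l p) (ν ∘ e) : Fin (n+1) → ℝ) k.succ) := by
          refine Finset.sum_congr rfl fun e _ => Finset.prod_congr rfl fun k _ => ?_
          rw [← congrFun (hcomp e) k.succ, ← congrFun (hcomp e) k.castSucc]
          rfl
      _ = ∏ i : Fin n, (Y - ν i) / (l p - ν i) := key Y n (l p) ν hν_inj hν_ne
      _ = ∏ j ∈ univ.erase p, (Y - l j) / (l p - l j) :=
        reindexP p (fun j => (Y - l j) / (l p - l j))
  calc ∑ p : Fin (n+1), _ = _ := Finset.sum_congr rfl fun p _ => hp p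
    _ = 1 := lagrangeA Y l hl
end

section
/- Let λ₁,…,λ_n be pairwise distinct real numbers and Y a real number distinct from all λ_i. Then for each j ∈ {1,…,n}, ∑_{σ∈S_n} (1/(λ_{σ(j)} − Y)) ∏_{k=1}^{n−1} 1/(λ_{σ(k)} − λ_{σ(k+1)}) = (−1)^{n−j} · C(n−1, j−1) · ∏_{k=1}^{n} 1/(λ_k − Y). -/
open Finset
open Polynomial

lemma evalLagrange (U : Finset ℝ) (f : Polynomial ℝ) (hdeg : f.degree < U.card) (Z : ℝ) :
    f.eval Z = ∑ p ∈ U, f.eval p * ∏ k ∈ U.erase p, ((p - k)⁻¹ * (Z - k)) := by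
  have h2 : Lagrange.interpolate U id (fun i => f.eval (id i)) = f :=
    (Lagrange.eq_interpolate (Set.injOn_id _) hdeg).symm
  have h3 : f.eval Z = (Lagrange.interpolate U id (fun i => f.eval (id i))).eval Z := by rw [h2]
  rw [h3, Lagrange.interpolate_apply, Polynomial.eval_finset_sum]
  refine Finset.sum_congr rfl fun p hp => ?_
  rw [Polynomial.eval_mul, Polynomial.eval_C, Lagrange.basis, Polynomial.eval_prod]
  simp [Lagrange.basisDivisor]

lemma key_s5 (t : ℕ) (U : Finset ℝ) (hU : t < U.card) (a Z : ℝ) (hZ : ∀ k ∈ U, k ≠ Z) :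
    ∑ p ∈ U, (p - a)^t * (p - Z)⁻¹ * ∏ k ∈ U.erase p, (k - p)⁻¹
      = (Z - a)^t * ∏ k ∈ U, (k - Z)⁻¹ := by
  have h := evalLagrange U ((X - C a)^t) ?_ Z
  · have he : ∀ x : ℝ, ((X - C a)^t : Polynomial ℝ).eval x = (x - a)^t := by
      intro x; simp
    rw [he] at h
    simp only [he] at h
    -- multiply h by ∏ k ∈ U, (k - Z)⁻¹
    rw [h, Finset.sum_mul]
    refine Finset.sum_congr rfl fun p hp => ?_
    rw [← Finset.mul_prod_erase U _ hp]
    have hpZ : p - Z ≠ 0 := sub_ne_zero_of_ne (hZ p hp)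
    have : ∀ k ∈ U.erase p, (p - k)⁻¹ * (Z - k) * (k - Z)⁻¹ = (k - p)⁻¹ := by
      intro k hk
      have hkZ : k - Z ≠ 0 := sub_ne_zero_of_ne (hZ k (Finset.mem_of_mem_erase hk))
      have h1 : (Z - k) * (k - Z)⁻¹ = -1 := by
        rw [← neg_sub k Z, neg_mul, mul_inv_cancel₀ hkZ]
      calc (p - k)⁻¹ * (Z - k) * (k - Z)⁻¹ = (p - k)⁻¹ * ((Z - k) * (k - Z)⁻¹) := by ring
        _ = -(p - k)⁻¹ := by rw [h1]; ring
        _ = (k - p)⁻¹ := by rw [← inv_neg, neg_sub]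
    have hh : (∏ k ∈ U.erase p, ((p - k)⁻¹ * (Z - k))) * (∏ k ∈ U.erase p, (k - Z)⁻¹)
        = ∏ k ∈ U.erase p, (k - p)⁻¹ := by
      rw [← Finset.prod_mul_distrib]; exact Finset.prod_congr rfl this
    rw [← hh]; ring
  · rw [Polynomial.degree_pow, Polynomial.degree_X_sub_C, nsmul_eq_mul, mul_one]
    exact_mod_cast hU


lemma key0 (t : ℕ) (U : Finset ℝ) (hU : U.card = t + 1) (a : ℝ) :
    ∑ p ∈ U, (p - a)^t * ∏ k ∈ U.erase p, (k - p)⁻¹ = (-1 : ℝ)^t := by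
  set Pl : Polynomial ℝ :=
    ∑ p ∈ U, C ((p - a)^t * ∏ k ∈ U.erase p, (p - k)⁻¹) * ∏ k ∈ U.erase p, (X - C k) with hPl
  have hdeg : ((X - C a)^t : Polynomial ℝ).degree < U.card := by
    rw [hU, Polynomial.degree_pow, Polynomial.degree_X_sub_C, nsmul_eq_mul, mul_one]
    exact_mod_cast lt_add_one t
  have hfun : (X - C a)^t = Pl := by
    apply Polynomial.funext
    intro Z
    have h := evalLagrange U ((X - C a)^t) hdeg Z
    simp only [Polynomial.eval_pow, Polynomial.eval_sub, Polynomial.eval_X, Polynomial.eval_C] at h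
    rw [hPl, Polynomial.eval_finset_sum]
    simp only [Polynomial.eval_pow, Polynomial.eval_sub, Polynomial.eval_X, Polynomial.eval_C,
      Polynomial.eval_mul, Polynomial.eval_prod]
    rw [h]
    refine Finset.sum_congr rfl fun p hp => ?_
    rw [Finset.prod_mul_distrib]
    ring
  -- take coeff t
  have hcardE : ∀ p ∈ U, (U.erase p).card = t := fun p hp => by
    rw [Finset.card_erase_of_mem hp, hU]
    omega
  have hmon : ∀ p ∈ U, (∏ k ∈ U.erase p, (X - C k) : Polynomial ℝ).Monic :=
    fun p hp => monic_prod_of_monic _ _ (fun k _ => monic_X_sub_C k)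
  have hndeg : ∀ p ∈ U, (∏ k ∈ U.erase p, (X - C k) : Polynomial ℝ).natDegree = t := by
    intro p hp
    rw [Polynomial.natDegree_prod_of_monic _ _ (fun k _ => monic_X_sub_C k)]
    simp [hcardE p hp]
  have hcoeffl : Pl.coeff t = ∑ p ∈ U, (p - a)^t * ∏ k ∈ U.erase p, (p - k)⁻¹ := by
    rw [hPl, Polynomial.finset_sum_coeff]
    refine Finset.sum_congr rfl fun p hp => ?_
    rw [Polynomial.coeff_C_mul]
    have := (hmon p hp).coeff_natDegree
    rw [hndeg p hp] at this
    rw [this, mul_one]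
  have hcoeffr : ((X - C a)^t : Polynomial ℝ).coeff t = 1 := by
    have := ((monic_X_sub_C a).pow t).coeff_natDegree
    rwa [Polynomial.natDegree_pow, Polynomial.natDegree_X_sub_C, mul_one] at this
  have hsum : ∑ p ∈ U, (p - a)^t * ∏ k ∈ U.erase p, (p - k)⁻¹ = 1 := by
    rw [← hcoeffl, ← hfun, hcoeffr]
  have hconv : ∀ p ∈ U, (p - a)^t * ∏ k ∈ U.erase p, (k - p)⁻¹
      = (-1 : ℝ)^t * ((p - a)^t * ∏ k ∈ U.erase p, (p - k)⁻¹) := by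
    intro p hp
    have : ∀ k ∈ U.erase p, (k - p)⁻¹ = (-1) * (p - k)⁻¹ := by
      intro k hk
      rw [show (k - p) = -(p - k) by ring, inv_neg]
      ring
    rw [Finset.prod_congr rfl this, Finset.prod_mul_distrib, Finset.prod_const, hcardE p hp]
    ring
  rw [Finset.sum_congr rfl hconv, ← Finset.mul_sum, hsum, mul_one]


lemma subsum (V : Finset ℝ) (t : ℕ) (F : ℝ → Finset ℝ → ℝ) :
    ∑ w ∈ V, ∑ U ∈ (V.erase w).powersetCard t, F w U
      = ∑ U ∈ V.powersetCard (t + 1), ∑ w ∈ U, F w (U.erase w) := by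
  rw [Finset.sum_sigma', Finset.sum_sigma']
  refine Finset.sum_nbij' (fun x => ⟨insert x.1 x.2, x.1⟩) (fun x => ⟨x.2, x.1.erase x.2⟩)
    ?_ ?_ ?_ ?_ ?_
  · rintro ⟨w, U⟩ hx
    simp only [Finset.mem_sigma, Finset.mem_powersetCard] at hx ⊢
    obtain ⟨hw, hU, hcard⟩ := hx
    have hwU : w ∉ U := fun h => (Finset.mem_erase.mp (hU h)).1 rfl
    refine ⟨⟨Finset.insert_subset hw ((hU.trans (Finset.erase_subset _ _))), ?_⟩, Finset.mem_insert_self _ _⟩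
    rw [Finset.card_insert_of_notMem hwU, hcard]
  · rintro ⟨U, w⟩ hx
    simp only [Finset.mem_sigma, Finset.mem_powersetCard] at hx ⊢
    obtain ⟨⟨hU, hcard⟩, hw⟩ := hx
    refine ⟨hU hw, Finset.erase_subset_erase _ hU, ?_⟩
    rw [Finset.card_erase_of_mem hw, hcard]
    omega
  · rintro ⟨w, U⟩ hx
    simp only [Finset.mem_sigma, Finset.mem_powersetCard] at hx
    obtain ⟨hw, hU, hcard⟩ := hx
    have hwU : w ∉ U := fun h => (Finset.mem_erase.mp (hU h)).1 rfl
    simp [Finset.erase_insert hwU]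
  · rintro ⟨U, w⟩ hx
    simp only [Finset.mem_sigma, Finset.mem_powersetCard] at hx
    obtain ⟨⟨hU, hcard⟩, hw⟩ := hx
    simp [Finset.insert_erase hw]
  · rintro ⟨w, U⟩ hx
    simp only [Finset.mem_sigma, Finset.mem_powersetCard] at hx
    obtain ⟨hw, hU, hcard⟩ := hx
    have hwU : w ∉ U := fun h => (Finset.mem_erase.mp (hU h)).1 rfl
    simp [Finset.erase_insert hwU]


section helpers

variable {m : ℕ}

lemma dec_sum (f : Equiv.Perm (Fin (m+2)) → ℝ) :
    ∑ σ : Equiv.Perm (Fin (m+2)), f σ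
      = ∑ p : Fin (m+2), ∑ e : Equiv.Perm (Fin (m+1)),
          f (Equiv.Perm.decomposeFin.symm (p, e)) := by
  rw [← Equiv.sum_comp (Equiv.Perm.decomposeFin.symm) f, Fintype.sum_prod_type]

lemma chain_dec (x : Fin (m+2) → ℝ) (p : Fin (m+2)) (e : Equiv.Perm (Fin (m+1))) :
    (∏ k : Fin (m+1), (x (Equiv.Perm.decomposeFin.symm (p, e) k.castSucc)
        - x (Equiv.Perm.decomposeFin.symm (p, e) k.succ))⁻¹)
      = (x p - x (Equiv.swap 0 p (e 0).succ))⁻¹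
        * ∏ k : Fin m, (x (Equiv.swap 0 p (e k.castSucc).succ)
            - x (Equiv.swap 0 p (e k.succ).succ))⁻¹ := by
  rw [Fin.prod_univ_succ]
  congr 1
  · rw [Fin.castSucc_zero, Equiv.Perm.decomposeFin_symm_apply_zero,
      Equiv.Perm.decomposeFin_symm_apply_succ]
  · refine Finset.prod_congr rfl fun k _ => ?_
    rw [← Fin.succ_castSucc, Equiv.Perm.decomposeFin_symm_apply_succ,
      Equiv.Perm.decomposeFin_symm_apply_succ]

lemma y_inj {x : Fin (m+2) → ℝ} (hx : Function.Injective x) (p : Fin (m+2)) :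
    Function.Injective (fun i : Fin (m+1) => x (Equiv.swap 0 p i.succ)) :=
  fun a b h => Fin.succ_injective _ ((Equiv.swap 0 p).injective (hx h))

lemma y_ne {x : Fin (m+2) → ℝ} (hx : Function.Injective x) (p : Fin (m+2)) (i : Fin (m+1)) :
    x (Equiv.swap 0 p i.succ) ≠ x p := by
  intro h
  have h1 : Equiv.swap 0 p i.succ = Equiv.swap 0 p 0 := by
    rw [Equiv.swap_apply_left]; exact hx h
  exact Fin.succ_ne_zero i ((Equiv.swap 0 p).injective h1)

lemma y_surj (x : Fin (m+2) → ℝ) (p q : Fin (m+2)) (hq : q ≠ p) :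
    ∃ i : Fin (m+1), x (Equiv.swap 0 p i.succ) = x q := by
  have hr : Equiv.swap 0 p q ≠ 0 := by
    intro h
    exact hq ((Equiv.swap 0 p).injective (h.trans (Equiv.swap_apply_right 0 p).symm))
  refine ⟨(Equiv.swap 0 p q).pred hr, ?_⟩
  rw [Fin.succ_pred, Equiv.swap_apply_self]

lemma y_img {x : Fin (m+2) → ℝ} (hx : Function.Injective x) (p : Fin (m+2)) :
    Finset.image (fun i : Fin (m+1) => x (Equiv.swap 0 p i.succ)) Finset.univ
      = (Finset.image x Finset.univ).erase (x p) := by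
  ext w
  simp only [Finset.mem_image, Finset.mem_erase, Finset.mem_univ, true_and]
  constructor
  · rintro ⟨i, rfl⟩
    exact ⟨y_ne hx p i, ⟨_, rfl⟩⟩
  · rintro ⟨hw, q, rfl⟩
    have hq : q ≠ p := fun h => hw (by rw [h])
    exact y_surj x p q hq

lemma prod_vals {r : ℕ} {z : Fin r → ℝ} (hz : Function.Injective z) (g : ℝ → ℝ) :
    ∏ w ∈ Finset.image z Finset.univ, g w = ∏ i, g (z i) :=
  Finset.prod_image (fun a _ b _ h => hz h)

lemma sum_vals {r : ℕ} {z : Fin r → ℝ} (hz : Function.Injective z) (g : ℝ → ℝ) :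
    ∑ w ∈ Finset.image z Finset.univ, g w = ∑ i, g (z i) :=
  Finset.sum_image (fun a _ b _ h => hz h)

lemma sum_vals_erase {r : ℕ} {z : Fin r → ℝ} (hz : Function.Injective z) (c : ℝ) (g : ℝ → ℝ) :
    ∑ p : Fin r, (if z p = c then 0 else g (z p))
      = ∑ w ∈ (Finset.image z Finset.univ).erase c, g w := by
  rw [← sum_vals hz (fun w => if w = c then 0 else g w)]
  rw [← Finset.sum_erase (Finset.image z Finset.univ)
    (f := fun w => if w = c then 0 else g w) (if_pos rfl)]
  exact Finset.sum_congr rfl fun w hw => by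
    rw [if_neg (Finset.mem_erase.mp hw).1]

end helpers

lemma pf (U : Finset ℝ) (hU : 0 < U.card) (Z : ℝ) (hZ : ∀ k ∈ U, k ≠ Z) :
    ∑ p ∈ U, (p - Z)⁻¹ * ∏ k ∈ U.erase p, (k - p)⁻¹ = ∏ k ∈ U, (k - Z)⁻¹ := by
  have h := key_s5 0 U hU 0 Z hZ
  simpa using h

lemma vid (s : ℕ) (V : Finset ℝ) (c Z : ℝ) (hZ : ∀ k ∈ V, k ≠ Z) :
    ∑ w ∈ V, (w - c)^s * (w - Z)⁻¹ * ∑ U ∈ (V.erase w).powersetCard s, ∏ k ∈ U, (k - w)⁻¹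
      = (Z - c)^s * ∑ U ∈ V.powersetCard (s+1), ∏ k ∈ U, (k - Z)⁻¹ := by
  have h1 : ∀ w ∈ V, (w - c)^s * (w - Z)⁻¹ * ∑ U ∈ (V.erase w).powersetCard s, ∏ k ∈ U, (k - w)⁻¹
      = ∑ U ∈ (V.erase w).powersetCard s, (w - c)^s * (w - Z)⁻¹ * ∏ k ∈ U, (k - w)⁻¹ :=
    fun w _ => Finset.mul_sum _ _ _
  rw [Finset.sum_congr rfl h1,
    subsum V s (fun w U => (w - c)^s * (w - Z)⁻¹ * ∏ k ∈ U, (k - w)⁻¹), Finset.mul_sum]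
  refine Finset.sum_congr rfl fun U hU => ?_
  obtain ⟨hsub, hcard⟩ := Finset.mem_powersetCard.mp hU
  exact key_s5 s U (by omega) c Z (fun k hk => hZ k (hsub hk))

lemma vid0 (s : ℕ) (V : Finset ℝ) (c : ℝ) :
    ∑ w ∈ V, (w - c)^s * ∑ U ∈ (V.erase w).powersetCard s, ∏ k ∈ U, (k - w)⁻¹
      = (-1)^s * (V.card.choose (s+1)) := by
  have h1 : ∀ w ∈ V, (w - c)^s * ∑ U ∈ (V.erase w).powersetCard s, ∏ k ∈ U, (k - w)⁻¹
      = ∑ U ∈ (V.erase w).powersetCard s, (w - c)^s * ∏ k ∈ U, (k - w)⁻¹ :=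
    fun w _ => Finset.mul_sum _ _ _
  rw [Finset.sum_congr rfl h1, subsum V s (fun w U => (w - c)^s * ∏ k ∈ U, (k - w)⁻¹)]
  have h2 : ∀ U ∈ V.powersetCard (s+1),
      ∑ w ∈ U, (w - c)^s * ∏ k ∈ U.erase w, (k - w)⁻¹ = (-1 : ℝ)^s := by
    intro U hU
    obtain ⟨hsub, hcard⟩ := Finset.mem_powersetCard.mp hU
    exact key0 s U hcard c
  rw [Finset.sum_congr rfl h2, Finset.sum_const, Finset.card_powersetCard, nsmul_eq_mul]
  ring

lemma TL (m : ℕ) (x : Fin (m+1) → ℝ) (hx : Function.Injective x) (Y : ℝ) (hY : ∀ k, x k ≠ Y) :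
    ∑ σ : Equiv.Perm (Fin (m+1)),
        (∏ k : Fin m, (x (σ k.castSucc) - x (σ k.succ))⁻¹) * (x (σ 0) - Y)⁻¹
      = (-1)^m * ∏ w ∈ Finset.image x Finset.univ, (w - Y)⁻¹ := by
  induction m generalizing Y with
  | zero =>
    have h0 : ∀ σ : Equiv.Perm (Fin 1), σ 0 = 0 := fun σ => Subsingleton.elim _ _
    simp [h0]
  | succ m ih =>
    rw [dec_sum (fun σ => (∏ k : Fin (m+1), (x (σ k.castSucc) - x (σ k.succ))⁻¹) * (x (σ 0) - Y)⁻¹)]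
    have hin : ∀ p : Fin (m+2),
        (∑ e : Equiv.Perm (Fin (m+1)),
          (∏ k : Fin (m+1), (x (Equiv.Perm.decomposeFin.symm (p, e) k.castSucc)
              - x (Equiv.Perm.decomposeFin.symm (p, e) k.succ))⁻¹)
            * (x (Equiv.Perm.decomposeFin.symm (p, e) 0) - Y)⁻¹)
        = (-1)^(m+1) * ((x p - Y)⁻¹
            * ∏ w ∈ (Finset.image x Finset.univ).erase (x p), (w - (x p))⁻¹) := by
      intro p
      have hterm : ∀ e : Equiv.Perm (Fin (m+1)),
          (∏ k : Fin (m+1), (x (Equiv.Perm.decomposeFin.symm (p, e) k.castSucc)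
              - x (Equiv.Perm.decomposeFin.symm (p, e) k.succ))⁻¹)
            * (x (Equiv.Perm.decomposeFin.symm (p, e) 0) - Y)⁻¹
          = ((x p - Y)⁻¹ * (-1)) *
            ((∏ k : Fin m, (x (Equiv.swap 0 p (e k.castSucc).succ)
                - x (Equiv.swap 0 p (e k.succ).succ))⁻¹)
              * (x (Equiv.swap 0 p (e 0).succ) - x p)⁻¹) := by
        intro e
        rw [chain_dec, Equiv.Perm.decomposeFin_symm_apply_zero]
        have hneg : (x p - x (Equiv.swap 0 p (e 0).succ))⁻¹
            = -((x (Equiv.swap 0 p (e 0).succ) - x p)⁻¹) := by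
          rw [show x p - x (Equiv.swap 0 p (e 0).succ)
            = -(x (Equiv.swap 0 p (e 0).succ) - x p) by ring, inv_neg]
        rw [hneg]; ring
      rw [Finset.sum_congr rfl (fun e _ => hterm e), ← Finset.mul_sum,
        ih (fun i => x (Equiv.swap 0 p i.succ)) (y_inj hx p) (x p) (y_ne hx p),
        y_img hx p]
      ring
    rw [Finset.sum_congr rfl (fun p _ => hin p), ← Finset.mul_sum]
    have hval : ∑ p : Fin (m+2), (x p - Y)⁻¹
          * ∏ w ∈ (Finset.image x Finset.univ).erase (x p), (w - (x p))⁻¹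
        = ∏ w ∈ Finset.image x Finset.univ, (w - Y)⁻¹ := by
      rw [← sum_vals hx (fun u => (u - Y)⁻¹
        * ∏ w ∈ (Finset.image x Finset.univ).erase u, (w - u)⁻¹)]
      refine pf _ ?_ Y ?_
      · rw [Finset.card_image_of_injective _ hx]; simp
      · intro k hk
        obtain ⟨i, _, rfl⟩ := Finset.mem_image.mp hk
        exact hY i
    rw [hval]

lemma Blem0 (m : ℕ) (x : Fin (m+1) → ℝ) (hx : Function.Injective x) (c Z : ℝ)
    (hc : ∃ i, x i = c) (hZ : ∀ k, x k ≠ Z) :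
    ∑ σ : Equiv.Perm (Fin (m+1)),
        (if x (σ 0) = c then
          (x (σ 0) - Z)⁻¹ * ∏ k : Fin m, (x (σ k.castSucc) - x (σ k.succ))⁻¹ else 0)
      = (-1)^m * (∏ w ∈ (Finset.image x Finset.univ).erase c, (w - c)⁻¹) * (c - Z)⁻¹ := by
  obtain ⟨i₀, rfl⟩ := hc
  cases m with
  | zero =>
    have h0 : ∀ σ : Equiv.Perm (Fin (0+1)), σ 0 = 0 := fun σ => Fin.fin_one_eq_zero _
    have hi : i₀ = 0 := Fin.fin_one_eq_zero _
    subst hi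
    simp [h0]
  | succ m =>
    rw [dec_sum (fun σ => if x (σ 0) = x i₀ then
      (x (σ 0) - Z)⁻¹ * ∏ k : Fin (m+1), (x (σ k.castSucc) - x (σ k.succ))⁻¹ else 0)]
    have hterm : ∀ (p : Fin (m+2)) (e : Equiv.Perm (Fin (m+1))),
        (if x (Equiv.Perm.decomposeFin.symm (p, e) 0) = x i₀ then
          (x (Equiv.Perm.decomposeFin.symm (p, e) 0) - Z)⁻¹
            * ∏ k : Fin (m+1), (x (Equiv.Perm.decomposeFin.symm (p, e) k.castSucc)
                - x (Equiv.Perm.decomposeFin.symm (p, e) k.succ))⁻¹ else 0)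
        = (if x p = x i₀ then ((x p - Z)⁻¹ * (-1)) *
            ((∏ k : Fin m, (x (Equiv.swap 0 p (e k.castSucc).succ)
                - x (Equiv.swap 0 p (e k.succ).succ))⁻¹)
              * (x (Equiv.swap 0 p (e 0).succ) - x p)⁻¹) else 0) := by
      intro p e
      rw [chain_dec, Equiv.Perm.decomposeFin_symm_apply_zero]
      by_cases h : x p = x i₀
      · rw [if_pos h, if_pos h]
        have hneg : (x p - x (Equiv.swap 0 p (e 0).succ))⁻¹
            = -((x (Equiv.swap 0 p (e 0).succ) - x p)⁻¹) := by
          rw [show x p - x (Equiv.swap 0 p (e 0).succ)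
            = -(x (Equiv.swap 0 p (e 0).succ) - x p) by ring, inv_neg]
        rw [hneg]; ring
      · rw [if_neg h, if_neg h]
    have hsplit : ∀ p : Fin (m+2),
        (∑ e : Equiv.Perm (Fin (m+1)), (if x p = x i₀ then ((x p - Z)⁻¹ * (-1)) *
            ((∏ k : Fin m, (x (Equiv.swap 0 p (e k.castSucc).succ)
                - x (Equiv.swap 0 p (e k.succ).succ))⁻¹)
              * (x (Equiv.swap 0 p (e 0).succ) - x p)⁻¹) else 0))
        = (if x p = x i₀ then
            ∑ e : Equiv.Perm (Fin (m+1)), ((x p - Z)⁻¹ * (-1)) *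
            ((∏ k : Fin m, (x (Equiv.swap 0 p (e k.castSucc).succ)
                - x (Equiv.swap 0 p (e k.succ).succ))⁻¹)
              * (x (Equiv.swap 0 p (e 0).succ) - x p)⁻¹) else 0) := by
      intro p
      by_cases h : x p = x i₀ <;> simp [h]
    calc ∑ p : Fin (m+2), ∑ e : Equiv.Perm (Fin (m+1)), _ = _ := by
          exact Finset.sum_congr rfl fun p _ => by
            rw [Finset.sum_congr rfl fun e _ => hterm p e, hsplit p]
      _ = (-1)^(m+1) * (∏ w ∈ (Finset.image x Finset.univ).erase (x i₀), (w - x i₀)⁻¹)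
          * (x i₀ - Z)⁻¹ := by
          rw [Finset.sum_eq_single_of_mem i₀ (Finset.mem_univ i₀) ?side]
          · rw [if_pos rfl, ← Finset.mul_sum,
              TL m (fun i => x (Equiv.swap 0 i₀ i.succ)) (y_inj hx i₀) (x i₀) (y_ne hx i₀),
              y_img hx i₀]
            ring
          case side =>
            intro p _ hp
            rw [if_neg (fun h => hp (hx h))]

lemma BlemS (t : ℕ) : ∀ (m : ℕ) (_htm : t ≤ m) (x : Fin (m+2) → ℝ), Function.Injective x →
    ∀ (c Z : ℝ), (∃ i, x i = c) → (∀ k, x k ≠ Z) →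
    ∑ σ : Equiv.Perm (Fin (m+2)),
        (if x (σ ⟨t+1, by omega⟩) = c then
          (x (σ 0) - Z)⁻¹ * ∏ k : Fin (m+1), (x (σ k.castSucc) - x (σ k.succ))⁻¹ else 0)
      = (-1)^m * (∏ w ∈ (Finset.image x Finset.univ).erase c, (w - c)⁻¹)
          * ((Z - c)^t * ∑ U ∈ ((Finset.image x Finset.univ).erase c).powersetCard (t+1),
              ∏ k ∈ U, (k - Z)⁻¹) := by
  induction t with
  | zero =>
    intro m htm x hx c Z hc hZ
    have hpos : (⟨0+1, by omega⟩ : Fin (m+2)) = (⟨0, by omega⟩ : Fin (m+1)).succ := rfl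
    rw [dec_sum (fun σ => if x (σ ⟨0+1, by omega⟩) = c then
      (x (σ 0) - Z)⁻¹ * ∏ k : Fin (m+1), (x (σ k.castSucc) - x (σ k.succ))⁻¹ else 0)]
    have hin : ∀ p : Fin (m+2),
        (∑ e : Equiv.Perm (Fin (m+1)),
          (if x (Equiv.Perm.decomposeFin.symm (p, e) ⟨0+1, by omega⟩) = c then
            (x (Equiv.Perm.decomposeFin.symm (p, e) 0) - Z)⁻¹
              * ∏ k : Fin (m+1), (x (Equiv.Perm.decomposeFin.symm (p, e) k.castSucc)
                  - x (Equiv.Perm.decomposeFin.symm (p, e) k.succ))⁻¹ else 0))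
        = (if x p = c then 0 else
            ((x p - Z)⁻¹ * (-1)) * ((-1)^m
              * (∏ w ∈ ((Finset.image x Finset.univ).erase (x p)).erase c, (w - c)⁻¹)
              * (c - x p)⁻¹)) := by
      intro p
      have hterm : ∀ e : Equiv.Perm (Fin (m+1)),
          (if x (Equiv.Perm.decomposeFin.symm (p, e) ⟨0+1, by omega⟩) = c then
            (x (Equiv.Perm.decomposeFin.symm (p, e) 0) - Z)⁻¹
              * ∏ k : Fin (m+1), (x (Equiv.Perm.decomposeFin.symm (p, e) k.castSucc)
                  - x (Equiv.Perm.decomposeFin.symm (p, e) k.succ))⁻¹ else 0)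
          = ((x p - Z)⁻¹ * (-1)) *
            (if x (Equiv.swap 0 p (e ⟨0, by omega⟩).succ) = c then
              (x (Equiv.swap 0 p (e ⟨0, by omega⟩).succ) - x p)⁻¹
                * ∏ k : Fin m, (x (Equiv.swap 0 p (e k.castSucc).succ)
                    - x (Equiv.swap 0 p (e k.succ).succ))⁻¹ else 0) := by
        intro e
        rw [hpos, Equiv.Perm.decomposeFin_symm_apply_succ, chain_dec,
          Equiv.Perm.decomposeFin_symm_apply_zero]
        by_cases h : x (Equiv.swap 0 p (e ⟨0, by omega⟩).succ) = c
        · rw [if_pos h, if_pos h]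
          have h0 : (⟨0, by omega⟩ : Fin (m+1)) = 0 := rfl
          rw [h0]
          have hneg : (x p - x (Equiv.swap 0 p (e 0).succ))⁻¹
              = -((x (Equiv.swap 0 p (e 0).succ) - x p)⁻¹) := by
            rw [show x p - x (Equiv.swap 0 p (e 0).succ)
              = -(x (Equiv.swap 0 p (e 0).succ) - x p) by ring, inv_neg]
          rw [hneg]; ring
        · rw [if_neg h, if_neg h, mul_zero]
      rw [Finset.sum_congr rfl (fun e _ => hterm e), ← Finset.mul_sum]
      by_cases hpc : x p = c
      · rw [if_pos hpc]
        have hzero : ∀ e : Equiv.Perm (Fin (m+1)),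
            (if x (Equiv.swap 0 p (e ⟨0, by omega⟩).succ) = c then
              (x (Equiv.swap 0 p (e ⟨0, by omega⟩).succ) - x p)⁻¹
                * ∏ k : Fin m, (x (Equiv.swap 0 p (e k.castSucc).succ)
                    - x (Equiv.swap 0 p (e k.succ).succ))⁻¹ else 0) = 0 := by
          intro e
          rw [if_neg]
          exact fun hh => y_ne hx p _ (hh.trans hpc.symm)
        rw [Finset.sum_congr rfl (fun e _ => hzero e), Finset.sum_const, smul_zero, mul_zero]
      · rw [if_neg hpc]
        have hyc : ∃ i : Fin (m+1), x (Equiv.swap 0 p i.succ) = c := by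
          obtain ⟨q, rfl⟩ := hc
          exact y_surj x p q (fun h => hpc (congrArg x h.symm))
        have hB := Blem0 m (fun i => x (Equiv.swap 0 p i.succ)) (y_inj hx p) c (x p)
          hyc (fun k => y_ne hx p k)
        have h0 : (⟨0, by omega⟩ : Fin (m+1)) = 0 := rfl
        rw [h0, hB, y_img hx p]
    rw [Finset.sum_congr rfl (fun p _ => hin p)]
    have hform : ∀ p : Fin (m+2), (if x p = c then 0 else
          ((x p - Z)⁻¹ * (-1)) * ((-1)^m
            * (∏ w ∈ ((Finset.image x Finset.univ).erase (x p)).erase c, (w - c)⁻¹)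
            * (c - x p)⁻¹))
        = (if x p = c then 0 else
          ((x p - Z)⁻¹ * (-1)) * ((-1)^m
            * (∏ w ∈ (((Finset.image x Finset.univ).erase c).erase (x p)), (w - c)⁻¹)
            * (c - x p)⁻¹)) := by
      intro p
      rw [Finset.erase_right_comm]
    rw [Finset.sum_congr rfl (fun p _ => hform p),
      sum_vals_erase hx c (fun w => ((w - Z)⁻¹ * (-1)) * ((-1)^m
        * (∏ u ∈ (((Finset.image x Finset.univ).erase c).erase w), (u - c)⁻¹)
        * (c - w)⁻¹))]
    -- now a pure value identity over V' := (image x univ).erase c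
    set V' := (Finset.image x Finset.univ).erase c with hV'
    have hstep : ∀ w ∈ V', ((w - Z)⁻¹ * (-1)) * ((-1)^m
          * (∏ u ∈ V'.erase w, (u - c)⁻¹) * (c - w)⁻¹)
        = ((-1)^m * ∏ u ∈ V', (u - c)⁻¹) *
            ((w - c)^0 * (w - Z)⁻¹ * ∑ U ∈ (V'.erase w).powersetCard 0, ∏ k ∈ U, (k - w)⁻¹) := by
      intro w hw
      have hwc : w ≠ c := (Finset.mem_erase.mp hw).1
      have hwc' : w - c ≠ 0 := sub_ne_zero_of_ne hwc
      have hprod : ∏ u ∈ V', (u - c)⁻¹ = (w - c)⁻¹ * ∏ u ∈ V'.erase w, (u - c)⁻¹ :=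
        (Finset.mul_prod_erase V' _ hw).symm
      rw [Finset.powersetCard_zero, Finset.sum_singleton, Finset.prod_empty, hprod]
      have hcw : (c - w)⁻¹ = -((w - c)⁻¹) := by
        rw [show c - w = -(w - c) by ring, inv_neg]
      rw [hcw]
      field_simp
    rw [Finset.sum_congr rfl hstep, ← Finset.mul_sum]
    have hZ' : ∀ k ∈ V', k ≠ Z := by
      intro k hk
      obtain ⟨i, _, rfl⟩ := Finset.mem_image.mp (Finset.mem_of_mem_erase hk)
      exact hZ i
    rw [vid 0 V' c Z hZ']
  | succ t ih =>
    intro m htm x hx c Z hc hZ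
    cases m with
    | zero => omega
    | succ m₁ =>
    have hpos : (⟨t+1+1, by omega⟩ : Fin (m₁+3)) = (⟨t+1, by omega⟩ : Fin (m₁+2)).succ := rfl
    rw [dec_sum (fun σ => if x (σ ⟨t+1+1, by omega⟩) = c then
      (x (σ 0) - Z)⁻¹ * ∏ k : Fin (m₁+2), (x (σ k.castSucc) - x (σ k.succ))⁻¹ else 0)]
    have hin : ∀ p : Fin (m₁+3),
        (∑ e : Equiv.Perm (Fin (m₁+2)),
          (if x (Equiv.Perm.decomposeFin.symm (p, e) ⟨t+1+1, by omega⟩) = c then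
            (x (Equiv.Perm.decomposeFin.symm (p, e) 0) - Z)⁻¹
              * ∏ k : Fin (m₁+2), (x (Equiv.Perm.decomposeFin.symm (p, e) k.castSucc)
                  - x (Equiv.Perm.decomposeFin.symm (p, e) k.succ))⁻¹ else 0))
        = (if x p = c then 0 else
            ((x p - Z)⁻¹ * (-1)) * ((-1)^m₁
              * (∏ w ∈ (((Finset.image x Finset.univ).erase (x p)).erase c), (w - c)⁻¹)
              * ((x p - c)^t * ∑ U ∈ ((((Finset.image x Finset.univ).erase (x p)).erase c).powersetCard (t+1)),
                  ∏ k ∈ U, (k - x p)⁻¹))) := by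
      intro p
      have hterm : ∀ e : Equiv.Perm (Fin (m₁+2)),
          (if x (Equiv.Perm.decomposeFin.symm (p, e) ⟨t+1+1, by omega⟩) = c then
            (x (Equiv.Perm.decomposeFin.symm (p, e) 0) - Z)⁻¹
              * ∏ k : Fin (m₁+2), (x (Equiv.Perm.decomposeFin.symm (p, e) k.castSucc)
                  - x (Equiv.Perm.decomposeFin.symm (p, e) k.succ))⁻¹ else 0)
          = ((x p - Z)⁻¹ * (-1)) *
            (if x (Equiv.swap 0 p (e ⟨t+1, by omega⟩).succ) = c then
              (x (Equiv.swap 0 p (e 0).succ) - x p)⁻¹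
                * ∏ k : Fin (m₁+1), (x (Equiv.swap 0 p (e k.castSucc).succ)
                    - x (Equiv.swap 0 p (e k.succ).succ))⁻¹ else 0) := by
        intro e
        rw [hpos, Equiv.Perm.decomposeFin_symm_apply_succ, chain_dec,
          Equiv.Perm.decomposeFin_symm_apply_zero]
        by_cases h : x (Equiv.swap 0 p (e ⟨t+1, by omega⟩).succ) = c
        · rw [if_pos h, if_pos h]
          have hneg : (x p - x (Equiv.swap 0 p (e 0).succ))⁻¹
              = -((x (Equiv.swap 0 p (e 0).succ) - x p)⁻¹) := by
            rw [show x p - x (Equiv.swap 0 p (e 0).succ)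
              = -(x (Equiv.swap 0 p (e 0).succ) - x p) by ring, inv_neg]
          rw [hneg]; ring
        · rw [if_neg h, if_neg h, mul_zero]
      rw [Finset.sum_congr rfl (fun e _ => hterm e), ← Finset.mul_sum]
      by_cases hpc : x p = c
      · rw [if_pos hpc]
        have hzero : ∀ e : Equiv.Perm (Fin (m₁+2)),
            (if x (Equiv.swap 0 p (e ⟨t+1, by omega⟩).succ) = c then
              (x (Equiv.swap 0 p (e 0).succ) - x p)⁻¹
                * ∏ k : Fin (m₁+1), (x (Equiv.swap 0 p (e k.castSucc).succ)
                    - x (Equiv.swap 0 p (e k.succ).succ))⁻¹ else 0) = 0 := by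
          intro e
          rw [if_neg]
          exact fun hh => y_ne hx p _ (hh.trans hpc.symm)
        rw [Finset.sum_congr rfl (fun e _ => hzero e), Finset.sum_const, smul_zero, mul_zero]
      · rw [if_neg hpc]
        have hyc : ∃ i : Fin (m₁+2), x (Equiv.swap 0 p i.succ) = c := by
          obtain ⟨q, rfl⟩ := hc
          exact y_surj x p q (fun h => hpc (congrArg x h.symm))
        have hB := ih m₁ (by omega) (fun i => x (Equiv.swap 0 p i.succ)) (y_inj hx p) c (x p)
          hyc (fun k => y_ne hx p k)
        rw [hB, y_img hx p]
    rw [Finset.sum_congr rfl (fun p _ => hin p)]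
    have hform : ∀ p : Fin (m₁+3), (if x p = c then 0 else
          ((x p - Z)⁻¹ * (-1)) * ((-1)^m₁
            * (∏ w ∈ (((Finset.image x Finset.univ).erase (x p)).erase c), (w - c)⁻¹)
            * ((x p - c)^t * ∑ U ∈ ((((Finset.image x Finset.univ).erase (x p)).erase c).powersetCard (t+1)),
                ∏ k ∈ U, (k - x p)⁻¹)))
        = (if x p = c then 0 else
          ((x p - Z)⁻¹ * (-1)) * ((-1)^m₁
            * (∏ w ∈ ((((Finset.image x Finset.univ).erase c).erase (x p))), (w - c)⁻¹)
            * ((x p - c)^t * ∑ U ∈ (((((Finset.image x Finset.univ).erase c).erase (x p))).powersetCard (t+1)),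
                ∏ k ∈ U, (k - x p)⁻¹))) := by
      intro p
      rw [Finset.erase_right_comm]
    rw [Finset.sum_congr rfl (fun p _ => hform p),
      sum_vals_erase hx c (fun w => ((w - Z)⁻¹ * (-1)) * ((-1)^m₁
        * (∏ u ∈ (((Finset.image x Finset.univ).erase c).erase w), (u - c)⁻¹)
        * ((w - c)^t * ∑ U ∈ ((((Finset.image x Finset.univ).erase c).erase w).powersetCard (t+1)),
            ∏ k ∈ U, (k - w)⁻¹)))]
    set V' := (Finset.image x Finset.univ).erase c with hV'
    have hstep : ∀ w ∈ V', ((w - Z)⁻¹ * (-1)) * ((-1)^m₁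
          * (∏ u ∈ V'.erase w, (u - c)⁻¹)
          * ((w - c)^t * ∑ U ∈ ((V'.erase w).powersetCard (t+1)), ∏ k ∈ U, (k - w)⁻¹))
        = ((-1)^(m₁+1) * ∏ u ∈ V', (u - c)⁻¹) *
            ((w - c)^(t+1) * (w - Z)⁻¹
              * ∑ U ∈ (V'.erase w).powersetCard (t+1), ∏ k ∈ U, (k - w)⁻¹) := by
      intro w hw
      have hwc : w ≠ c := (Finset.mem_erase.mp hw).1
      have hwc' : w - c ≠ 0 := sub_ne_zero_of_ne hwc
      have hprod : ∏ u ∈ V', (u - c)⁻¹ = (w - c)⁻¹ * ∏ u ∈ V'.erase w, (u - c)⁻¹ :=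
        (Finset.mul_prod_erase V' _ hw).symm
      rw [hprod, pow_succ]
      have hcc : (w - c)⁻¹ * (w - c) = 1 := inv_mul_cancel₀ hwc'
      linear_combination (-((-1:ℝ)^(m₁+1) * (∏ u ∈ V'.erase w, (u - c)⁻¹) * (w - c)^t
        * (w - Z)⁻¹ * (∑ U ∈ (V'.erase w).powersetCard (t+1), ∏ k ∈ U, (k - w)⁻¹))) * hcc
    rw [Finset.sum_congr rfl hstep, ← Finset.mul_sum]
    have hZ' : ∀ k ∈ V', k ≠ Z := by
      intro k hk
      obtain ⟨i, _, rfl⟩ := Finset.mem_image.mp (Finset.mem_of_mem_erase hk)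
      exact hZ i
    rw [vid (t+1) V' c Z hZ']

lemma neg_one_sub_pow (a b : ℕ) (h : b ≤ a) : (-1:ℝ)^(a-b) = (-1)^(a+b) := by
  have hab : a + b = (a - b) + 2*b := by omega
  rw [hab, pow_add, pow_mul]
  norm_num

set_option maxHeartbeats 1600000 in
lemma Alem (n : ℕ) (j : ℕ) (hj : j ≤ n) (x : Fin (n+1) → ℝ) (hx : Function.Injective x)
    (c : ℝ) (hc : ∃ i, x i = c) :
    ∑ σ : Equiv.Perm (Fin (n+1)),
        (if x (σ ⟨j, by omega⟩) = c then
          ∏ k : Fin n, (x (σ k.castSucc) - x (σ k.succ))⁻¹ else 0)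
      = (-1)^(n-j) * (n.choose j)
          * ∏ w ∈ (Finset.image x Finset.univ).erase c, (w - c)⁻¹ := by
  have hcardV : ((Finset.image x Finset.univ).erase c).card = n := by
    obtain ⟨i₀, hi₀⟩ := hc
    rw [Finset.card_erase_of_mem (Finset.mem_image.mpr ⟨i₀, Finset.mem_univ _, hi₀⟩),
      Finset.card_image_of_injective _ hx]
    simp
  match n, j, hj with
  | n, 0, _ =>
    cases n with
    | zero =>
      obtain ⟨i₀, hi₀⟩ := hc
      have hi : i₀ = 0 := Fin.fin_one_eq_zero _
      subst hi
      subst hi₀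
      have h0 : ∀ σ : Equiv.Perm (Fin (0+1)), σ ⟨0, by omega⟩ = 0 :=
        fun σ => Fin.fin_one_eq_zero _
      have hone : ∀ σ : Equiv.Perm (Fin (0+1)), x (σ ⟨0, by omega⟩) = x 0 :=
        fun σ => by rw [h0]
      rw [Finset.sum_congr rfl (fun σ _ => if_pos (hone σ))]
      have hemp : (Finset.image x Finset.univ).erase (x 0) = ∅ :=
        Finset.card_eq_zero.mp hcardV
      rw [hemp]
      simp
    | succ m =>
      rw [dec_sum (fun σ => if x (σ ⟨0, by omega⟩) = c then
        ∏ k : Fin (m+1), (x (σ k.castSucc) - x (σ k.succ))⁻¹ else 0)]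
      obtain ⟨i₀, rfl⟩ := hc
      have hterm : ∀ (p : Fin (m+2)) (e : Equiv.Perm (Fin (m+1))),
          (if x (Equiv.Perm.decomposeFin.symm (p, e) ⟨0, by omega⟩) = x i₀ then
            ∏ k : Fin (m+1), (x (Equiv.Perm.decomposeFin.symm (p, e) k.castSucc)
                - x (Equiv.Perm.decomposeFin.symm (p, e) k.succ))⁻¹ else 0)
          = (if x p = x i₀ then (-1) *
              ((∏ k : Fin m, (x (Equiv.swap 0 p (e k.castSucc).succ)
                  - x (Equiv.swap 0 p (e k.succ).succ))⁻¹)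
                * (x (Equiv.swap 0 p (e 0).succ) - x p)⁻¹) else 0) := by
        intro p e
        have hz : (⟨0, by omega⟩ : Fin (m+2)) = 0 := rfl
        rw [hz, chain_dec, Equiv.Perm.decomposeFin_symm_apply_zero]
        by_cases h : x p = x i₀
        · rw [if_pos h, if_pos h]
          have hneg : (x p - x (Equiv.swap 0 p (e 0).succ))⁻¹
              = -((x (Equiv.swap 0 p (e 0).succ) - x p)⁻¹) := by
            rw [show x p - x (Equiv.swap 0 p (e 0).succ)
              = -(x (Equiv.swap 0 p (e 0).succ) - x p) by ring, inv_neg]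
          rw [hneg]; ring
        · rw [if_neg h, if_neg h]
      have hsplit : ∀ p : Fin (m+2),
          (∑ e : Equiv.Perm (Fin (m+1)), (if x p = x i₀ then (-1) *
              ((∏ k : Fin m, (x (Equiv.swap 0 p (e k.castSucc).succ)
                  - x (Equiv.swap 0 p (e k.succ).succ))⁻¹)
                * (x (Equiv.swap 0 p (e 0).succ) - x p)⁻¹) else 0))
          = (if x p = x i₀ then
              ∑ e : Equiv.Perm (Fin (m+1)), (-1) *
              ((∏ k : Fin m, (x (Equiv.swap 0 p (e k.castSucc).succ)
                  - x (Equiv.swap 0 p (e k.succ).succ))⁻¹)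
                * (x (Equiv.swap 0 p (e 0).succ) - x p)⁻¹) else 0) := by
        intro p
        by_cases h : x p = x i₀ <;> simp [h]
      calc ∑ p : Fin (m+2), ∑ e : Equiv.Perm (Fin (m+1)), _ = _ := by
            exact Finset.sum_congr rfl fun p _ => by
              rw [Finset.sum_congr rfl fun e _ => hterm p e, hsplit p]
        _ = (-1)^(m+1-0) * ((m+1).choose 0)
            * ∏ w ∈ (Finset.image x Finset.univ).erase (x i₀), (w - x i₀)⁻¹ := by
            rw [Finset.sum_eq_single_of_mem i₀ (Finset.mem_univ i₀) ?side]
            · rw [if_pos rfl, ← Finset.mul_sum,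
                TL m (fun i => x (Equiv.swap 0 i₀ i.succ)) (y_inj hx i₀) (x i₀) (y_ne hx i₀),
                y_img hx i₀]
              simp
              ring
            case side =>
              intro p _ hp
              rw [if_neg (fun h => hp (hx h))]
  | Nat.succ n₁, 1, _ =>
    rw [dec_sum (fun σ => if x (σ ⟨1, by omega⟩) = c then
      ∏ k : Fin (n₁+1), (x (σ k.castSucc) - x (σ k.succ))⁻¹ else 0)]
    have hpos : (⟨1, by omega⟩ : Fin (n₁+2)) = (⟨0, by omega⟩ : Fin (n₁+1)).succ := rfl
    have hin : ∀ p : Fin (n₁+2),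
        (∑ e : Equiv.Perm (Fin (n₁+1)),
          (if x (Equiv.Perm.decomposeFin.symm (p, e) ⟨1, by omega⟩) = c then
            ∏ k : Fin (n₁+1), (x (Equiv.Perm.decomposeFin.symm (p, e) k.castSucc)
                - x (Equiv.Perm.decomposeFin.symm (p, e) k.succ))⁻¹ else 0))
        = (if x p = c then 0 else
            (-1) * ((-1)^n₁
              * (∏ w ∈ (((Finset.image x Finset.univ).erase (x p)).erase c), (w - c)⁻¹)
              * (c - x p)⁻¹)) := by
      intro p
      have hterm : ∀ e : Equiv.Perm (Fin (n₁+1)),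
          (if x (Equiv.Perm.decomposeFin.symm (p, e) ⟨1, by omega⟩) = c then
            ∏ k : Fin (n₁+1), (x (Equiv.Perm.decomposeFin.symm (p, e) k.castSucc)
                - x (Equiv.Perm.decomposeFin.symm (p, e) k.succ))⁻¹ else 0)
          = (-1) *
            (if x (Equiv.swap 0 p (e ⟨0, by omega⟩).succ) = c then
              (x (Equiv.swap 0 p (e ⟨0, by omega⟩).succ) - x p)⁻¹
                * ∏ k : Fin n₁, (x (Equiv.swap 0 p (e k.castSucc).succ)
                    - x (Equiv.swap 0 p (e k.succ).succ))⁻¹ else 0) := by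
        intro e
        rw [hpos, Equiv.Perm.decomposeFin_symm_apply_succ, chain_dec]
        by_cases h : x (Equiv.swap 0 p (e ⟨0, by omega⟩).succ) = c
        · rw [if_pos h, if_pos h]
          have h0 : (⟨0, by omega⟩ : Fin (n₁+1)) = 0 := rfl
          rw [h0]
          have hneg : (x p - x (Equiv.swap 0 p (e 0).succ))⁻¹
              = -((x (Equiv.swap 0 p (e 0).succ) - x p)⁻¹) := by
            rw [show x p - x (Equiv.swap 0 p (e 0).succ)
              = -(x (Equiv.swap 0 p (e 0).succ) - x p) by ring, inv_neg]
          rw [hneg]; ring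
        · rw [if_neg h, if_neg h, mul_zero]
      rw [Finset.sum_congr rfl (fun e _ => hterm e), ← Finset.mul_sum]
      by_cases hpc : x p = c
      · rw [if_pos hpc]
        have hzero : ∀ e : Equiv.Perm (Fin (n₁+1)),
            (if x (Equiv.swap 0 p (e ⟨0, by omega⟩).succ) = c then
              (x (Equiv.swap 0 p (e ⟨0, by omega⟩).succ) - x p)⁻¹
                * ∏ k : Fin n₁, (x (Equiv.swap 0 p (e k.castSucc).succ)
                    - x (Equiv.swap 0 p (e k.succ).succ))⁻¹ else 0) = 0 := by
          intro e
          rw [if_neg]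
          exact fun hh => y_ne hx p _ (hh.trans hpc.symm)
        rw [Finset.sum_congr rfl (fun e _ => hzero e), Finset.sum_const, smul_zero, mul_zero]
      · rw [if_neg hpc]
        have hyc : ∃ i : Fin (n₁+1), x (Equiv.swap 0 p i.succ) = c := by
          obtain ⟨q, rfl⟩ := hc
          exact y_surj x p q (fun h => hpc (congrArg x h.symm))
        have hB := Blem0 n₁ (fun i => x (Equiv.swap 0 p i.succ)) (y_inj hx p) c (x p)
          hyc (fun k => y_ne hx p k)
        have h0 : (⟨0, by omega⟩ : Fin (n₁+1)) = 0 := rfl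
        rw [h0, hB, y_img hx p]
    rw [Finset.sum_congr rfl (fun p _ => hin p)]
    have hform : ∀ p : Fin (n₁+2), (if x p = c then 0 else
          (-1) * ((-1)^n₁
            * (∏ w ∈ (((Finset.image x Finset.univ).erase (x p)).erase c), (w - c)⁻¹)
            * (c - x p)⁻¹))
        = (if x p = c then 0 else
          (-1) * ((-1)^n₁
            * (∏ w ∈ (((Finset.image x Finset.univ).erase c).erase (x p)), (w - c)⁻¹)
            * (c - x p)⁻¹)) := by
      intro p
      rw [Finset.erase_right_comm]
    rw [Finset.sum_congr rfl (fun p _ => hform p),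
      sum_vals_erase hx c (fun w => (-1) * ((-1)^n₁
        * (∏ u ∈ (((Finset.image x Finset.univ).erase c).erase w), (u - c)⁻¹)
        * (c - w)⁻¹))]
    set V' := (Finset.image x Finset.univ).erase c with hV'
    have hstep : ∀ w ∈ V', (-1 : ℝ) * ((-1)^n₁
          * (∏ u ∈ V'.erase w, (u - c)⁻¹) * (c - w)⁻¹)
        = (-1)^n₁ * ∏ u ∈ V', (u - c)⁻¹ := by
      intro w hw
      have hwc : w ≠ c := (Finset.mem_erase.mp hw).1
      have hwc' : w - c ≠ 0 := sub_ne_zero_of_ne hwc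
      have hprod : ∏ u ∈ V', (u - c)⁻¹ = (w - c)⁻¹ * ∏ u ∈ V'.erase w, (u - c)⁻¹ :=
        (Finset.mul_prod_erase V' _ hw).symm
      have hcw : (c - w)⁻¹ = -((w - c)⁻¹) := by
        rw [show c - w = -(w - c) by ring, inv_neg]
      have hcc : (w - c)⁻¹ * (w - c) = 1 := inv_mul_cancel₀ hwc'
      rw [hprod, hcw]
      ring
    rw [Finset.sum_congr rfl hstep, Finset.sum_const, hcardV, nsmul_eq_mul]
    have hch : ((n₁+1).choose 1 : ℝ) = (n₁+1 : ℕ) := by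
      rw [Nat.choose_one_right]
    rw [hch]
    have hsg : (-1:ℝ)^(n₁+1-1) = (-1)^n₁ := by norm_num
    rw [hsg]
    ring
  | Nat.succ (Nat.succ n₂), Nat.succ (Nat.succ t), hj =>
    rw [dec_sum (fun σ => if x (σ ⟨t+2, by omega⟩) = c then
      ∏ k : Fin (n₂+2), (x (σ k.castSucc) - x (σ k.succ))⁻¹ else 0)]
    have hpos : (⟨t+2, by omega⟩ : Fin (n₂+3)) = (⟨t+1, by omega⟩ : Fin (n₂+2)).succ := rfl
    have hin : ∀ p : Fin (n₂+3),
        (∑ e : Equiv.Perm (Fin (n₂+2)),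
          (if x (Equiv.Perm.decomposeFin.symm (p, e) ⟨t+2, by omega⟩) = c then
            ∏ k : Fin (n₂+2), (x (Equiv.Perm.decomposeFin.symm (p, e) k.castSucc)
                - x (Equiv.Perm.decomposeFin.symm (p, e) k.succ))⁻¹ else 0))
        = (if x p = c then 0 else
            (-1) * ((-1)^n₂
              * (∏ w ∈ (((Finset.image x Finset.univ).erase (x p)).erase c), (w - c)⁻¹)
              * ((x p - c)^t * ∑ U ∈ ((((Finset.image x Finset.univ).erase (x p)).erase c).powersetCard (t+1)),
                  ∏ k ∈ U, (k - x p)⁻¹))) := by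
      intro p
      have hterm : ∀ e : Equiv.Perm (Fin (n₂+2)),
          (if x (Equiv.Perm.decomposeFin.symm (p, e) ⟨t+2, by omega⟩) = c then
            ∏ k : Fin (n₂+2), (x (Equiv.Perm.decomposeFin.symm (p, e) k.castSucc)
                - x (Equiv.Perm.decomposeFin.symm (p, e) k.succ))⁻¹ else 0)
          = (-1) *
            (if x (Equiv.swap 0 p (e ⟨t+1, by omega⟩).succ) = c then
              (x (Equiv.swap 0 p (e 0).succ) - x p)⁻¹
                * ∏ k : Fin (n₂+1), (x (Equiv.swap 0 p (e k.castSucc).succ)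
                    - x (Equiv.swap 0 p (e k.succ).succ))⁻¹ else 0) := by
        intro e
        rw [hpos, Equiv.Perm.decomposeFin_symm_apply_succ, chain_dec]
        by_cases h : x (Equiv.swap 0 p (e ⟨t+1, by omega⟩).succ) = c
        · rw [if_pos h, if_pos h]
          have hneg : (x p - x (Equiv.swap 0 p (e 0).succ))⁻¹
              = -((x (Equiv.swap 0 p (e 0).succ) - x p)⁻¹) := by
            rw [show x p - x (Equiv.swap 0 p (e 0).succ)
              = -(x (Equiv.swap 0 p (e 0).succ) - x p) by ring, inv_neg]
          rw [hneg]; ring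
        · rw [if_neg h, if_neg h, mul_zero]
      rw [Finset.sum_congr rfl (fun e _ => hterm e), ← Finset.mul_sum]
      by_cases hpc : x p = c
      · rw [if_pos hpc]
        have hzero : ∀ e : Equiv.Perm (Fin (n₂+2)),
            (if x (Equiv.swap 0 p (e ⟨t+1, by omega⟩).succ) = c then
              (x (Equiv.swap 0 p (e 0).succ) - x p)⁻¹
                * ∏ k : Fin (n₂+1), (x (Equiv.swap 0 p (e k.castSucc).succ)
                    - x (Equiv.swap 0 p (e k.succ).succ))⁻¹ else 0) = 0 := by
          intro e
          rw [if_neg]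
          exact fun hh => y_ne hx p _ (hh.trans hpc.symm)
        rw [Finset.sum_congr rfl (fun e _ => hzero e), Finset.sum_const, smul_zero, mul_zero]
      · rw [if_neg hpc]
        have hyc : ∃ i : Fin (n₂+2), x (Equiv.swap 0 p i.succ) = c := by
          obtain ⟨q, rfl⟩ := hc
          exact y_surj x p q (fun h => hpc (congrArg x h.symm))
        have hB := BlemS t n₂ (by omega) (fun i => x (Equiv.swap 0 p i.succ)) (y_inj hx p) c (x p)
          hyc (fun k => y_ne hx p k)
        rw [hB, y_img hx p]
    rw [Finset.sum_congr rfl (fun p _ => hin p)]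
    have hform : ∀ p : Fin (n₂+3), (if x p = c then 0 else
          (-1) * ((-1)^n₂
            * (∏ w ∈ (((Finset.image x Finset.univ).erase (x p)).erase c), (w - c)⁻¹)
            * ((x p - c)^t * ∑ U ∈ ((((Finset.image x Finset.univ).erase (x p)).erase c).powersetCard (t+1)),
                ∏ k ∈ U, (k - x p)⁻¹)))
        = (if x p = c then 0 else
          (-1) * ((-1)^n₂
            * (∏ w ∈ (((Finset.image x Finset.univ).erase c).erase (x p)), (w - c)⁻¹)
            * ((x p - c)^t * ∑ U ∈ ((((Finset.image x Finset.univ).erase c).erase (x p)).powersetCard (t+1)),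
                ∏ k ∈ U, (k - x p)⁻¹))) := by
      intro p
      rw [Finset.erase_right_comm]
    rw [Finset.sum_congr rfl (fun p _ => hform p),
      sum_vals_erase hx c (fun w => (-1) * ((-1)^n₂
        * (∏ u ∈ (((Finset.image x Finset.univ).erase c).erase w), (u - c)⁻¹)
        * ((w - c)^t * ∑ U ∈ ((((Finset.image x Finset.univ).erase c).erase w).powersetCard (t+1)),
            ∏ k ∈ U, (k - w)⁻¹)))]
    set V' := (Finset.image x Finset.univ).erase c with hV'
    have hstep : ∀ w ∈ V', (-1 : ℝ) * ((-1)^n₂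
          * (∏ u ∈ V'.erase w, (u - c)⁻¹)
          * ((w - c)^t * ∑ U ∈ ((V'.erase w).powersetCard (t+1)), ∏ k ∈ U, (k - w)⁻¹))
        = ((-1)^(n₂+1) * ∏ u ∈ V', (u - c)⁻¹) *
            ((w - c)^(t+1) * ∑ U ∈ (V'.erase w).powersetCard (t+1), ∏ k ∈ U, (k - w)⁻¹) := by
      intro w hw
      have hwc : w ≠ c := (Finset.mem_erase.mp hw).1
      have hwc' : w - c ≠ 0 := sub_ne_zero_of_ne hwc
      have hprod : ∏ u ∈ V', (u - c)⁻¹ = (w - c)⁻¹ * ∏ u ∈ V'.erase w, (u - c)⁻¹ :=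
        (Finset.mul_prod_erase V' _ hw).symm
      have hcc : (w - c)⁻¹ * (w - c) = 1 := inv_mul_cancel₀ hwc'
      rw [hprod, pow_succ]
      linear_combination (-((-1:ℝ)^(n₂+1) * (∏ u ∈ V'.erase w, (u - c)⁻¹) * (w - c)^t
        * (∑ U ∈ (V'.erase w).powersetCard (t+1), ∏ k ∈ U, (k - w)⁻¹))) * hcc
    rw [Finset.sum_congr rfl hstep, ← Finset.mul_sum, vid0 (t+1) V' c, hcardV]
    rw [neg_one_sub_pow (n₂+2) (t+2) hj]
    have hsg : (-1:ℝ)^(n₂+2+(t+2)) = (-1)^(n₂+1) * (-1)^(t+1) := by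
      rw [← pow_add]
      have : n₂+2+(t+2) = (n₂+1) + (t+1) + 2 := by omega
      rw [this, pow_add]
      norm_num
    rw [hsg]
    ring

theorem stmt5 (n : ℕ) (Y : ℝ) (l : Fin (n+1) → ℝ) (hl : Function.Injective l)
    (hY : ∀ k, l k ≠ Y) (j : Fin (n+1)) :
    ∑ σ : Equiv.Perm (Fin (n+1)),
      (1 / (l (σ j) - Y)) * ∏ k : Fin n, 1 / (l (σ k.castSucc) - l (σ k.succ))
    = (-1 : ℝ)^(n - (j : ℕ)) * (n.choose j) * ∏ k, 1 / (l k - Y) := by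
  simp only [one_div]
  have hjn : (j : ℕ) ≤ n := by omega
  have hswap : ∀ σ : Equiv.Perm (Fin (n+1)),
      (l (σ j) - Y)⁻¹ * ∏ k : Fin n, (l (σ k.castSucc) - l (σ k.succ))⁻¹
        = ∑ i : Fin (n+1), (l i - Y)⁻¹ *
            (if l (σ ⟨(j:ℕ), by omega⟩) = l i then
              ∏ k : Fin n, (l (σ k.castSucc) - l (σ k.succ))⁻¹ else 0) := by
    intro σ
    have hjj : (⟨(j:ℕ), by omega⟩ : Fin (n+1)) = j := rfl
    rw [Finset.sum_eq_single_of_mem (σ j) (Finset.mem_univ _)]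
    · rw [hjj, if_pos rfl]
    · intro i _ hne
      have hne2 : l (σ ⟨(j:ℕ), by omega⟩) ≠ l i := by
        rw [hjj]
        exact fun h => hne (hl h).symm
      rw [if_neg hne2, mul_zero]
  rw [Finset.sum_congr rfl (fun σ _ => hswap σ), Finset.sum_comm]
  have hper : ∀ i : Fin (n+1),
      (∑ σ : Equiv.Perm (Fin (n+1)), (l i - Y)⁻¹ *
        (if l (σ ⟨(j:ℕ), by omega⟩) = l i then
          ∏ k : Fin n, (l (σ k.castSucc) - l (σ k.succ))⁻¹ else 0))
      = ((-1)^(n-(j:ℕ)) * ((n.choose j) : ℝ)) * ((l i - Y)⁻¹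
          * ∏ w ∈ (Finset.image l Finset.univ).erase (l i), (w - l i)⁻¹) := by
    intro i
    rw [← Finset.mul_sum, Alem n (j:ℕ) hjn l hl (l i) ⟨i, rfl⟩]
    ring
  rw [Finset.sum_congr rfl (fun i _ => hper i), ← Finset.mul_sum,
    ← sum_vals hl (fun w => (w - Y)⁻¹ * ∏ u ∈ (Finset.image l Finset.univ).erase w, (u - w)⁻¹),
    pf _ ?_ Y ?_, prod_vals hl (fun w => (w - Y)⁻¹)]
  · rw [Finset.card_image_of_injective _ hl]; simp
  · intro k hk
    obtain ⟨i, _, rfl⟩ := Finset.mem_image.mp hk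
    exact hY i
end

section
/- For any real Y, pairwise distinct real numbers λ₁,…,λ_{n+1}, and any j with 1 ≤ j ≤ n+1, ∑_{σ∈S_{n+1}} ∏_{k=1}^{n} (λ_{σ(j)} − Y)/(λ_{σ(k)} − λ_{σ(k+1)}) = (−1)^{j−1} · C(n, j−1). -/
/-!
Weight each permutation `σ` by `X ^ (σ⁻¹ i)`, the position at which the path `v ∘ σ` visits
`v i`. The generating polynomial of the path weights `∏ₖ (v (σ k) - v (σ (k + 1)))⁻¹` so obtained
is `(1 - X) ^ n * ∏_{k ≠ i} (v i - v k)⁻¹`. For the induction fix `q ≠ i`: every permutation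
arises exactly once by inserting `q` at some position `t` into a permutation of the other indices.
Inserting the value `c = v q` into a path `y` multiplies its weight by `P (t + 1) - P t`, where
`P (s + 1) = (c - y s)⁻¹` and `P` vanishes outside the path. Inserting before `i` shifts `i` one
place to the right, so the sum over `t` telescopes to `(X ^ (r + 1) - X ^ r) * (c - v i)⁻¹` times
the weight of `y`, `r` being the old position of `i`.

Reading off the coefficient of `X ^ j` turns the sum of the theorem into
`(-1) ^ j * n.choose j * ∑ᵢ (v i - Y) ^ n / ∏_{k ≠ i} (v i - v k)`, and this last sum is the
leading coefficient `1` of the interpolant of `(X - Y) ^ n` at the nodes `v i`.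
-/

open Finset Polynomial Function Equiv

lemma Fin.val_succAbove_eq_ite {n : ℕ} (t : Fin (n + 1)) (r : Fin n) :
    (t.succAbove r : ℕ) = if (t : ℕ) ≤ r then (r : ℕ) + 1 else r := by
  by_cases h : (t : ℕ) ≤ r
  · rw [if_pos h, Fin.succAbove_of_le_castSucc _ _ (Fin.le_def.2 h), Fin.val_succ]
  · rw [if_neg h, Fin.succAbove_of_castSucc_lt _ _ (Fin.lt_def.2 (by simpa using h)),
      Fin.val_castSucc]

lemma Finset.sum_range_ite_mul_sub {R : Type*} [CommRing R] (f : ℕ → R) (a b : R) {r N : ℕ}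
    (h : r < N) :
    ∑ s ∈ range N, (if s ≤ r then a else b) * (f (s + 1) - f s) =
      a * (f (r + 1) - f 0) + b * (f N - f (r + 1)) := by
  rw [← sum_range_add_sum_Ico _ h, ← sum_range_sub, ← sum_Ico_sub _ h, mul_sum, mul_sum]
  congr 1 <;> refine sum_congr rfl fun s hs => ?_ <;> simp only [mem_range, mem_Ico] at hs
  · rw [if_pos (by omega)]
  · rw [if_neg (by omega)]

lemma Polynomial.coeff_one_sub_X_pow {R : Type*} [CommRing R] (n k : ℕ) :
    ((1 - X : R[X]) ^ n).coeff k = (-1) ^ k * n.choose k := by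
  induction n generalizing k with
  | zero => cases k <;> simp [coeff_one]
  | succ n ih =>
    cases k with
    | zero => simp [pow_succ, mul_sub, ih]
    | succ k =>
      rw [pow_succ, mul_sub, mul_one, coeff_sub, coeff_mul_X, ih, ih, Nat.choose_succ_succ']
      push_cast
      ring

def insertPerm {n : ℕ} (q t : Fin (n + 2)) (e : Perm (Fin (n + 1))) : Perm (Fin (n + 2)) :=
  (finSuccEquiv' t).trans ((optionCongr e).trans (finSuccEquiv' q).symm)

section InsertPerm

variable {n : ℕ} (q t : Fin (n + 2)) (e : Perm (Fin (n + 1)))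

@[simp] lemma insertPerm_apply_self : insertPerm q t e t = q := by
  simp [insertPerm]

@[simp] lemma insertPerm_apply_succAbove (m : Fin (n + 1)) :
    insertPerm q t e (t.succAbove m) = q.succAbove (e m) := by
  simp [insertPerm]

lemma insertPerm_symm_apply_succAbove (m : Fin (n + 1)) :
    (insertPerm q t e).symm (q.succAbove m) = t.succAbove (e.symm m) := by
  rw [symm_apply_eq, insertPerm_apply_succAbove, apply_symm_apply]

lemma comp_insertPerm {α : Type*} (v : Fin (n + 2) → α) :
    v ∘ insertPerm q t e = Fin.insertNth t (v q) ((v ∘ q.succAbove) ∘ e) := by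
  funext p
  cases p using Fin.succAboveCases t <;> simp

lemma insertPerm_bijective :
    Bijective fun p : Fin (n + 2) × Perm (Fin (n + 1)) => insertPerm q p.1 p.2 := by
  rw [Fintype.bijective_iff_injective_and_card]
  refine ⟨fun ⟨t, e⟩ ⟨t', e'⟩ h => ?_, by simp [Fintype.card_perm, Nat.factorial_succ]⟩
  simp only at h
  obtain rfl : t = t' := (insertPerm q t' e').injective <| by
    rw [insertPerm_apply_self, ← h, insertPerm_apply_self]
  refine Prod.ext rfl (Equiv.ext fun m => Fin.succAbove_right_injective (p := q) ?_)
  simpa using congr($h (t.succAbove m))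

end InsertPerm

section PathWeight

variable {K : Type*} [Field K]

def pathWeight {m : ℕ} (y : Fin (m + 1) → K) : K :=
  ∏ k : Fin m, (y k.castSucc - y k.succ)⁻¹

lemma pathWeight_cons {m : ℕ} (a : K) (y : Fin (m + 1) → K) :
    pathWeight (Fin.cons a y : Fin (m + 2) → K) = (a - y 0)⁻¹ * pathWeight y := by
  simp only [pathWeight, Fin.prod_univ_succ (n := m), Fin.succ_zero_eq_one, Fin.cons_one]
  rfl

def insertPotential {m : ℕ} (c : K) (y : Fin (m + 1) → K) : ℕ → K
  | 0 => 0
  | s + 1 => if h : s < m + 1 then (c - y ⟨s, h⟩)⁻¹ else 0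

lemma insertPotential_cons {m : ℕ} (c a : K) (y : Fin (m + 1) → K) (s : ℕ) :
    insertPotential c (Fin.cons a y : Fin (m + 2) → K) (s + 2) = insertPotential c y (s + 1) := by
  simp only [insertPotential, Nat.add_lt_add_iff_right]
  rfl

lemma insertPotential_one {m : ℕ} (c : K) (y : Fin (m + 1) → K) :
    insertPotential c y 1 = (c - y 0)⁻¹ := by
  simp [insertPotential]

lemma pathWeight_insertNth {m : ℕ} {c : K} {y : Fin (m + 1) → K} (hy : Injective y)
    (hc : ∀ k, y k ≠ c) (t : Fin (m + 2)) :
    pathWeight (Fin.insertNth t c y) =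
      (insertPotential c y (t + 1) - insertPotential c y t) * pathWeight y := by
  induction m with
  | zero =>
    fin_cases t
    · simp [Fin.insertNth_zero', insertPotential, pathWeight]
    · simp [Fin.insertNth_apply_below (show (0 : Fin 2) < 1 by decide), pathWeight,
        insertPotential, ← inv_neg]
  | succ m ih =>
    obtain ⟨a, y, rfl⟩ : ∃ a y, ‹Fin (m + 2) → K› = Fin.cons a y :=
      ⟨_, _, (Fin.cons_self_tail _).symm⟩
    cases t using Fin.cases with
    | zero => simp [Fin.insertNth_zero', pathWeight_cons, insertPotential]
    | succ t =>
      rw [Fin.insertNth_succ_cons, pathWeight_cons, pathWeight_cons]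
      cases t using Fin.cases with
      | zero =>
        have hac : a - c ≠ 0 := sub_ne_zero.2 (hc 0)
        have hca : c - a ≠ 0 := sub_ne_zero.2 (hc 0).symm
        have hcy : c - y 0 ≠ 0 := sub_ne_zero.2 (hc 1).symm
        have hay : a - y 0 ≠ 0 := sub_ne_zero.2 (hy.ne Fin.zero_ne_one)
        simp only [Fin.insertNth_zero', Fin.cons_zero, pathWeight_cons, Fin.val_succ, Fin.val_zero,
          insertPotential_cons, zero_add, insertPotential_one]
        field_simp
        ring
      | succ t =>
        rw [ih (Fin.cons_injective_iff.1 hy).2 (fun k => hc k.succ),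
          Fin.insertNth_apply_below (Fin.succ_pos t)]
        simp only [Fin.val_succ, insertPotential_cons, Fin.castPred_zero]
        ring

lemma sum_pathWeight_insertNth {m : ℕ} {c : K} {y : Fin (m + 1) → K} (hy : Injective y)
    (hc : ∀ k, y k ≠ c) (r : Fin (m + 1)) :
    ∑ t : Fin (m + 2), C (pathWeight (Fin.insertNth t c y)) * X ^ (t.succAbove r : ℕ) =
      C ((y r - c)⁻¹ * pathWeight y) * (1 - X) * X ^ (r : ℕ) := by
  set P := insertPotential c y
  have hP0 : P 0 = 0 := rfl
  have hPlast : P (m + 2) = 0 := by simp [P, insertPotential]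
  have hPr : P (r + 1) = (c - y r)⁻¹ := by simp only [P, insertPotential, dif_pos r.isLt]
  have hsummand : ∀ s : ℕ,
      C ((P (s + 1) - P s) * pathWeight y) * X ^ (if s ≤ r then (r : ℕ) + 1 else r) =
        C (pathWeight y) * ((if s ≤ r then X ^ ((r : ℕ) + 1) else X ^ (r : ℕ)) *
          (C (P (s + 1)) - C (P s))) := by
    intro s
    split_ifs <;> simp only [map_mul, map_sub] <;> ring
  simp_rw [pathWeight_insertNth hy hc, Fin.val_succAbove_eq_ite]
  rw [Fin.sum_univ_eq_sum_range
      (fun s => C ((P (s + 1) - P s) * pathWeight y) * X ^ (if s ≤ r then (r : ℕ) + 1 else r)),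
    sum_congr rfl fun s _ => hsummand s, ← mul_sum,
    sum_range_ite_mul_sub (fun s => C (P s)) _ _ (by omega), hP0, hPlast, hPr, ← neg_sub c,
    inv_neg]
  simp only [map_mul, map_neg, map_zero]
  ring

lemma nodalWeight_univ_succAbove {n : ℕ} (v : Fin (n + 2) → K) (q : Fin (n + 2))
    (i : Fin (n + 1)) :
    Lagrange.nodalWeight univ v (q.succAbove i) =
      (v (q.succAbove i) - v q)⁻¹ * Lagrange.nodalWeight univ (v ∘ q.succAbove) i := by
  have : univ.erase (q.succAbove i) = insert q ((univ.erase i).map q.succAboveEmb) := by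
    ext j
    cases j using Fin.succAboveCases q <;> simp [eq_comm]
  rw [Lagrange.nodalWeight, this, prod_insert (by simp [Fin.succAbove_ne]), prod_map]
  rfl

noncomputable def positionPoly {n : ℕ} (v : Fin (n + 1) → K) (i : Fin (n + 1)) : K[X] :=
  ∑ σ : Perm (Fin (n + 1)), C (pathWeight (v ∘ σ)) * X ^ (σ.symm i : ℕ)

theorem positionPoly_eq {n : ℕ} {v : Fin (n + 1) → K} (hv : Injective v) (i : Fin (n + 1)) :
    positionPoly v i = C (Lagrange.nodalWeight univ v i) * (1 - X) ^ n := by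
  induction n with
  | zero =>
    rw [Fin.fin_one_eq_zero i]
    simp [positionPoly, pathWeight, Lagrange.nodalWeight]
  | succ n ih =>
    obtain ⟨q, hqi⟩ := exists_ne i
    obtain ⟨i, rfl⟩ := Fin.exists_succAbove_eq hqi.symm
    have hw : Injective (v ∘ q.succAbove) := hv.comp Fin.succAbove_right_injective
    calc positionPoly v (q.succAbove i)
        = ∑ e : Perm (Fin (n + 1)), ∑ t : Fin (n + 2),
            C (pathWeight (Fin.insertNth t (v q) ((v ∘ q.succAbove) ∘ e))) *
              X ^ (t.succAbove (e.symm i) : ℕ) := by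
          rw [positionPoly, ← (insertPerm_bijective q).sum_comp, Fintype.sum_prod_type, sum_comm]
          simp_rw [comp_insertPerm, insertPerm_symm_apply_succAbove]
      _ = ∑ e : Perm (Fin (n + 1)),
            C ((v (q.succAbove i) - v q)⁻¹ * pathWeight ((v ∘ q.succAbove) ∘ e)) *
              (1 - X) * X ^ (e.symm i : ℕ) := by
          refine sum_congr rfl fun e _ => ?_
          rw [sum_pathWeight_insertNth (hw.comp e.injective)
            (fun k => hv.ne (Fin.succAbove_ne q _))]
          simp
      _ = C ((v (q.succAbove i) - v q)⁻¹) * (1 - X) * positionPoly (v ∘ q.succAbove) i := by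
          simp only [positionPoly, mul_sum, map_mul]
          refine sum_congr rfl fun e _ => ?_
          ring
      _ = C (Lagrange.nodalWeight univ v (q.succAbove i)) * (1 - X) ^ (n + 1) := by
          rw [ih hw, nodalWeight_univ_succAbove, map_mul]
          ring

lemma coeff_positionPoly {n : ℕ} (v : Fin (n + 1) → K) (i j : Fin (n + 1)) :
    (positionPoly v i).coeff j = ∑ σ : Perm (Fin (n + 1)) with σ j = i, pathWeight (v ∘ σ) := by
  simp only [positionPoly, finsetSum_coeff, coeff_C_mul_X_pow, sum_filter]
  refine sum_congr rfl fun σ _ => ?_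
  simp only [Fin.val_inj, eq_symm_apply]

lemma sum_pow_sub_mul_nodalWeight {n : ℕ} {v : Fin (n + 1) → K} (hv : Injective v) (Y : K) :
    ∑ i, (v i - Y) ^ n * Lagrange.nodalWeight univ v i = 1 := by
  have hmonic : ((X - C Y) ^ n).Monic := (monic_X_sub_C Y).pow n
  have hdeg : ((X - C Y) ^ n).natDegree = n := by simp
  have hlead : ((X - C Y) ^ n).coeff n = 1 := by simpa [hdeg] using hmonic.coeff_natDegree
  have h := Lagrange.coeff_eq_sum (s := univ) hv.injOn (P := (X - C Y) ^ n) (by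
    rw [card_univ, Fintype.card_fin, degree_eq_natDegree hmonic.ne_zero, hdeg]
    exact_mod_cast Nat.lt_succ_self n)
  rw [card_univ, Fintype.card_fin, Nat.add_sub_cancel, hlead] at h
  rw [h]
  refine sum_congr rfl fun i _ => ?_
  simp [Lagrange.nodalWeight, div_eq_mul_inv, prod_inv_distrib]

end PathWeight

theorem stmt7 (n : ℕ) (Y : ℝ) (l : Fin (n+1) → ℝ) (hl : Function.Injective l)
    (j : Fin (n+1)) :
    ∑ σ : Equiv.Perm (Fin (n+1)), ∏ k : Fin n,
      (l (σ j) - Y) / (l (σ k.castSucc) - l (σ k.succ))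
    = (-1 : ℝ)^(j : ℕ) * (n.choose j) := by
  calc ∑ σ : Perm (Fin (n + 1)), ∏ k : Fin n, (l (σ j) - Y) / (l (σ k.castSucc) - l (σ k.succ))
      = ∑ σ : Perm (Fin (n + 1)), (l (σ j) - Y) ^ n * pathWeight (l ∘ σ) := by
        refine sum_congr rfl fun σ _ => ?_
        rw [prod_div_distrib, prod_const, card_univ, Fintype.card_fin, div_eq_mul_inv, pathWeight,
          prod_inv_distrib]
        rfl
    _ = ∑ i, (l i - Y) ^ n * (positionPoly l i).coeff j := by
        simp_rw [coeff_positionPoly, mul_sum]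
        rw [← sum_fiberwise univ (fun σ : Perm (Fin (n + 1)) => σ j)]
        refine sum_congr rfl fun i _ => sum_congr rfl fun σ hσ => ?_
        rw [(mem_filter.1 hσ).2]
    _ = (∑ i, (l i - Y) ^ n * Lagrange.nodalWeight univ l i) * ((-1) ^ (j : ℕ) * n.choose j) := by
        simp_rw [positionPoly_eq hl, coeff_C_mul, coeff_one_sub_X_pow, sum_mul, mul_assoc]
    _ = (-1) ^ (j : ℕ) * n.choose j := by
        rw [sum_pow_sub_mul_nodalWeight hl, one_mul]
end

section
/- For pairwise distinct nonzero real numbers λ₁,…,λ_{n+1}, ∑_{σ∈S_{n+1}} ∏_{k=1}^{n} λ_{σ(k)}²/(λ_{σ(k)} − λ_{σ(k+1)}) = e_n(λ₁,…,λ_{n+1}), the n-th elementary symmetric polynomial. -/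
/-!
Group the permutations by their last value `σ n = j`. The orderings of the remaining nodes are
again permutations, and by induction on `n`, using the partial-fraction expansion
`∏ i, w i / (v i - x) = ∑ z, (∏ i ≠ z, w i / (v i - v z)) * (w z / (v z - x))`, the fibre of `j`
sums to `∏ i ≠ j, λ i ^ 2 / (λ i - λ j)`. This equals `f (λ j) * L j 0`, where `L j` is the Lagrange
basis polynomial and `f = -(∏ i, (λ i - X)).divX` is the polynomial of degree `n` with
`f (λ j) = ∏ i ≠ j, λ i`. Summing over `j` therefore gives `f 0 = e_n`.
-/

open Finset Polynomial

namespace Polynomial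

variable {R : Type*} [CommRing R]

theorem divX_C_sub_X_mul (a : R) (p : R[X]) : divX ((C a - X) * p) = C a * divX p - p := by
  ext n
  simp [coeff_divX, sub_mul, coeff_C_mul, coeff_X_mul]

theorem eval_divX_C_sub_X_mul (a : R) (p : R[X]) :
    (divX ((C a - X) * p)).eval a = -p.eval 0 := by
  have h := congrArg (eval a) (X_mul_divX_add p)
  simp only [eval_add, eval_mul, eval_X, eval_C, coeff_zero_eq_eval_zero] at h
  rw [divX_C_sub_X_mul, eval_sub, eval_mul, eval_C]
  linear_combination h

end Polynomial

theorem Fin.prod_univ_erase {M : Type*} [CommMonoid M] {n : ℕ} (f : Fin (n + 1) → M)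
    (j : Fin (n + 1)) : ∏ i ∈ univ.erase j, f i = ∏ i, f (j.succAbove i) := by
  rw [Fin.univ_succAbove n j, erase_cons, prod_map, coe_succAboveEmb]

theorem Finset.sum_powersetCard_univ_eq_sum_erase {ι M : Type*} [Fintype ι] [DecidableEq ι]
    [AddCommMonoid M] {n : ℕ} (h : Fintype.card ι = n + 1) (f : Finset ι → M) :
    ∑ s ∈ univ.powersetCard n, f s = ∑ j, f (univ.erase j) := by
  refine (sum_bij (fun j _ => univ.erase j) (fun j _ => ?_) (fun a _ b _ => ?_)
    (fun s hs => ?_) (fun _ _ => rfl)).symm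
  · simp [mem_powersetCard, card_erase_of_mem, h]
  · exact (erase_inj _ (mem_univ a)).mp
  · have hcard : #sᶜ = 1 := by
      rw [card_compl, h, (mem_powersetCard.mp hs).2]; omega
    obtain ⟨j, hj⟩ := card_eq_one.mp hcard
    exact ⟨j, mem_univ j, by rw [← compl_singleton, ← hj, compl_compl]⟩

section Interpolation

variable {ι K : Type*} [Fintype ι] [DecidableEq ι] [Field K] {v : ι → K}

theorem sum_prod_erase_div_sub_mul_div_sub [Nonempty ι] (hv : Function.Injective v)
    (w : ι → K) {x : K} (hx : ∀ i, v i ≠ x) :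
    ∑ z, (∏ i ∈ univ.erase z, w i / (v i - v z)) * (w z / (v z - x)) =
      ∏ i, w i / (v i - x) := by
  have hbasis : ∑ z, (Lagrange.basis univ v z).eval x = 1 := by
    rw [← eval_finsetSum, Lagrange.sum_basis hv.injOn univ_nonempty, eval_one]
  rw [← mul_one (∏ i, _), ← hbasis, mul_sum]
  refine sum_congr rfl fun z _ => ?_
  simp only [Lagrange.basis, Lagrange.basisDivisor, eval_prod, eval_mul, eval_C, eval_sub,
    eval_X]
  rw [← mul_prod_erase univ _ (mem_univ z), mul_assoc, ← prod_mul_distrib, mul_comm]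
  congr 1
  refine prod_congr rfl fun i hi => ?_
  have hiz : v i - v z ≠ 0 := sub_ne_zero_of_ne (hv.ne (ne_of_mem_erase hi))
  have hzi : v z - v i ≠ 0 := sub_ne_zero_of_ne (hv.ne (ne_of_mem_erase hi).symm)
  have hix : v i - x ≠ 0 := sub_ne_zero_of_ne (hx i)
  field_simp
  ring

theorem eval_zero_eq_sum_eval_mul_prod_erase_div_sub (hv : Function.Injective v) {f : K[X]}
    (hf : f.degree < Fintype.card ι) :
    f.eval 0 = ∑ j, f.eval (v j) * ∏ i ∈ univ.erase j, v i / (v i - v j) := by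
  conv_lhs => rw [Lagrange.eq_interpolate hv.injOn hf, Lagrange.interpolate_apply]
  simp only [eval_finsetSum, eval_mul, eval_C, Lagrange.basis, Lagrange.basisDivisor, eval_prod,
    eval_sub, eval_X]
  refine sum_congr rfl fun j _ => congrArg _ (prod_congr rfl fun i hi => ?_)
  have hji : v j - v i ≠ 0 := sub_ne_zero_of_ne (hv.ne (ne_of_mem_erase hi).symm)
  rw [← neg_sub (v j) (v i)]
  field_simp
  ring

theorem sum_prod_erase_sq_div_sub (hv : Function.Injective v) :
    ∑ j, ∏ i ∈ univ.erase j, v i ^ 2 / (v i - v j) = ∑ j, ∏ i ∈ univ.erase j, v i := by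
  set Q : K[X] := ∏ i, (C (v i) - X)
  have hfactor : ∀ a : K, C a - X = -(X - C a) := fun a => (neg_sub _ _).symm
  have hQ : Q ≠ 0 := prod_ne_zero_iff.mpr fun i _ => by
    rw [hfactor, neg_ne_zero]; exact X_sub_C_ne_zero (v i)
  have hdeg : (-divX Q).degree < Fintype.card ι := by
    rw [degree_neg]
    refine (degree_divX_lt hQ).trans_le ?_
    simp_rw [Q, degree_prod, hfactor, degree_neg, degree_X_sub_C]
    simp
  have hnode : ∀ j, (-divX Q).eval (v j) = ∏ i ∈ univ.erase j, v i := fun j => by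
    have hQj : Q = (C (v j) - X) * ∏ i ∈ univ.erase j, (C (v i) - X) :=
      (mul_prod_erase univ _ (mem_univ j)).symm
    rw [eval_neg, hQj, eval_divX_C_sub_X_mul, neg_neg, eval_prod]
    simp
  have hzero : (-divX Q).eval 0 = ∑ j, ∏ i ∈ univ.erase j, v i := by
    have hcoeff : (divX Q).eval 0 = (derivative Q).eval 0 := by
      rw [← coeff_zero_eq_eval_zero, ← coeff_zero_eq_eval_zero, coeff_divX, coeff_derivative]
      simp
    rw [eval_neg, hcoeff, derivative_prod_finset, eval_finsetSum]
    simp [eval_prod]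
  rw [← hzero, eval_zero_eq_sum_eval_mul_prod_erase_div_sub hv hdeg]
  simp_rw [hnode, ← prod_mul_distrib, mul_div_assoc', ← sq]

end Interpolation

namespace Equiv.Perm

variable {n : ℕ}

def snoc (j : Fin (n + 1)) (τ : Perm (Fin n)) : Perm (Fin (n + 1)) :=
  (finSuccEquivLast.trans (optionCongr τ)).trans (finSuccEquiv' j).symm

theorem coe_snoc (j : Fin (n + 1)) (τ : Perm (Fin n)) :
    ⇑(snoc j τ) = Fin.snoc (α := fun _ => Fin (n + 1)) (j.succAbove ∘ τ) j := by
  ext k : 1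
  induction k using Fin.lastCases <;> simp [snoc]

theorem bijective_snoc :
    Function.Bijective fun p : Fin (n + 1) × Perm (Fin n) => snoc p.1 p.2 := by
  refine (Fintype.bijective_iff_injective_and_card _).mpr ⟨fun ⟨j, τ⟩ ⟨j', τ'⟩ h => ?_, ?_⟩
  · have hj : j = j' := by simpa [coe_snoc] using congrFun (congrArg DFunLike.coe h) (Fin.last n)
    subst hj
    refine Prod.ext rfl (Equiv.ext fun k => Fin.succAbove_right_injective (p := j) ?_)
    simpa [coe_snoc] using congrFun (congrArg DFunLike.coe h) k.castSucc
  · simp [Fintype.card_perm, Nat.factorial_succ]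

theorem sum_eq_sum_sum_snoc {M : Type*} [AddCommMonoid M] (f : Perm (Fin (n + 1)) → M) :
    ∑ σ, f σ = ∑ j, ∑ τ, f (snoc j τ) := by
  rw [← Fintype.sum_prod_type', Fintype.sum_bijective _ bijective_snoc _ _ fun _ => rfl]

end Equiv.Perm

section Paths

variable {ι K : Type*} [Field K]

def pathProd (v w : ι → K) {m : ℕ} (u : Fin (m + 1) → ι) : K :=
  ∏ k : Fin m, w (u k.castSucc) / (v (u k.castSucc) - v (u k.succ))

theorem pathProd_snoc (v w : ι → K) {m : ℕ} (u : Fin (m + 1) → ι) (y : ι) :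
    pathProd v w (Fin.snoc (α := fun _ => ι) u y) =
      pathProd v w u * (w (u (Fin.last m)) / (v (u (Fin.last m)) - v y)) := by
  simp only [pathProd, Fin.prod_univ_castSucc, Fin.succ_castSucc, Fin.succ_last,
    Fin.snoc_castSucc, Fin.snoc_last]

theorem pathProd_comp {ι' : Type*} (v w : ι → K) (f : ι' → ι) {m : ℕ} (u : Fin (m + 1) → ι') :
    pathProd v w (f ∘ u) = pathProd (v ∘ f) (w ∘ f) u := rfl

end Paths

theorem sum_pathProd_snoc {K : Type*} [Field K] (n : ℕ) (v w : Fin (n + 1) → K)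
    (hv : Function.Injective v) (j : Fin (n + 1)) :
    ∑ τ : Equiv.Perm (Fin n), pathProd v w (τ.snoc j) = ∏ i ∈ univ.erase j, w i / (v i - v j) := by
  induction n with
  | zero => rw [Fin.prod_univ_erase]; simp [pathProd]
  | succ n ih =>
    have hpath : ∀ z τ, pathProd v w ((Equiv.Perm.snoc z τ).snoc j) =
        pathProd (v ∘ j.succAbove) (w ∘ j.succAbove) (τ.snoc z) *
          ((w ∘ j.succAbove) z / ((v ∘ j.succAbove) z - v j)) := fun z τ => by
      rw [Equiv.Perm.coe_snoc, pathProd_snoc, Function.comp_apply, pathProd_comp]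
      simp [Equiv.Perm.coe_snoc]
    simp_rw [Equiv.Perm.sum_eq_sum_sum_snoc, hpath, ← sum_mul,
      ih _ _ (hv.comp (Fin.succAbove_right_injective (p := j)))]
    rw [sum_prod_erase_div_sub_mul_div_sub (hv.comp Fin.succAbove_right_injective) _
      fun i => hv.ne (Fin.succAbove_ne j i), Fin.prod_univ_erase]
    rfl

theorem stmt8_general (n : ℕ) (l : Fin (n+1) → ℝ) (hl : Function.Injective l) :
    ∑ σ : Equiv.Perm (Fin (n+1)), ∏ k : Fin n,
      (l (σ k.castSucc))^2 / (l (σ k.castSucc) - l (σ k.succ))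
    = ∑ s ∈ Finset.univ.powersetCard n, ∏ i ∈ s, l i := by
  calc ∑ σ : Equiv.Perm (Fin (n+1)), ∏ k : Fin n,
        (l (σ k.castSucc))^2 / (l (σ k.castSucc) - l (σ k.succ))
      = ∑ j, ∑ τ : Equiv.Perm (Fin n), pathProd l (fun i => l i ^ 2) (τ.snoc j) :=
        Equiv.Perm.sum_eq_sum_sum_snoc fun σ => pathProd l (fun i => l i ^ 2) σ
    _ = ∑ j, ∏ i ∈ univ.erase j, l i ^ 2 / (l i - l j) := by
        simp_rw [sum_pathProd_snoc n l _ hl]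
    _ = ∑ s ∈ univ.powersetCard n, ∏ i ∈ s, l i := by
        rw [sum_prod_erase_sq_div_sub hl,
          sum_powersetCard_univ_eq_sum_erase (Fintype.card_fin _)]

theorem stmt8 (n : ℕ) (l : Fin (n+1) → ℝ) (hl : Function.Injective l)
    (hl0 : ∀ k, l k ≠ 0) :
    ∑ σ : Equiv.Perm (Fin (n+1)), ∏ k : Fin n,
      (l (σ k.castSucc))^2 / (l (σ k.castSucc) - l (σ k.succ))
    = ∑ s ∈ Finset.univ.powersetCard n, ∏ i ∈ s, l i :=
  stmt8_general n l hl
end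

section
/- For any real Y and pairwise distinct real numbers λ₁,…,λ_{n+1}, ∑_{σ∈S_{n+1}} ∏_{k=1}^{n} (λ_{σ(1)} − λ_{σ(k+1)} − Y)/(λ_{σ(k)} − λ_{σ(k+1)}) = n + 1. -/
open Finset Polynomial Equiv

lemma coeff_basis_top {ι : Type*} [DecidableEq ι] {s : Finset ι} {v : ι → ℝ}
    (hvs : Set.InjOn v s) {j : ι} (hj : j ∈ s) :
    (Lagrange.basis s v j).coeff (s.card - 1) = (∏ i ∈ s.erase j, (v j - v i))⁻¹ := by
  have hd := Lagrange.natDegree_basis hvs hj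
  rw [← hd, Polynomial.coeff_natDegree, Lagrange.basis, Polynomial.leadingCoeff_prod,
    ← Finset.prod_inv_distrib]
  refine Finset.prod_congr rfl fun i hi => ?_
  rw [Lagrange.basisDivisor, Polynomial.leadingCoeff_mul, Polynomial.leadingCoeff_C,
    (Polynomial.monic_X_sub_C _).leadingCoeff, mul_one]

lemma zero_ident {ι : Type*} [DecidableEq ι] {s : Finset ι} {v : ι → ℝ}
    (hvs : Set.InjOn v s) (hs : 2 ≤ s.card) :
    ∑ j ∈ s, (∏ i ∈ s.erase j, (v j - v i))⁻¹ = 0 := by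
  have h := congrArg (fun P : ℝ[X] => P.coeff (s.card - 1))
    (Lagrange.sum_basis hvs (Finset.card_pos.mp (by omega)))
  simp only [Polynomial.finset_sum_coeff] at h
  rw [Finset.sum_congr rfl (fun j hj => coeff_basis_top hvs hj)] at h
  rwa [Polynomial.coeff_one, if_neg (by omega)] at h


lemma sum_basis_eval {ι : Type*} [DecidableEq ι] {s : Finset ι} {v : ι → ℝ}
    (hvs : Set.InjOn v s) (hs : s.Nonempty) (t : ℝ) :
    ∑ j ∈ s, ∏ i ∈ s.erase j, ((t - v i) * (v j - v i)⁻¹) = 1 := by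
  have h := congrArg (Polynomial.eval t) (Lagrange.sum_basis hvs hs)
  simp only [Polynomial.eval_finset_sum, Polynomial.eval_one] at h
  rw [← h]
  refine Finset.sum_congr rfl fun j hj => ?_
  rw [Lagrange.basis, Polynomial.eval_prod]
  refine Finset.prod_congr rfl fun i hi => ?_
  simp [Lagrange.basisDivisor, mul_comm]

lemma partial_fractions {ι : Type*} [DecidableEq ι] {s : Finset ι} {v : ι → ℝ}
    (hvs : Set.InjOn v s) (hs : s.Nonempty) {t : ℝ} (ht : ∀ i ∈ s, t ≠ v i) :
    ∑ j ∈ s, ((t - v j) * ∏ i ∈ s.erase j, (v j - v i))⁻¹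
      = (∏ i ∈ s, (t - v i))⁻¹ := by
  have key := sum_basis_eval hvs hs t
  have hprod : ∀ j ∈ s, (∏ i ∈ s, (t - v i)) = (t - v j) * ∏ i ∈ s.erase j, (t - v i) :=
    fun j hj => (Finset.mul_prod_erase s _ hj).symm
  have htne : ∀ i ∈ s, t - v i ≠ 0 := fun i hi => sub_ne_zero.mpr (ht i hi)
  have hPne : (∏ i ∈ s, (t - v i)) ≠ 0 := Finset.prod_ne_zero_iff.mpr htne
  refine eq_inv_of_mul_eq_one_left ?_
  rw [← key, Finset.sum_mul]
  refine Finset.sum_congr rfl fun j hj => ?_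
  rw [hprod j hj, Finset.prod_mul_distrib, Finset.prod_inv_distrib, mul_inv]
  have h1 : (t - v j) ≠ 0 := htne j hj
  have hP : (∏ i ∈ s.erase j, (v j - v i)) ≠ 0 :=
    Finset.prod_ne_zero_iff.mpr fun i hi => sub_ne_zero.mpr
      (hvs.ne hj (Finset.mem_of_mem_erase hi) (Ne.symm (Finset.mem_erase.mp hi).1))
  field_simp


lemma image_swap_succ {n : ℕ} (p : Fin (n + 1)) :
    (Finset.univ : Finset (Fin n)).image (fun j => Equiv.swap 0 p j.succ)
      = Finset.univ.erase p := by
  have hinj : Function.Injective (fun j : Fin n => Equiv.swap 0 p j.succ) :=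
    fun a b hab => Fin.succ_injective _ ((Equiv.swap 0 p).injective hab)
  apply Finset.eq_of_subset_of_card_le
  · intro q hq
    obtain ⟨j, _, rfl⟩ := Finset.mem_image.mp hq
    refine Finset.mem_erase.mpr ⟨?_, Finset.mem_univ _⟩
    intro h
    have := (Equiv.swap 0 p).injective (h.trans (Equiv.swap_apply_left 0 p).symm)
    exact Fin.succ_ne_zero j this
  · rw [Finset.card_erase_of_mem (Finset.mem_univ p), Finset.card_image_of_injective _ hinj]
    simp

lemma prod_erase_swap {n : ℕ} (p : Fin (n + 1)) (f : Fin (n + 1) → ℝ) :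
    ∏ q ∈ Finset.univ.erase p, f q = ∏ j : Fin n, f (Equiv.swap 0 p j.succ) := by
  rw [← image_swap_succ p, Finset.prod_image]
  intro a _ b _ hab
  exact Fin.succ_injective _ ((Equiv.swap 0 p).injective hab)

lemma decomp_eq_swap_comp {n : ℕ} (p : Fin (n + 1)) (e : Perm (Fin n)) (x : Fin (n + 1)) :
    Equiv.Perm.decomposeFin.symm (p, e) x
      = Equiv.swap 0 p (Equiv.Perm.decomposeFin.symm (0, e) x) := by
  induction x using Fin.cases with
  | zero => simp [Equiv.Perm.decomposeFin_symm_apply_zero]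
  | succ i => simp [Equiv.Perm.decomposeFin_symm_apply_succ]

lemma chain_lemma : ∀ (n : ℕ) (l : Fin (n + 1) → ℝ), Function.Injective l →
    (∑ τ : Perm (Fin n), ∏ k : Fin n,
      (l (Equiv.Perm.decomposeFin.symm (0, τ) k.castSucc)
        - l (Equiv.Perm.decomposeFin.symm (0, τ) k.succ))⁻¹)
    = (∏ k : Fin n, (l 0 - l k.succ))⁻¹ := by
  intro n
  induction n with
  | zero => intro l hl; simp
  | succ n IH =>
    intro l hl
    have hswap : ∀ p : Fin (n + 1), Function.Injective
        (fun x : Fin (n + 1) => l (Fin.succ (Equiv.swap 0 p x))) :=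
      fun p a b hab => (Equiv.swap 0 p).injective
        (Fin.succ_injective _ (hl hab))
    rw [← Equiv.sum_comp
      (Equiv.Perm.decomposeFin.symm : Fin (n+1) × Perm (Fin n) ≃ Perm (Fin (n+1)))]
    rw [Fintype.sum_prod_type]
    have hstep : ∀ (p : Fin (n + 1)) (e : Perm (Fin n)),
        (∏ k : Fin (n + 1),
          (l (Equiv.Perm.decomposeFin.symm (0, Equiv.Perm.decomposeFin.symm (p, e)) k.castSucc)
            - l (Equiv.Perm.decomposeFin.symm (0, Equiv.Perm.decomposeFin.symm (p, e)) k.succ))⁻¹)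
        = (l 0 - l p.succ)⁻¹ * ∏ j : Fin n,
            ((fun x : Fin (n + 1) => l (Fin.succ (Equiv.swap 0 p x)))
              (Equiv.Perm.decomposeFin.symm (0, e) j.castSucc)
            - (fun x : Fin (n + 1) => l (Fin.succ (Equiv.swap 0 p x)))
              (Equiv.Perm.decomposeFin.symm (0, e) j.succ))⁻¹ := by
      intro p e
      rw [Fin.prod_univ_succ]
      congr 1
      · simp [Equiv.Perm.decomposeFin_symm_apply_succ,
          Equiv.Perm.decomposeFin_symm_apply_zero, Equiv.swap_self]
      · refine Finset.prod_congr rfl fun j _ => ?_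
        have h1 : (j.succ.castSucc : Fin (n + 2)) = j.castSucc.succ :=
          (Fin.succ_castSucc j).symm
        simp only [h1, Equiv.Perm.decomposeFin_symm_apply_succ, Equiv.swap_self,
          Equiv.refl_apply]
        rw [decomp_eq_swap_comp p e j.castSucc]
    calc ∑ p : Fin (n + 1), ∑ e : Perm (Fin n), _
        = ∑ p : Fin (n + 1), ((l 0 - l p.succ)
            * ∏ q ∈ Finset.univ.erase p, (l p.succ - l q.succ))⁻¹ := by
          refine Finset.sum_congr rfl fun p _ => ?_
          rw [Finset.sum_congr rfl fun e _ => hstep p e, ← Finset.mul_sum,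
            IH _ (hswap p), mul_inv,
            prod_erase_swap p (fun q => l p.succ - l q.succ)]
          simp [Equiv.swap_apply_left]
      _ = (∏ k : Fin (n + 1), (l 0 - l k.succ))⁻¹ := by
          exact partial_fractions
            (fun a _ b _ hab => Fin.succ_injective _ (hl hab))
            Finset.univ_nonempty
            (fun i _ h => Fin.succ_ne_zero i (hl h.symm))

lemma final_ident {ι : Type*} [DecidableEq ι] (s : Finset ι) (x : ι → ℝ)
    (hx : Set.InjOn x s) (Y : ℝ) :
    ∑ p ∈ s, ∏ q ∈ s.erase p, ((x p - x q - Y) * (x p - x q)⁻¹) = s.card := by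
  have hterm : ∀ p ∈ s, (∏ q ∈ s.erase p, ((x p - x q - Y) * (x p - x q)⁻¹))
      = ∑ T ∈ (s.erase p).powerset, (-Y) ^ T.card * ∏ q ∈ T, (x p - x q)⁻¹ := by
    intro p hp
    have : ∀ q ∈ s.erase p, (x p - x q - Y) * (x p - x q)⁻¹
        = (-Y) * (x p - x q)⁻¹ + 1 := by
      intro q hq
      have hne : x p - x q ≠ 0 := sub_ne_zero.mpr
        (hx.ne hp (Finset.mem_of_mem_erase hq) (Ne.symm (Finset.mem_erase.mp hq).1))
      field_simp
      ring
    rw [Finset.prod_congr rfl this, Finset.prod_add]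
    refine Finset.sum_congr rfl fun T hT => ?_
    rw [Finset.prod_const_one, mul_one, Finset.prod_mul_distrib, Finset.prod_const]
  rw [Finset.sum_congr rfl hterm]
  rw [← Finset.sum_sigma (s) (fun p => (s.erase p).powerset)
    (fun a => (-Y) ^ a.2.card * ∏ q ∈ a.2, (x a.1 - x q)⁻¹)]
  rw [Finset.sum_nbij' (i := fun a => (⟨insert a.1 a.2, a.1⟩ : Σ _ : Finset ι, ι))
    (j := fun b => (⟨b.2, b.1.erase b.2⟩ : Σ _ : ι, Finset ι))
    (t := (s.powerset.filter (fun U => U.Nonempty)).sigma (fun U => U))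
    (g := fun b => (-Y) ^ (b.1.erase b.2).card * ∏ q ∈ b.1.erase b.2, (x b.2 - x q)⁻¹)
    ?_ ?_ ?_ ?_ ?_]
  · rw [Finset.sum_sigma]
    have inner : ∀ U ∈ s.powerset.filter (fun U => U.Nonempty),
        (∑ p ∈ U, (-Y) ^ (U.erase p).card * ∏ q ∈ U.erase p, (x p - x q)⁻¹)
        = if U.card = 1 then (1 : ℝ) else 0 := by
      intro U hU
      obtain ⟨hUs, hUne⟩ := Finset.mem_filter.mp hU
      rw [Finset.mem_powerset] at hUs
      have hcard : ∀ p ∈ U, (U.erase p).card = U.card - 1 :=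
        fun p hp => Finset.card_erase_of_mem hp
      rw [Finset.sum_congr rfl (fun p hp => by rw [hcard p hp]), ← Finset.mul_sum]
      by_cases h1 : U.card = 1
      · obtain ⟨a, rfl⟩ := Finset.card_eq_one.mp h1
        simp
      · have h2 : 2 ≤ U.card := by
          have := Finset.card_pos.mpr hUne
          omega
        simp only [Finset.prod_inv_distrib]
        rw [zero_ident (hx.mono (by exact_mod_cast hUs)) h2, mul_zero, if_neg h1]
    rw [Finset.sum_congr rfl inner, Finset.sum_boole]
    have : (s.powerset.filter (fun U => U.Nonempty)).filter (fun U => U.card = 1)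
        = Finset.powersetCard 1 s := by
      rw [Finset.powersetCard_eq_filter, Finset.filter_filter]
      refine Finset.filter_congr fun U _ => ?_
      constructor
      · exact fun h => h.2
      · exact fun h => ⟨Finset.card_pos.mp (by omega), h⟩
    rw [this, Finset.card_powersetCard, Nat.choose_one_right]
  · rintro ⟨p, T⟩ ha
    obtain ⟨hp, hT⟩ := Finset.mem_sigma.mp ha
    rw [Finset.mem_powerset] at hT
    refine Finset.mem_sigma.mpr ⟨Finset.mem_filter.mpr ⟨Finset.mem_powerset.mpr ?_, ?_⟩, ?_⟩
    · exact Finset.insert_subset hp (hT.trans (Finset.erase_subset _ _))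
    · exact Finset.insert_nonempty _ _
    · exact Finset.mem_insert_self _ _
  · rintro ⟨U, q⟩ hb
    obtain ⟨hU, hq⟩ := Finset.mem_sigma.mp hb
    obtain ⟨hUs, _⟩ := Finset.mem_filter.mp hU
    rw [Finset.mem_powerset] at hUs
    refine Finset.mem_sigma.mpr ⟨hUs hq, Finset.mem_powerset.mpr ?_⟩
    exact Finset.erase_subset_erase _ hUs
  · rintro ⟨p, T⟩ ha
    obtain ⟨hp, hT⟩ := Finset.mem_sigma.mp ha
    rw [Finset.mem_powerset] at hT
    have hpT : p ∉ T := fun h => (Finset.mem_erase.mp (hT h)).1 rfl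
    simp [Finset.erase_insert hpT]
  · rintro ⟨U, q⟩ hb
    obtain ⟨_, hq⟩ := Finset.mem_sigma.mp hb
    simp [Finset.insert_erase hq]
  · rintro ⟨p, T⟩ ha
    obtain ⟨hp, hT⟩ := Finset.mem_sigma.mp ha
    rw [Finset.mem_powerset] at hT
    have hpT : p ∉ T := fun h => (Finset.mem_erase.mp (hT h)).1 rfl
    simp [Finset.erase_insert hpT]


theorem stmt9 (n : ℕ) (Y : ℝ) (l : Fin (n+1) → ℝ) (hl : Function.Injective l) :
    ∑ σ : Equiv.Perm (Fin (n+1)), ∏ k : Fin n,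
      (l (σ 0) - l (σ k.succ) - Y) / (l (σ k.castSucc) - l (σ k.succ))
    = (n : ℝ) + 1 := by
  simp only [div_eq_mul_inv]
  rw [← Equiv.sum_comp
    (Equiv.Perm.decomposeFin.symm : Fin (n+1) × Equiv.Perm (Fin n) ≃ Equiv.Perm (Fin (n+1)))]
  rw [Fintype.sum_prod_type]
  have hterm : ∀ (p : Fin (n+1)) (e : Equiv.Perm (Fin n)),
      (∏ k : Fin n, ((l (Equiv.Perm.decomposeFin.symm (p,e) 0)
          - l (Equiv.Perm.decomposeFin.symm (p,e) k.succ) - Y)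
        * (l (Equiv.Perm.decomposeFin.symm (p,e) k.castSucc)
          - l (Equiv.Perm.decomposeFin.symm (p,e) k.succ))⁻¹))
      = (∏ q ∈ Finset.univ.erase p, (l p - l q - Y)) *
        ∏ k : Fin n, ((fun x => l (Equiv.swap 0 p x)) (Equiv.Perm.decomposeFin.symm (0,e) k.castSucc)
          - (fun x => l (Equiv.swap 0 p x)) (Equiv.Perm.decomposeFin.symm (0,e) k.succ))⁻¹ := by
    intro p e
    rw [Finset.prod_mul_distrib]
    congr 1
    · rw [prod_erase_swap p (fun q => l p - l q - Y),
        ← Equiv.prod_comp e (fun k => l p - l (Equiv.swap 0 p k.succ) - Y)]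
      refine Finset.prod_congr rfl fun k _ => ?_
      rw [Equiv.Perm.decomposeFin_symm_apply_zero, Equiv.Perm.decomposeFin_symm_apply_succ]
    · refine Finset.prod_congr rfl fun k _ => ?_
      rw [decomp_eq_swap_comp p e k.castSucc, decomp_eq_swap_comp p e k.succ]
  calc ∑ p : Fin (n+1), ∑ e : Equiv.Perm (Fin n), _
      = ∑ p : Fin (n+1), (∏ q ∈ Finset.univ.erase p, (l p - l q - Y))
          * (∏ q ∈ Finset.univ.erase p, (l p - l q))⁻¹ := by
        refine Finset.sum_congr rfl fun p _ => ?_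
        have hmi : Function.Injective (fun x : Fin (n+1) => l (Equiv.swap 0 p x)) :=
          fun a b hab => (Equiv.swap 0 p).injective (hl hab)
        rw [Finset.sum_congr rfl (fun e _ => hterm p e), ← Finset.mul_sum,
          chain_lemma n _ hmi, prod_erase_swap p (fun q => l p - l q)]
        simp [Equiv.swap_apply_left]
    _ = ∑ p : Fin (n+1), ∏ q ∈ Finset.univ.erase p, ((l p - l q - Y) * (l p - l q)⁻¹) := by
        refine Finset.sum_congr rfl fun p _ => ?_
        rw [Finset.prod_mul_distrib, Finset.prod_inv_distrib]
    _ = (n : ℝ) + 1 := by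
        rw [final_ident Finset.univ l hl.injOn Y]
        simp
end

section
/- For an indeterminate (or any real) Y and nonnegative integer n, ∑_{j=0}^{n} (−1)^j · C(Y−1, j) · C(Y+n−j, n−j) = n + 1, where C(x, k) denotes the generalized binomial coefficient x(x−1)⋯(x−k+1)/k!. -/
/-!
Reflecting the second factor, `C(Y + n - j, n - j) = (-1)^(n-j) C(-Y - 1, n - j)`, turns the
alternating sum into `(-1)^n` times a Chu–Vandermonde convolution, which equals
`C(-2, n) = (-1)^n (n + 1)`.
-/

open Finset

/-- Generalized binomial coefficient `C(x, k) = x(x−1)⋯(x−k+1)/k!` for real `x`. -/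
noncomputable def genChoose (x : ℝ) (k : ℕ) : ℝ :=
  (∏ i ∈ Finset.range k, (x - i)) / k.factorial

theorem Int.negOnePow_natCast_smul {R : Type*} [Ring R] (n : ℕ) (x : R) :
    Int.negOnePow n • x = (-1) ^ n * x := by
  rw [Units.smul_def, zsmul_eq_mul, Int.cast_negOnePow_natCast]

namespace Ring

variable {R : Type*} [Ring R] [BinomialRing R]

theorem choose_add_sub_one (r : R) (n : ℕ) :
    choose (r + n - 1) n = (-1) ^ n * choose (-r) n := by
  rw [choose_neg, Int.negOnePow_natCast_smul, ← mul_assoc, ← pow_add,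
    Even.neg_one_pow ⟨n, rfl⟩, one_mul]

theorem choose_neg_two (n : ℕ) : choose (-2 : R) n = (-1) ^ n * (n + 1) := by
  rw [choose_neg, Int.negOnePow_natCast_smul,
    show (2 : R) + n - 1 = ((n + 1 : ℕ) : R) by rw [Nat.cast_succ, ← one_add_one_eq_two]; abel,
    choose_natCast, Nat.choose_succ_self_right, Nat.cast_succ]

theorem add_choose_eq_sum_range {r s : R} (h : Commute r s) (n : ℕ) :
    choose (r + s) n = ∑ j ∈ range (n + 1), choose r j * choose s (n - j) := by
  rw [add_choose_eq n h, Nat.sum_antidiagonal_eq_sum_range_succ_mk]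

end Ring

theorem genChoose_eq_ringChoose (x : ℝ) (k : ℕ) : genChoose x k = Ring.choose x k := by
  rw [Ring.choose_eq_smul, ← Polynomial.aeval_eq_smeval, Polynomial.aeval_def,
    Polynomial.eval₂_eq_eval_map, descPochhammer_map, descPochhammer_eval_eq_prod_range,
    genChoose, smul_eq_mul, div_eq_inv_mul]

theorem stmt10 (n : ℕ) (Y : ℝ) :
    ∑ j ∈ Finset.range (n+1),
      (-1 : ℝ)^j * genChoose (Y - 1) j * genChoose (Y + n - j) (n - j)
    = (n : ℝ) + 1 := by
  have reflect : ∀ j ∈ range (n + 1), (-1 : ℝ) ^ j * genChoose (Y - 1) j *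
      genChoose (Y + n - j) (n - j) =
      (-1) ^ n * (Ring.choose (Y - 1) j * Ring.choose (-(Y + 1)) (n - j)) := by
    intro j hj
    have hjn : j ≤ n := Nat.lt_succ_iff.mp (mem_range.mp hj)
    rw [genChoose_eq_ringChoose, genChoose_eq_ringChoose,
      show Y + n - j = (Y + 1) + ((n - j : ℕ) : ℝ) - 1 by rw [Nat.cast_sub hjn]; ring,
      Ring.choose_add_sub_one, ← pow_mul_pow_sub (-1 : ℝ) hjn]
    ring
  have vandermonde := Ring.add_choose_eq_sum_range (Commute.all (Y - 1) (-(Y + 1))) n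
  rw [sum_congr rfl reflect, ← mul_sum, ← vandermonde, show Y - 1 + -(Y + 1) = -2 by ring,
    Ring.choose_neg_two, ← mul_assoc, ← pow_add, Even.neg_one_pow ⟨n, rfl⟩, one_mul]
end

section
/- For any real Y and pairwise distinct real numbers λ₁,…,λ_{n+1}, ∑_{σ∈S_{n+1}} ∏_{k=1}^{n} (λ_{σ(1)} + λ_{σ(2)} − λ_{σ(k+1)} − Y)/(λ_{σ(k)} − λ_{σ(k+1)}) = 2^{n+1} − n − 2. -/
/-!
Put `a = λ - Y` and `A = {a₁, …, a_{n+1}}`, and write `w(A, x) = ∏_{t ∈ A, t ≠ x} (x - t)⁻¹` for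
the nodal weights. Peeling off `σ(1)` and using `∑_{x ∈ A} w(A, x) = 0`, induction gives the
partial-fraction identity `∑_σ g(a_{σ(1)}) ∏_k (a_{σ(k)} - a_{σ(k+1)})⁻¹ = ∑_{x ∈ A} g(x) w(A, x)`.
Peeling off `σ(1) = x` and then `σ(2) = y` the same way, the numerator `∏_{t ≠ x} (x + y - t)` is a
monic polynomial in `y` of degree `n`, so by Lagrange interpolation its sum against the weights
`w(A, y)` over all `y ∈ A` is `1`. This leaves `∑_{x ∈ A} ∏_{t ≠ x} (2x - t) w(A, x) - (n + 1)`, and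
the last sum is `2^{n+1} - 1`: it is the sum of the residues of `∏_t (2z - t) / (z ∏_t (z - t))` at
the points of `A`, the residue at `0` being `1` and the one at infinity `2^{n+1}` (if `0 ∈ A`,
removing `0` reduces to this case).
-/

open Finset Polynomial Lagrange Equiv

section NodalWeight

variable {K : Type*} [Field K] [DecidableEq K]

theorem sum_eval_mul_nodalWeight {A : Finset K} {P : K[X]} (hP : P.degree < #A) :
    ∑ x ∈ A, P.eval x * nodalWeight A id x = P.coeff (#A - 1) := by
  rw [coeff_eq_sum (Set.injOn_id _) hP]
  refine sum_congr rfl fun x _ => ?_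
  rw [nodalWeight, prod_inv_distrib, div_eq_mul_inv, id]

theorem sum_nodalWeight_eq_zero {A : Finset K} (hA : 1 < #A) :
    ∑ x ∈ A, nodalWeight A id x = 0 := by
  have h := sum_eval_mul_nodalWeight (A := A) (P := 1)
    (by rw [degree_one]; exact_mod_cast zero_lt_one.trans hA)
  rwa [coeff_one, if_neg (by omega), sum_congr rfl fun x _ => by rw [eval_one, one_mul]] at h

theorem sum_eval_mul_nodalWeight_of_monic {A : Finset K} {P : K[X]} (hP : P.Monic)
    (hdeg : P.natDegree + 1 = #A) : ∑ x ∈ A, P.eval x * nodalWeight A id x = 1 := by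
  have hlt : P.degree < #A := by
    rw [degree_eq_natDegree hP.ne_zero, ← hdeg]
    exact_mod_cast Nat.lt_succ_self _
  rw [sum_eval_mul_nodalWeight hlt, ← hdeg, Nat.add_sub_cancel, hP.coeff_natDegree]

theorem nodalWeight_eq_inv_sub_mul_nodalWeight_erase {A : Finset K} {x y : K} (hx : x ∈ A)
    (hyx : y ≠ x) : nodalWeight A id y = (y - x)⁻¹ * nodalWeight (A.erase x) id y := by
  rw [nodalWeight, nodalWeight, erase_right_comm,
    ← mul_prod_erase _ _ (mem_erase.2 ⟨hyx.symm, hx⟩)]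
  rfl

theorem sum_erase_prod_add_sub_mul_nodalWeight {A : Finset K} {x : K} (hx : x ∈ A) :
    ∑ y ∈ A.erase x, (∏ t ∈ A.erase x, (x + y - t)) * nodalWeight A id y =
      1 - (∏ t ∈ A.erase x, (2 * x - t)) * nodalWeight A id x := by
  set P : K[X] := ∏ t ∈ A.erase x, (X + C (x - t))
  have hP : P.Monic := monic_prod_of_monic _ _ fun t _ => monic_X_add_C _
  have hdeg : P.natDegree + 1 = #A := by
    rw [natDegree_prod_of_monic _ _ fun t _ => monic_X_add_C _]
    simp only [natDegree_X_add_C, sum_const, smul_eq_mul, mul_one, card_erase_add_one hx]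
  have heval : ∀ y, P.eval y = ∏ t ∈ A.erase x, (x + y - t) := fun y => by
    simp only [P, eval_prod, eval_add, eval_X, eval_C]
    exact prod_congr rfl fun t _ => by ring
  have key := sum_eval_mul_nodalWeight_of_monic hP hdeg
  rw [← add_sum_erase _ _ hx, heval, ← two_mul] at key
  simp only [heval] at key
  linear_combination key

theorem sum_prod_two_mul_sub_mul_nodalWeight_of_zero_notMem {A : Finset K} (h0 : (0 : K) ∉ A) :
    ∑ x ∈ A, (∏ t ∈ A.erase x, (2 * x - t)) * nodalWeight A id x = 2 ^ #A - 1 := by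
  set Q : K[X] := ∏ t ∈ A, (C 2 * X - C t)
  have hQ : ∀ t ∈ A, (C 2 * X - C t).natDegree ≤ 1 := fun t _ => by compute_degree
  have hQdeg : Q.degree < #(insert 0 A) := by
    rw [card_insert_of_notMem h0]
    refine degree_le_natDegree.trans_lt ?_
    have := (natDegree_prod_le (s := A) (f := fun t => C 2 * X - C t)).trans (sum_le_sum hQ)
    simp only [sum_const, smul_eq_mul, mul_one] at this
    exact_mod_cast Nat.lt_succ_of_le this
  have hQcoeff : Q.coeff #A = 2 ^ #A := by
    simpa using coeff_prod_of_natDegree_le (s := A) _ 1 hQ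
  have key := sum_eval_mul_nodalWeight hQdeg
  rw [card_insert_of_notMem h0, Nat.add_sub_cancel, hQcoeff, sum_insert h0] at key
  have hzero : Q.eval 0 * nodalWeight (insert 0 A) id 0 = 1 := by
    rw [nodalWeight, erase_insert h0, prod_inv_distrib]
    simp only [Q, eval_prod, eval_sub, eval_mul, eval_C, eval_X, mul_zero, id]
    exact mul_inv_cancel₀ (prod_ne_zero_iff.2 fun t ht => sub_ne_zero.2 fun h => h0 (h ▸ ht))
  have hmem : ∀ x ∈ A, Q.eval x * nodalWeight (insert 0 A) id x =
      (∏ t ∈ A.erase x, (2 * x - t)) * nodalWeight A id x := by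
    intro x hx
    have hx0 : x ≠ 0 := fun h => h0 (h ▸ hx)
    rw [nodalWeight_eq_inv_sub_mul_nodalWeight_erase (mem_insert_self 0 A) hx0, erase_insert h0]
    simp only [Q, eval_prod, eval_sub, eval_mul, eval_C, eval_X, ← mul_prod_erase A _ hx]
    field_simp
    ring
  rw [hzero, sum_congr rfl hmem] at key
  linear_combination key

theorem sum_prod_two_mul_sub_mul_nodalWeight (A : Finset K) :
    ∑ x ∈ A, (∏ t ∈ A.erase x, (2 * x - t)) * nodalWeight A id x = 2 ^ #A - 1 := by
  by_cases h0 : (0 : K) ∈ A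
  swap
  · exact sum_prod_two_mul_sub_mul_nodalWeight_of_zero_notMem h0
  set B := A.erase 0
  have hB := sum_prod_two_mul_sub_mul_nodalWeight_of_zero_notMem (notMem_erase 0 A)
  have hzero : (∏ t ∈ B, (2 * 0 - t)) * nodalWeight A id 0 = 1 := by
    rw [nodalWeight, ← prod_mul_distrib]
    refine prod_eq_one fun t ht => ?_
    rw [mul_zero, id, id]
    exact mul_inv_cancel₀ (sub_ne_zero.2 (ne_of_mem_erase ht).symm)
  -- the factor `t = 0` of the term at `x ≠ 0` is `2x / x = 2`
  have hmem : ∀ x ∈ B, (∏ t ∈ A.erase x, (2 * x - t)) * nodalWeight A id x =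
      2 * ((∏ t ∈ B.erase x, (2 * x - t)) * nodalWeight B id x) := by
    intro x hx
    have hx0 : x ≠ 0 := ne_of_mem_erase hx
    rw [nodalWeight_eq_inv_sub_mul_nodalWeight_erase h0 hx0,
      ← mul_prod_erase _ _ (mem_erase.2 ⟨hx0.symm, h0⟩), erase_right_comm]
    field_simp
    ring
  rw [← add_sum_erase A _ h0, sum_congr rfl hmem, ← mul_sum, hB, hzero, ← card_erase_add_one h0]
  ring

end NodalWeight

theorem image_comp_perm_succ {α : Type*} [DecidableEq α] {N : ℕ} {a : Fin (N + 1) → α}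
    (ha : Function.Injective a) (σ : Perm (Fin (N + 1))) :
    univ.image (fun k : Fin N => a (σ k.succ)) = (univ.image a).erase (a (σ 0)) := by
  ext y
  simp only [mem_image, mem_univ, true_and, mem_erase]
  constructor
  · rintro ⟨k, rfl⟩
    exact ⟨fun h => Fin.succ_ne_zero k (σ.injective (ha h)), _, rfl⟩
  · rintro ⟨hy, j, rfl⟩
    obtain ⟨k, hk⟩ :=
      Fin.exists_succ_eq.2 fun h : σ.symm j = 0 => hy (by rw [← h, apply_symm_apply])
    exact ⟨k, by rw [hk, apply_symm_apply]⟩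

section ChainWeight

variable {K : Type*} [Field K]

def chainWeight {N : ℕ} (w : Fin (N + 1) → K) : K :=
  ∏ k : Fin N, (w k.castSucc - w k.succ)⁻¹

theorem chainWeight_succ {N : ℕ} (w : Fin (N + 2) → K) :
    chainWeight w = (w 0 - w 1)⁻¹ * chainWeight (w ∘ Fin.succ) :=
  Fin.prod_univ_succ _

variable [DecidableEq K]

/- The induction step of `sum_perm_apply_zero_mul_chainWeight`, for summands depending on the first
two values so that it also serves the main theorem. -/
theorem sum_perm_apply_zero_one_mul_chainWeight_of {N : ℕ}
    (ih : ∀ b : Fin (N + 1) → K, Function.Injective b → ∀ g : K → K,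
      ∑ σ : Perm (Fin (N + 1)), g (b (σ 0)) * chainWeight (b ∘ σ) =
        ∑ x ∈ univ.image b, g x * nodalWeight (univ.image b) id x)
    {a : Fin (N + 2) → K} (ha : Function.Injective a) (F : K → K → K) :
    ∑ σ : Perm (Fin (N + 2)), F (a (σ 0)) (a (σ 1)) * chainWeight (a ∘ σ) =
      -∑ x ∈ univ.image a, ∑ y ∈ (univ.image a).erase x,
        F x y * nodalWeight (univ.image a) id y := by
  rw [← (Perm.decomposeFin).symm.sum_comp, Fintype.sum_prod_type,
    sum_image fun _ _ _ _ h => ha h, ← sum_neg_distrib]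
  set A := univ.image a
  refine sum_congr rfl fun p _ => ?_
  set b : Fin (N + 1) → K := fun k => a (swap 0 p k.succ)
  have hb : Function.Injective b := ha.comp ((swap 0 p).injective.comp (Fin.succ_injective _))
  have hbA : univ.image b = A.erase (a p) := by
    simpa using image_comp_perm_succ ha (swap 0 p)
  calc _ = ∑ e : Perm (Fin (N + 1)),
        (F (a p) (b (e 0)) * (a p - b (e 0))⁻¹) * chainWeight (b ∘ e) := by
        refine sum_congr rfl fun e _ => ?_
        rw [chainWeight_succ, ← mul_assoc]
        simp [b, Function.comp_def]
    _ = ∑ y ∈ A.erase (a p), F (a p) y * ((a p - y)⁻¹ * nodalWeight (A.erase (a p)) id y) := by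
        rw [ih b hb fun y => F (a p) y * (a p - y)⁻¹, hbA]
        simp only [mul_assoc]
    _ = _ := by
        rw [← sum_neg_distrib]
        refine sum_congr rfl fun y hy => ?_
        rw [nodalWeight_eq_inv_sub_mul_nodalWeight_erase (mem_image_of_mem a (mem_univ p))
          (ne_of_mem_erase hy), ← neg_sub, inv_neg]
        ring

theorem sum_perm_apply_zero_mul_chainWeight {N : ℕ} {a : Fin (N + 1) → K}
    (ha : Function.Injective a) (g : K → K) :
    ∑ σ : Perm (Fin (N + 1)), g (a (σ 0)) * chainWeight (a ∘ σ) =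
      ∑ x ∈ univ.image a, g x * nodalWeight (univ.image a) id x := by
  induction N generalizing g with
  | zero => simp [chainWeight, nodalWeight]
  | succ N ih =>
    rw [sum_perm_apply_zero_one_mul_chainWeight_of (fun b hb => ih hb) ha (fun x _ => g x),
      ← sum_neg_distrib]
    refine sum_congr rfl fun x hx => ?_
    rw [← mul_sum, sum_erase_eq_sub hx, sum_nodalWeight_eq_zero]
    · ring
    · rw [card_image_of_injective _ ha]; simp

end ChainWeight

theorem stmt11 (n : ℕ) (hn : 1 ≤ n) (Y : ℝ) (l : Fin (n+1) → ℝ)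
    (hl : Function.Injective l) :
    ∑ σ : Equiv.Perm (Fin (n+1)), ∏ k : Fin n,
      (l (σ 0) + l (σ 1) - l (σ k.succ) - Y) / (l (σ k.castSucc) - l (σ k.succ))
    = 2^(n+1) - n - 2 := by
  obtain ⟨m, rfl⟩ : ∃ m, n = m + 1 := ⟨n - 1, by omega⟩
  set a : Fin (m + 2) → ℝ := fun j => l j - Y
  have ha : Function.Injective a := fun i j h => hl (sub_left_injective h)
  set A := univ.image a
  have hA : #A = m + 2 := by simp [A, card_image_of_injective _ ha]
  have hsummand : ∀ σ : Perm (Fin (m + 2)), ∏ k : Fin (m + 1),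
      (l (σ 0) + l (σ 1) - l (σ k.succ) - Y) / (l (σ k.castSucc) - l (σ k.succ)) =
        (∏ t ∈ A.erase (a (σ 0)), (a (σ 0) + a (σ 1) - t)) * chainWeight (a ∘ σ) := fun σ => by
    rw [← image_comp_perm_succ ha σ,
      prod_image (f := fun t => a (σ 0) + a (σ 1) - t) fun _ _ _ _ h =>
        Fin.succ_injective _ (σ.injective (ha h)),
      chainWeight, ← prod_mul_distrib]
    refine prod_congr rfl fun k _ => ?_
    simp only [a, Function.comp_apply, div_eq_mul_inv]
    ring
  calc _ = -∑ x ∈ A, ∑ y ∈ A.erase x, (∏ t ∈ A.erase x, (x + y - t)) * nodalWeight A id y := by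
        rw [sum_congr rfl fun σ _ => hsummand σ]
        exact sum_perm_apply_zero_one_mul_chainWeight_of
          (fun b hb => sum_perm_apply_zero_mul_chainWeight hb) ha
          fun x y => ∏ t ∈ A.erase x, (x + y - t)
    _ = -∑ x ∈ A, (1 - (∏ t ∈ A.erase x, (2 * x - t)) * nodalWeight A id x) := by
        rw [sum_congr rfl fun x hx => sum_erase_prod_add_sub_mul_nodalWeight hx]
    _ = 2 ^ (m + 1 + 1) - ↑(m + 1) - 2 := by
        rw [sum_sub_distrib, sum_prod_two_mul_sub_mul_nodalWeight, sum_const, hA]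
        push_cast
        ring
end

section
/- For pairwise distinct real numbers λ₁,…,λ_{n+1} and any nonnegative integer m, ∑_{σ∈S_{n+1}} λ_{σ(1)}^m · ∏_{k=1}^{n} (λ_{σ(1)} − λ_{σ(k+1)})/(λ_{σ(k)} − λ_{σ(k+1)}) = λ₁^m + ⋯ + λ_{n+1}^m. -/
open Finset

-- tail enumeration of values other than x i, matching decomposeFin
def tl {n : ℕ} (x : Fin (n+1) → ℝ) (i : Fin (n+1)) (k : Fin n) : ℝ :=
  x (Equiv.swap 0 i k.succ)

lemma tl_inj {n : ℕ} {x : Fin (n+1) → ℝ} (hx : Function.Injective x) (i : Fin (n+1)) :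
    Function.Injective (tl x i) :=
  fun a b h => Fin.succ_injective _ ((Equiv.swap 0 i).injective (hx h))

lemma ne_tl {n : ℕ} {x : Fin (n+1) → ℝ} (hx : Function.Injective x) (i : Fin (n+1)) (k : Fin n) :
    x i ≠ tl x i k := by
  intro h
  have h2 : i = Equiv.swap 0 i k.succ := hx h
  have h3 : (0 : Fin (n+1)) = k.succ := by
    have := congrArg (Equiv.swap 0 i) h2
    rwa [Equiv.swap_apply_right, Equiv.swap_apply_self] at this
  exact (Fin.succ_ne_zero k) h3.symm

lemma key_s12 {n : ℕ} (x : Fin (n+1) → ℝ) (i : Fin (n+1)) (τ : Equiv.Perm (Fin n)) (k : Fin n) :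
    x (Equiv.Perm.decomposeFin.symm (i, τ) k.castSucc)
      = (Fin.cons (x i) (tl x i ∘ τ) : Fin (n+1) → ℝ) k.castSucc := by
  cases n with
  | zero => exact absurd k.isLt (Nat.not_lt_zero _)
  | succ m =>
    induction k using Fin.cases with
    | zero => simp [Equiv.Perm.decomposeFin_symm_apply_zero]
    | succ j =>
      rw [← Fin.succ_castSucc, Fin.cons_succ, Equiv.Perm.decomposeFin_symm_apply_succ]
      rfl

lemma prod_tl {n : ℕ} (x : Fin (n+1) → ℝ) (i : Fin (n+1)) (g : ℝ → ℝ) :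
    ∏ k : Fin n, g (tl x i k) = ∏ j ∈ univ.erase i, g (x j) := by
  have himg : (univ : Finset (Fin n)).image (fun k => Equiv.swap 0 i k.succ)
      = univ.erase i := by
    ext j
    simp only [mem_image, mem_univ, true_and, mem_erase, and_true]
    constructor
    · rintro ⟨k, rfl⟩
      intro h
      have h2 := congrArg (Equiv.swap 0 i) h
      rw [Equiv.swap_apply_self, Equiv.swap_apply_right] at h2
      exact Fin.succ_ne_zero k h2
    · intro hj
      have h0 : Equiv.swap 0 i j ≠ 0 := by
        intro h
        apply hj
        have h2 := congrArg (Equiv.swap 0 i) h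
        rwa [Equiv.swap_apply_self, Equiv.swap_apply_left] at h2
      exact ⟨(Equiv.swap 0 i j).pred h0, by simp [Fin.succ_pred]⟩
  have hinj : ∀ a ∈ (univ : Finset (Fin n)), ∀ b ∈ univ,
      (fun k => Equiv.swap 0 i k.succ) a = (fun k => Equiv.swap 0 i k.succ) b → a = b := by
    intro a _ b _ h
    exact Fin.succ_injective _ ((Equiv.swap 0 i).injective h)
  rw [← himg, Finset.prod_image hinj]
  rfl

lemma lag {n : ℕ} (x : Fin (n+1) → ℝ) (hx : Function.Injective x) (b : ℝ) :
    ∑ i : Fin (n+1), ∏ j ∈ univ.erase i, ((b - x j) / (x i - x j)) = 1 := by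
  have h := Lagrange.sum_basis (s := (univ : Finset (Fin (n+1)))) (v := x)
    hx.injOn univ_nonempty
  have h2 := congrArg (Polynomial.eval b) h
  simp only [Polynomial.eval_finset_sum, Polynomial.eval_one, Lagrange.basis,
    Polynomial.eval_prod, Lagrange.basisDivisor, Polynomial.eval_mul, Polynomial.eval_C,
    Polynomial.eval_sub, Polynomial.eval_X] at h2
  rw [← h2]
  refine sum_congr rfl fun i _ => prod_congr rfl fun j _ => ?_
  rw [div_eq_inv_mul]

lemma PF {n : ℕ} (x : Fin (n+1) → ℝ) (hx : Function.Injective x) (a b : ℝ)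
    (hb : ∀ i, b ≠ x i) :
    ∑ i, (a - x i) / (b - x i) * ∏ j ∈ univ.erase i, ((a - x j) / (x i - x j))
      = ∏ i, (a - x i) / (b - x i) := by
  have h1 : ∏ i, (a - x i) / (b - x i)
      = (∏ i, (a - x i) / (b - x i)) * ∑ i, ∏ j ∈ univ.erase i, ((b - x j) / (x i - x j)) := by
    rw [lag x hx b, mul_one]
  rw [h1, Finset.mul_sum]
  refine sum_congr rfl fun i _ => ?_
  rw [← Finset.mul_prod_erase _ _ (mem_univ i), mul_assoc, ← Finset.prod_mul_distrib]
  congr 1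
  refine prod_congr rfl fun j _ => ?_
  have hbj : b - x j ≠ 0 := sub_ne_zero.mpr (hb j)
  rw [div_mul_div_comm, mul_comm (a - x j) (b - x j), mul_div_mul_left _ _ hbj]

lemma G : ∀ (n : ℕ) (x : Fin n → ℝ), Function.Injective x → ∀ (a b : ℝ), (∀ i, b ≠ x i) →
    ∑ τ : Equiv.Perm (Fin n), ∏ k : Fin n,
      (a - x (τ k)) / ((Fin.cons b (x ∘ τ) : Fin (n+1) → ℝ) k.castSucc - x (τ k))
    = ∏ i, (a - x i) / (b - x i) := by
  intro n
  induction n with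
  | zero =>
    intro x _ a b _
    simp
  | succ n ih =>
    intro x hx a b hb
    rw [← Equiv.sum_comp (Equiv.Perm.decomposeFin.symm), Fintype.sum_prod_type]
    have hstep : ∀ (i : Fin (n+1)) (τ : Equiv.Perm (Fin n)),
        ∏ k : Fin (n+1),
          (a - x ((Equiv.Perm.decomposeFin.symm (i, τ)) k)) /
            ((Fin.cons b (x ∘ (Equiv.Perm.decomposeFin.symm (i, τ))) : Fin (n+2) → ℝ) k.castSucc
              - x ((Equiv.Perm.decomposeFin.symm (i, τ)) k))
        = ((a - x i) / (b - x i)) * ∏ k : Fin n,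
            (a - tl x i (τ k)) /
              ((Fin.cons (x i) (tl x i ∘ τ) : Fin (n+1) → ℝ) k.castSucc - tl x i (τ k)) := by
      intro i τ
      rw [Fin.prod_univ_succ]
      congr 1
      · simp [Equiv.Perm.decomposeFin_symm_apply_zero]
      · refine prod_congr rfl fun k _ => ?_
        rw [← Fin.succ_castSucc, Fin.cons_succ]
        have hnum : x ((Equiv.Perm.decomposeFin.symm (i, τ)) k.succ) = tl x i (τ k) := by
          rw [Equiv.Perm.decomposeFin_symm_apply_succ]; rfl
        rw [hnum, Function.comp_apply, key_s12 x i τ k]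
    calc ∑ i : Fin (n+1), ∑ τ : Equiv.Perm (Fin n), ∏ k : Fin (n+1),
          (a - x ((Equiv.Perm.decomposeFin.symm (i, τ)) k)) /
            ((Fin.cons b (x ∘ (Equiv.Perm.decomposeFin.symm (i, τ))) : Fin (n+2) → ℝ) k.castSucc
              - x ((Equiv.Perm.decomposeFin.symm (i, τ)) k))
        = ∑ i : Fin (n+1), (a - x i) / (b - x i) *
            ∏ j ∈ univ.erase i, ((a - x j) / (x i - x j)) := by
          refine sum_congr rfl fun i _ => ?_
          rw [Finset.sum_congr rfl fun τ _ => hstep i τ, ← Finset.mul_sum,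
            ih (tl x i) (tl_inj hx i) a (x i) (ne_tl hx i),
            prod_tl x i (fun t => (a - t) / (x i - t))]
      _ = ∏ i, (a - x i) / (b - x i) := PF x hx a b hb

theorem stmt12 (n m : ℕ) (l : Fin (n+1) → ℝ) (hl : Function.Injective l) :
    ∑ σ : Equiv.Perm (Fin (n+1)), (l (σ 0))^m * ∏ k : Fin n,
      (l (σ 0) - l (σ k.succ)) / (l (σ k.castSucc) - l (σ k.succ))
    = ∑ j, (l j)^m := by
  rw [← Equiv.sum_comp (Equiv.Perm.decomposeFin.symm), Fintype.sum_prod_type]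
  refine sum_congr rfl fun i _ => ?_
  have hterm : ∀ τ : Equiv.Perm (Fin n),
      (l ((Equiv.Perm.decomposeFin.symm (i, τ)) 0))^m * ∏ k : Fin n,
        (l ((Equiv.Perm.decomposeFin.symm (i, τ)) 0) - l ((Equiv.Perm.decomposeFin.symm (i, τ)) k.succ)) /
          (l ((Equiv.Perm.decomposeFin.symm (i, τ)) k.castSucc) - l ((Equiv.Perm.decomposeFin.symm (i, τ)) k.succ))
      = (l i)^m * ∏ k : Fin n,
          (l i - tl l i (τ k)) /
            ((Fin.cons (l i) (tl l i ∘ τ) : Fin (n+1) → ℝ) k.castSucc - tl l i (τ k)) := by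
    intro τ
    rw [Equiv.Perm.decomposeFin_symm_apply_zero]
    congr 1
    refine prod_congr rfl fun k _ => ?_
    have hnum : l ((Equiv.Perm.decomposeFin.symm (i, τ)) k.succ) = tl l i (τ k) := by
      rw [Equiv.Perm.decomposeFin_symm_apply_succ]; rfl
    rw [hnum, key_s12 l i τ k]
  rw [Finset.sum_congr rfl fun τ _ => hterm τ, ← Finset.mul_sum,
    G n (tl l i) (tl_inj hl i) (l i) (l i) (ne_tl hl i)]
  have hone : ∏ k : Fin n, (l i - tl l i k) / (l i - tl l i k) = 1 :=
    prod_eq_one fun k _ => div_self (sub_ne_zero.mpr (ne_tl hl i k))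
  rw [hone, mul_one]
end

section
/- Let λ₁,…,λ_{n+1} be pairwise distinct reals, x₁,…,x_n reals, and Y, Z reals with Z distinct from every λ_k. Then ∑_{σ∈S_{n+1}} (1/(λ_{σ(1)} − Z)) ∏_{k=1}^{n} ((λ_{σ(1)}x₁ + ⋯ + λ_{σ(k)}x_k − Y)/(λ_{σ(k)} − λ_{σ(k+1)})) = ∏_{k=1}^{n} (Y − (x₁+⋯+x_k)Z) · ∏_{k=1}^{n+1} 1/(λ_k − Z). -/
open Finset Polynomial

lemma iic_succ_insert {n : ℕ} (m : Fin n) :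
    Finset.Iic (m.succ) =
      insert (0 : Fin (n+1)) ((Finset.Iic m).map ⟨Fin.succ, Fin.succ_injective n⟩) := by
  ext i
  simp only [Finset.mem_Iic, Finset.mem_insert, Finset.mem_map, Function.Embedding.coeFn_mk]
  induction i using Fin.cases with
  | zero => simp [Fin.zero_le]
  | succ r =>
    simp [Fin.succ_le_succ_iff, (Fin.succ_injective n).eq_iff, Fin.succ_ne_zero, eq_comm]

lemma sum_Iic_succ {n : ℕ} (m : Fin n) (g : Fin (n+1) → ℝ) :
    ∑ i ∈ Finset.Iic m.succ, g i = g 0 + ∑ r ∈ Finset.Iic m, g r.succ := by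
  rw [iic_succ_insert, Finset.sum_insert, Finset.sum_map]
  · rfl
  · simp [Fin.succ_ne_zero, eq_comm]

lemma Iic_zero_fin {n : ℕ} : Finset.Iic (0 : Fin (n+1)) = {0} := by
  ext i; simp [Fin.le_zero_iff]

lemma prod_succAbove {N : ℕ} (j : Fin (N+1)) (f : Fin (N+1) → ℝ) :
    ∏ m : Fin N, f (j.succAbove m) = ∏ m ∈ Finset.univ.erase j, f m := by
  refine Finset.prod_nbij (fun m => j.succAbove m) (fun m _ => ?_) (fun a _ b _ h => ?_)
    (fun m hm => ?_) (fun _ _ => rfl)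
  · simp [Fin.succAbove_ne]
  · exact Fin.succAbove_right_injective h
  · simp only [Finset.coe_erase, Set.mem_diff, Set.mem_singleton_iff] at hm
    obtain ⟨z, hz⟩ := Fin.exists_succAbove_eq hm.2
    exact ⟨z, by simp, hz⟩

lemma lagrange_frac {N : ℕ} (l : Fin (N+1) → ℝ) (hl : Function.Injective l) (Z : ℝ)
    (hZ : ∀ k, l k ≠ Z) (P : Polynomial ℝ) (hP : P.degree < (N+1 : ℕ)) :
    ∑ j, P.eval (l j) * ((1 / (l j - Z)) * ∏ m ∈ Finset.univ.erase j, (1 / (l m - l j)))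
      = P.eval Z * ∏ j, (1 / (l j - Z)) := by
  have hinj : Set.InjOn l (Finset.univ : Finset (Fin (N+1))) := hl.injOn
  have hdeg : P.degree < (Finset.univ : Finset (Fin (N+1))).card := by simpa using hP
  have hevalZ : P.eval Z
      = ∑ j, P.eval (l j) * ∏ m ∈ Finset.univ.erase j, ((l j - l m)⁻¹ * (Z - l m)) := by
    conv_lhs => rw [Lagrange.eq_interpolate hinj hdeg]
    rw [Lagrange.interpolate_apply, eval_finset_sum]
    refine Finset.sum_congr rfl fun j _ => ?_
    rw [eval_mul, eval_C, Lagrange.basis, eval_prod]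
    refine congrArg _ (Finset.prod_congr rfl fun m _ => ?_)
    simp [Lagrange.basisDivisor]
  rw [hevalZ, Finset.sum_mul]
  refine Finset.sum_congr rfl fun j _ => ?_
  rw [mul_assoc]
  refine congrArg _ ?_
  rw [← Finset.mul_prod_erase _ _ (Finset.mem_univ j), ← mul_assoc, mul_comm _ (1 / (l j - Z)),
    mul_assoc, ← Finset.prod_mul_distrib]
  refine congrArg _ (Finset.prod_congr rfl fun m hm => ?_)
  have hmj : l m ≠ l j := fun h => (Finset.mem_erase.mp hm).1 (hl h)
  have hmZ : l m - Z ≠ 0 := sub_ne_zero.mpr (hZ m)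
  have hjm : l j - l m ≠ 0 := sub_ne_zero.mpr (Ne.symm hmj)
  have hmj' : l m - l j ≠ 0 := sub_ne_zero.mpr hmj
  field_simp
  ring

def permCons {n : ℕ} (j : Fin (n+1)) (τ : Equiv.Perm (Fin n)) : Equiv.Perm (Fin (n+1)) :=
  (finSuccEquiv n).trans ((τ.optionCongr).trans (finSuccEquiv' j).symm)

@[simp] lemma permCons_zero {n : ℕ} (j : Fin (n+1)) (τ : Equiv.Perm (Fin n)) :
    permCons j τ 0 = j := by
  simp [permCons]

@[simp] lemma permCons_succ {n : ℕ} (j : Fin (n+1)) (τ : Equiv.Perm (Fin n)) (i : Fin n) :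
    permCons j τ i.succ = j.succAbove (τ i) := by
  simp [permCons]

lemma permCons_bijective (n : ℕ) :
    Function.Bijective (fun p : Fin (n+1) × Equiv.Perm (Fin n) => permCons p.1 p.2) := by
  rw [Fintype.bijective_iff_injective_and_card]
  constructor
  · rintro ⟨j, τ⟩ ⟨j', τ'⟩ h
    simp only at h
    have h0 : j = j' := by
      have := congrArg (fun σ : Equiv.Perm (Fin (n+1)) => σ 0) h
      simpa using this
    subst h0
    have hτ : τ = τ' := by
      ext i
      have := congrArg (fun σ : Equiv.Perm (Fin (n+1)) => σ i.succ) h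
      simp only [permCons_succ] at this
      exact congrArg Fin.val (Fin.succAbove_right_injective this)
    rw [hτ]
  · simp [Fintype.card_perm, Nat.factorial_succ]

theorem stmt13 (n : ℕ) (Y Z : ℝ) (l : Fin (n+1) → ℝ) (x : Fin n → ℝ)
    (hl : Function.Injective l) (hZ : ∀ k, l k ≠ Z) :
    ∑ σ : Equiv.Perm (Fin (n+1)),
      (1 / (l (σ 0) - Z)) * ∏ k : Fin n,
        ((∑ i ∈ Finset.Iic k, l (σ i.castSucc) * x i) - Y) /
          (l (σ k.castSucc) - l (σ k.succ))
    = (∏ k : Fin n, (Y - (∑ i ∈ Finset.Iic k, x i) * Z)) *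
        ∏ k, 1 / (l k - Z) := by
  induction n generalizing Y Z with
  | zero =>
    simp
  | succ n IH =>
    have step1 :
        ∑ σ : Equiv.Perm (Fin (n+2)),
          (1 / (l (σ 0) - Z)) * ∏ k : Fin (n+1),
            ((∑ i ∈ Finset.Iic k, l (σ i.castSucc) * x i) - Y) /
              (l (σ k.castSucc) - l (σ k.succ))
        = ∑ j : Fin (n+2), ∑ τ : Equiv.Perm (Fin (n+1)),
            (1 / (l (permCons j τ 0) - Z)) * ∏ k : Fin (n+1),
              ((∑ i ∈ Finset.Iic k, l (permCons j τ i.castSucc) * x i) - Y) /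
                (l (permCons j τ k.castSucc) - l (permCons j τ k.succ)) := by
      have h1 : (∑ σ : Equiv.Perm (Fin (n+2)),
          (1 / (l (σ 0) - Z)) * ∏ k : Fin (n+1),
            ((∑ i ∈ Finset.Iic k, l (σ i.castSucc) * x i) - Y) /
              (l (σ k.castSucc) - l (σ k.succ)))
          = ∑ p : Fin (n+2) × Equiv.Perm (Fin (n+1)),
            (1 / (l (permCons p.1 p.2 0) - Z)) * ∏ k : Fin (n+1),
              ((∑ i ∈ Finset.Iic k, l (permCons p.1 p.2 i.castSucc) * x i) - Y) /
                (l (permCons p.1 p.2 k.castSucc) - l (permCons p.1 p.2 k.succ)) :=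
        (Fintype.sum_bijective _ (permCons_bijective (n+1)) _ _ (fun p => rfl)).symm
      have h2 : (∑ p : Fin (n+2) × Equiv.Perm (Fin (n+1)),
          (1 / (l (permCons p.1 p.2 0) - Z)) * ∏ k : Fin (n+1),
            ((∑ i ∈ Finset.Iic k, l (permCons p.1 p.2 i.castSucc) * x i) - Y) /
              (l (permCons p.1 p.2 k.castSucc) - l (permCons p.1 p.2 k.succ)))
          = ∑ j : Fin (n+2), ∑ τ : Equiv.Perm (Fin (n+1)),
            (1 / (l (permCons j τ 0) - Z)) * ∏ k : Fin (n+1),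
              ((∑ i ∈ Finset.Iic k, l (permCons j τ i.castSucc) * x i) - Y) /
                (l (permCons j τ k.castSucc) - l (permCons j τ k.succ)) :=
        Fintype.sum_prod_type _
      exact h1.trans h2
    rw [step1]
    have step2 : ∀ j : Fin (n+2),
        (∑ τ : Equiv.Perm (Fin (n+1)),
            (1 / (l (permCons j τ 0) - Z)) * ∏ k : Fin (n+1),
              ((∑ i ∈ Finset.Iic k, l (permCons j τ i.castSucc) * x i) - Y) /
                (l (permCons j τ k.castSucc) - l (permCons j τ k.succ)))
        = ((Y - l j * x 0) / (l j - Z)) *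
            ∑ τ : Equiv.Perm (Fin (n+1)),
              (1 / (l (j.succAbove (τ 0)) - l j)) * ∏ k : Fin n,
                ((∑ i ∈ Finset.Iic k, l (j.succAbove (τ i.castSucc)) * x i.succ)
                    - (Y - l j * x 0)) /
                  (l (j.succAbove (τ k.castSucc)) - l (j.succAbove (τ k.succ))) := by
      intro j
      rw [Finset.mul_sum]
      refine Finset.sum_congr rfl fun τ _ => ?_
      simp only [Fin.prod_univ_succ, sum_Iic_succ, ← Fin.succ_castSucc, permCons_succ,
        Fin.castSucc_zero, permCons_zero, Iic_zero_fin, Finset.sum_singleton]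
      have hprod : (∏ k : Fin n,
          (l j * x 0 + (∑ r ∈ Finset.Iic k, l (j.succAbove (τ r.castSucc)) * x r.succ) - Y) /
            (l (j.succAbove (τ k.castSucc)) - l (j.succAbove (τ k.succ))))
          = ∏ k : Fin n,
          ((∑ r ∈ Finset.Iic k, l (j.succAbove (τ r.castSucc)) * x r.succ) - (Y - l j * x 0)) /
            (l (j.succAbove (τ k.castSucc)) - l (j.succAbove (τ k.succ))) := by
        refine Finset.prod_congr rfl fun k _ => ?_
        congr 1
        ring
      rw [hprod]
      rw [show l (j.succAbove (τ 0)) - l j = -(l j - l (j.succAbove (τ 0))) by ring]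
      rw [show (1:ℝ) / -(l j - l (j.succAbove (τ 0)))
          = -(1 / (l j - l (j.succAbove (τ 0)))) by rw [one_div, one_div, inv_neg]]
      ring
    simp only [step2]
    have hinj : ∀ j : Fin (n+2), Function.Injective (fun m : Fin (n+1) => l (j.succAbove m)) :=
      fun j => hl.comp Fin.succAbove_right_injective
    have hne : ∀ j : Fin (n+2), ∀ m : Fin (n+1), l (j.succAbove m) ≠ l j :=
      fun j m h => Fin.succAbove_ne j m (hl h)
    have step3 : ∀ j : Fin (n+2),
        ((Y - l j * x 0) / (l j - Z)) *
            ∑ τ : Equiv.Perm (Fin (n+1)),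
              (1 / (l (j.succAbove (τ 0)) - l j)) * ∏ k : Fin n,
                ((∑ i ∈ Finset.Iic k, l (j.succAbove (τ i.castSucc)) * x i.succ)
                    - (Y - l j * x 0)) /
                  (l (j.succAbove (τ k.castSucc)) - l (j.succAbove (τ k.succ)))
        = (∏ k : Fin (n+1), (Y - (∑ i ∈ Finset.Iic k, x i) * l j)) *
            ((1 / (l j - Z)) * ∏ m ∈ Finset.univ.erase j, (1 / (l m - l j))) := by
      intro j
      have hIH := IH (Y - l j * x 0) (l j) (fun m => l (j.succAbove m)) (fun i => x i.succ)
        (hinj j) (hne j)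
      rw [hIH]
      rw [← prod_succAbove j (fun m => 1 / (l m - l j))]
      rw [Fin.prod_univ_succ (fun k : Fin (n+1) => Y - (∑ i ∈ Finset.Iic k, x i) * l j)]
      have hx : ∀ k : Fin n, Y - (∑ i ∈ Finset.Iic k.succ, x i) * l j
          = (Y - l j * x 0) - (∑ i ∈ Finset.Iic k, x i.succ) * l j := by
        intro k
        rw [sum_Iic_succ k x]
        ring
      simp only [hx, Iic_zero_fin, Finset.sum_singleton]
      ring
    simp only [step3]
    set P : Polynomial ℝ :=
      ∏ k : Fin (n+1), (Polynomial.C Y - Polynomial.C (∑ i ∈ Finset.Iic k, x i) * Polynomial.X)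
      with hPdef
    have hevall : ∀ t : ℝ, P.eval t = ∏ k : Fin (n+1), (Y - (∑ i ∈ Finset.Iic k, x i) * t) := by
      intro t
      rw [hPdef, eval_prod]
      simp [eval_finset_sum]
    have hdeg : P.degree < ((n+1)+1 : ℕ) := by
      have h1 : ∀ k : Fin (n+1),
          (Polynomial.C Y - Polynomial.C (∑ i ∈ Finset.Iic k, x i) * Polynomial.X : ℝ[X]).degree
            ≤ 1 := by
        intro k
        have h2 : (Polynomial.C Y - Polynomial.C (∑ i ∈ Finset.Iic k, x i) * Polynomial.X : ℝ[X])
            = Polynomial.C (-(∑ i ∈ Finset.Iic k, x i)) * Polynomial.X + Polynomial.C Y := by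
          rw [map_neg]; ring
        rw [h2]
        exact degree_linear_le
      calc P.degree ≤ ∑ k : Fin (n+1),
            (Polynomial.C Y - Polynomial.C (∑ i ∈ Finset.Iic k, x i) * Polynomial.X : ℝ[X]).degree :=
              degree_prod_le _ _
        _ ≤ ∑ _k : Fin (n+1), (1 : WithBot ℕ) := Finset.sum_le_sum fun k _ => h1 k
        _ = ((n+1 : ℕ) : WithBot ℕ) := by
              simp [Finset.sum_const, Fintype.card_fin]
        _ < (((n+1)+1 : ℕ) : WithBot ℕ) := by
              exact_mod_cast Nat.lt_succ_self _
    calc ∑ j : Fin (n+2), (∏ k : Fin (n+1), (Y - (∑ i ∈ Finset.Iic k, x i) * l j)) *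
            ((1 / (l j - Z)) * ∏ m ∈ Finset.univ.erase j, (1 / (l m - l j)))
        = ∑ j : Fin (n+2), P.eval (l j) *
            ((1 / (l j - Z)) * ∏ m ∈ Finset.univ.erase j, (1 / (l m - l j))) := by
          refine Finset.sum_congr rfl fun j _ => ?_
          rw [hevall]
      _ = P.eval Z * ∏ j, (1 / (l j - Z)) := lagrange_frac l hl Z hZ P hdeg
      _ = (∏ k : Fin (n+1), (Y - (∑ i ∈ Finset.Iic k, x i) * Z)) * ∏ k, 1 / (l k - Z) := by
          rw [hevall]
end

section
/- Let λ₁,…,λ_{n+1} be pairwise distinct reals, x₁,…,x_n and Y arbitrary reals. Then ∑_{σ∈S_{n+1}} ∏_{k=1}^{n} ((λ_{σ(1)}x₁ + ⋯ + λ_{σ(k)}x_k − Y)/(λ_{σ(k)} − λ_{σ(k+1)})) = ∏_{k=1}^{n} (x₁ + ⋯ + x_k). -/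
/-!
Write `s_k = x₁ + ⋯ + x_k`. Fixing the first element `σ(1) = j`, the sum over the remaining
orderings equals `∏_k (s_k λ_j - Y) / ∏_{i ≠ j} (λ_j - λ_i)`, by induction on `n`: peeling off the
first factor leaves the same sum for the other `λ`'s with `Y` replaced by `Y - λ_j x₁`, and the
resulting sum over the second element collapses by the Lagrange identity
`∑_j p(λ_j) / ∏_{i ≠ j} (λ_j - λ_i) = (coefficient of t^N in p)` for `N + 1` nodes and
`deg p ≤ N`, here with `deg p < N`. Summing over `j`, the same identity applied to the degree `n`
polynomial `∏_k (s_k t - Y)` gives its leading coefficient `∏_k s_k`.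
-/

open Finset Polynomial Equiv

namespace Fin

theorem sum_Iic_zero {M : Type*} [AddCommMonoid M] {m : ℕ} (f : Fin (m + 1) → M) :
    ∑ i ∈ Iic 0, f i = f 0 := by
  rw [← bot_eq_zero, Iic_bot, sum_singleton]

theorem sum_Iic_succ {M : Type*} [AddCommMonoid M] {m : ℕ} (f : Fin (m + 1) → M) (k : Fin m) :
    ∑ i ∈ Iic k.succ, f i = f 0 + ∑ i ∈ Iic k, f i.succ := by
  have hmap : ∑ i ∈ Iic k, f i.succ = ∑ i ∈ Ioc 0 k.succ, f i := by
    rw [← map_succEmb_Iic, sum_map]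
    rfl
  rw [hmap, ← sum_insert (by simp)]
  congr 1
  ext i
  cases i using Fin.cases <;> simp

theorem prod_erase_succ {M : Type*} [CommMonoid M] {m : ℕ} (f : Fin (m + 1) → M) (c : Fin m) :
    ∏ i ∈ univ.erase c.succ, f i = f 0 * ∏ i ∈ univ.erase c, f i.succ := by
  have hmap : ∏ i ∈ univ.erase c, f i.succ = ∏ i ∈ (univ.erase c).map (succEmb m), f i := by
    rw [prod_map]
    rfl
  rw [hmap, ← prod_insert (by simp)]
  congr 1
  ext i
  cases i using Fin.cases <;> simp [eq_comm, succ_ne_zero]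

theorem sum_univ_eq_add_sum_swap_zero_succ {M : Type*} [AddCommMonoid M] {m : ℕ}
    (f : Fin (m + 2) → M) (j : Fin (m + 2)) :
    ∑ a, f a = f j + ∑ a : Fin (m + 1), f (swap 0 j a.succ) := by
  rw [← Equiv.sum_comp (swap 0 j), sum_univ_succ, swap_apply_left]

theorem prod_erase_swap_zero_succ {M : Type*} [CommMonoid M] {m : ℕ}
    (f : Fin (m + 2) → M) (j : Fin (m + 2)) (c : Fin (m + 1)) :
    ∏ b ∈ univ.erase (swap 0 j c.succ), f b
      = f j * ∏ b ∈ univ.erase c, f (swap 0 j b.succ) := by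
  have herase : univ.erase (swap 0 j c.succ) = (univ.erase c.succ).map (swap 0 j).toEmbedding := by
    rw [map_erase, map_univ_equiv]
    rfl
  rw [herase, prod_map, prod_erase_succ]
  simp only [Equiv.coe_toEmbedding, swap_apply_left]

end Fin

theorem Equiv.Perm.sum_eq_sum_decomposeFin_symm {M : Type*} [AddCommMonoid M] {n : ℕ}
    (f : Perm (Fin (n + 1)) → M) :
    ∑ σ, f σ = ∑ j, ∑ e, f (Perm.decomposeFin.symm (j, e)) := by
  rw [← Equiv.sum_comp Perm.decomposeFin.symm, Fintype.sum_prod_type]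

namespace Polynomial

variable {R ι : Type*} [CommRing R]

theorem natDegree_C_mul_X_sub_C_le (a b : R) : (C a * X - C b).natDegree ≤ 1 := by
  rw [sub_eq_add_neg, ← C_neg]
  exact natDegree_linear_le

theorem natDegree_prod_C_mul_X_sub_C_le (s : Finset ι) (a b : ι → R) :
    (∏ k ∈ s, (C (a k) * X - C (b k))).natDegree ≤ #s := by
  refine (natDegree_prod_le _ _).trans ?_
  simpa using sum_le_card_nsmul s _ 1 fun k _ => natDegree_C_mul_X_sub_C_le (a k) (b k)

theorem coeff_prod_C_mul_X_sub_C (s : Finset ι) (a b : ι → R) :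
    (∏ k ∈ s, (C (a k) * X - C (b k))).coeff #s = ∏ k ∈ s, a k := by
  simpa using coeff_prod_of_natDegree_le s _ 1 fun k _ => natDegree_C_mul_X_sub_C_le (a k) (b k)

end Polynomial

variable {F : Type*} [Field F]

section Lagrange

variable {ι κ : Type*} [Fintype ι] [DecidableEq ι] [Fintype κ]

theorem sum_prod_sub_div_prod_sub_eq_coeff {v : ι → F} (hv : Function.Injective v) (a b : κ → F)
    (hκ : Fintype.card κ < Fintype.card ι) :
    ∑ j, (∏ k, (a k * v j - b k)) / ∏ i ∈ univ.erase j, (v j - v i)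
      = (∏ k, (C (a k) * X - C (b k))).coeff (Fintype.card ι - 1) := by
  have hdeg : (∏ k, (C (a k) * X - C (b k))).degree < (#(univ : Finset ι) : WithBot ℕ) := by
    refine degree_le_natDegree.trans_lt ?_
    exact_mod_cast (natDegree_prod_C_mul_X_sub_C_le univ a b).trans_lt hκ
  rw [← card_univ, Lagrange.coeff_eq_sum hv.injOn hdeg]
  simp [eval_prod]

theorem sum_prod_sub_div_prod_sub_of_card_eq {v : ι → F} (hv : Function.Injective v)
    (a b : κ → F) (hκ : Fintype.card ι = Fintype.card κ + 1) :
    ∑ j, (∏ k, (a k * v j - b k)) / ∏ i ∈ univ.erase j, (v j - v i) = ∏ k, a k := by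
  rw [sum_prod_sub_div_prod_sub_eq_coeff hv a b (by omega), hκ, Nat.add_sub_cancel,
    ← card_univ, coeff_prod_C_mul_X_sub_C]

theorem sum_prod_sub_div_prod_sub_of_card_lt {v : ι → F} (hv : Function.Injective v)
    (a b : κ → F) (hκ : Fintype.card κ + 1 < Fintype.card ι) :
    ∑ j, (∏ k, (a k * v j - b k)) / ∏ i ∈ univ.erase j, (v j - v i) = 0 := by
  rw [sum_prod_sub_div_prod_sub_eq_coeff hv a b (by omega)]
  exact coeff_eq_zero_of_natDegree_lt ((natDegree_prod_C_mul_X_sub_C_le univ a b).trans_lt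
    (by rw [card_univ]; omega))

end Lagrange

def orderingWeight {n : ℕ} (Y : F) (x : Fin n → F) (μ : Fin (n + 1) → F) : F :=
  ∏ k, (∑ i ∈ Iic k, μ i.castSucc * x i - Y) / (μ k.castSucc - μ k.succ)

theorem orderingWeight_succ {m : ℕ} (Y : F) (x : Fin (m + 1) → F) (μ : Fin (m + 2) → F) :
    orderingWeight Y x μ = (μ 0 * x 0 - Y) / (μ 0 - μ 1)
      * orderingWeight (Y - μ 0 * x 0) (Fin.tail x) (Fin.tail μ) := by
  rw [orderingWeight, Fin.prod_univ_succ, Fin.sum_Iic_zero]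
  congr 1
  refine prod_congr rfl fun k _ => ?_
  rw [Fin.sum_Iic_succ]
  simp only [Fin.tail, ← Fin.succ_castSucc, Fin.castSucc_zero]
  ring

theorem orderingWeight_comp_decomposeFin_symm {m : ℕ} (l : Fin (m + 2) → F) (Y : F)
    (x : Fin (m + 1) → F) (j : Fin (m + 2)) (e : Perm (Fin (m + 1))) :
    orderingWeight Y x (l ∘ Perm.decomposeFin.symm (j, e))
      = (l j * x 0 - Y) / (l j - l (swap 0 j (e 0).succ))
        * orderingWeight (Y - l j * x 0) (Fin.tail x) ((fun a => l (swap 0 j a.succ)) ∘ e) := by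
  have htail : Fin.tail (l ∘ Perm.decomposeFin.symm (j, e)) = (fun a => l (swap 0 j a.succ)) ∘ e :=
    funext fun a => by simp [Fin.tail, Perm.decomposeFin_symm_apply_succ]
  rw [orderingWeight_succ, htail]
  simp only [Function.comp_apply, Perm.decomposeFin_symm_apply_zero, ← Fin.succ_zero_eq_one,
    Perm.decomposeFin_symm_apply_succ]

theorem sum_orderingWeight_decomposeFin_symm {n : ℕ} {l : Fin (n + 1) → F}
    (hl : Function.Injective l) (Y : F) (x : Fin n → F) (j : Fin (n + 1)) :
    ∑ e : Perm (Fin n), orderingWeight Y x (l ∘ Perm.decomposeFin.symm (j, e))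
      = (∏ k, ((∑ i ∈ Iic k, x i) * l j - Y)) / ∏ i ∈ univ.erase j, (l j - l i) := by
  induction n generalizing Y with
  | zero =>
    obtain rfl := Fin.fin_one_eq_zero j
    simp [orderingWeight]
  | succ m ih =>
    set l' : Fin (m + 1) → F := fun a => l (swap 0 j a.succ)
    have hl' : Function.Injective l' := fun a b h =>
      Fin.succ_injective _ ((swap 0 j).injective (hl h))
    set c := l j * x 0 - Y
    set P : F → F := fun t => ∏ k : Fin m, ((∑ i ∈ Iic k, Fin.tail x i) * t - (Y - l j * x 0))
    have hrest : ∑ j' : Fin (m + 1), P (l' j') / ∏ b ∈ univ.erase (swap 0 j j'.succ), (l' j' - l b)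
        = -(P (l j) / ∏ b ∈ univ.erase j, (l j - l b)) := by
      have hzero := sum_prod_sub_div_prod_sub_of_card_lt hl
        (fun k : Fin m => ∑ i ∈ Iic k, Fin.tail x i) (fun _ => Y - l j * x 0) (by simp)
      rw [Fin.sum_univ_eq_add_sum_swap_zero_succ _ j] at hzero
      exact eq_neg_of_add_eq_zero_right hzero
    have hfirst : c * P (l j) = ∏ k, ((∑ i ∈ Iic k, x i) * l j - Y) := by
      rw [Fin.prod_univ_succ, Fin.sum_Iic_zero]
      congr 1
      · ring
      · refine prod_congr rfl fun k _ => ?_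
        rw [Fin.sum_Iic_succ]
        simp only [Fin.tail]
        ring
    calc ∑ e, orderingWeight Y x (l ∘ Perm.decomposeFin.symm (j, e))
        = ∑ j', c / (l j - l' j') * (P (l' j') / ∏ i ∈ univ.erase j', (l' j' - l' i)) := by
          simp only [orderingWeight_comp_decomposeFin_symm, Perm.sum_eq_sum_decomposeFin_symm,
            Perm.decomposeFin_symm_apply_zero, ← mul_sum]
          refine sum_congr rfl fun j' _ => ?_
          rw [← ih hl']
      _ = -c * ∑ j', P (l' j') / ∏ b ∈ univ.erase (swap 0 j j'.succ), (l' j' - l b) := by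
          simp only [Fin.prod_erase_swap_zero_succ, mul_sum]
          refine sum_congr rfl fun j' _ => ?_
          rw [← neg_sub (l' j'), div_neg, neg_mul, neg_mul, div_mul_div_comm, ← mul_div_assoc]
      _ = (∏ k, ((∑ i ∈ Iic k, x i) * l j - Y)) / ∏ i ∈ univ.erase j, (l j - l i) := by
          rw [hrest, neg_mul_neg, ← mul_div_assoc, hfirst]

theorem stmt14 (n : ℕ) (Y : ℝ) (l : Fin (n+1) → ℝ) (x : Fin n → ℝ)
    (hl : Function.Injective l) :
    ∑ σ : Equiv.Perm (Fin (n+1)), ∏ k : Fin n,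
      ((∑ i ∈ Finset.Iic k, l (σ i.castSucc) * x i) - Y) /
        (l (σ k.castSucc) - l (σ k.succ))
    = ∏ k : Fin n, ∑ i ∈ Finset.Iic k, x i := by
  calc ∑ σ : Perm (Fin (n + 1)), orderingWeight Y x (l ∘ σ)
      = ∑ j, (∏ k, ((∑ i ∈ Iic k, x i) * l j - Y)) / ∏ i ∈ univ.erase j, (l j - l i) := by
        rw [Perm.sum_eq_sum_decomposeFin_symm]
        exact sum_congr rfl fun j _ => sum_orderingWeight_decomposeFin_symm hl Y x j
    _ = ∏ k, ∑ i ∈ Iic k, x i :=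
        sum_prod_sub_div_prod_sub_of_card_eq hl _ (fun _ => Y) (by simp)
end

section
/- For pairwise distinct reals λ₁,…,λ_{n+1}, ∑_{σ∈S_{n+1}} λ_{σ(1)} · ∏_{k=1}^{n} ((λ_{σ(1)} + ⋯ + λ_{σ(k)})/(λ_{σ(k)} − λ_{σ(k+1)})) = n! · (λ₁ + ⋯ + λ_{n+1}). -/
open Finset Polynomial

lemma map_succ_univ (N : ℕ) :
    (univ : Finset (Fin N)).map (Fin.succEmb N) = (univ : Finset (Fin (N+1))).erase 0 := by
  ext i
  simp only [Finset.mem_map, Finset.mem_univ, true_and, Finset.mem_erase, and_true,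
    Fin.succEmb, Function.Embedding.coeFn_mk]
  constructor
  · rintro ⟨a, rfl⟩; exact Fin.succ_ne_zero a
  · intro h; obtain ⟨a, ha⟩ := Fin.exists_succ_eq.mpr h; exact ⟨a, ha⟩


lemma prod_erase_zero' {N : ℕ} (g : Fin (N+1) → ℝ) :
    ∏ i ∈ (univ : Finset (Fin (N+1))).erase 0, g i = ∏ i : Fin N, g i.succ := by
  rw [← map_succ_univ, Finset.prod_map]
  rfl

lemma sum_erase_zero' {N : ℕ} (g : Fin (N+1) → ℝ) :
    ∑ i ∈ (univ : Finset (Fin (N+1))).erase 0, g i = ∑ i : Fin N, g i.succ := by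
  rw [← map_succ_univ, Finset.sum_map]
  rfl

lemma prod_erase_succ {N : ℕ} (g : Fin (N+1) → ℝ) (q : Fin N) :
    ∏ i ∈ (univ : Finset (Fin (N+1))).erase q.succ, g i
      = g 0 * ∏ i ∈ (univ : Finset (Fin N)).erase q, g i.succ := by
  rw [← Finset.mul_prod_erase _ g
    (Finset.mem_erase.mpr ⟨(Fin.succ_ne_zero q).symm, Finset.mem_univ _⟩)]
  congr 1
  have h : ((univ : Finset (Fin N)).erase q).map (Fin.succEmb N)
      = ((univ : Finset (Fin (N+1))).erase q.succ).erase 0 := by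
    rw [Finset.map_erase, map_succ_univ, Finset.erase_right_comm]
    rfl
  rw [← h, Finset.prod_map]
  rfl

lemma prod_swap_succ {N : ℕ} (g : Fin (N+1) → ℝ) (p : Fin (N+1)) :
    ∏ i : Fin N, g (Equiv.swap 0 p i.succ) = ∏ i ∈ (univ : Finset (Fin (N+1))).erase p, g i := by
  rw [← prod_erase_zero' (fun i => g (Equiv.swap 0 p i))]
  have h : ((univ : Finset (Fin (N+1))).erase p).map (Equiv.swap 0 p).toEmbedding
      = (univ : Finset (Fin (N+1))).erase 0 := by
    rw [Finset.map_erase, Finset.map_univ_equiv]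
    simp
  rw [← h, Finset.prod_map]
  simp

lemma Iic_castSucc_eq {N : ℕ} (k : Fin N) :
    (Iic k.castSucc : Finset (Fin (N+1))) = Iio k.succ := by
  ext i
  simp [Fin.le_iff_val_le_val, Fin.lt_iff_val_lt_val, Nat.lt_succ_iff]

lemma Iio_succ_eq {N : ℕ} (k : Fin N) :
    (Iio k.succ : Finset (Fin (N+1))) = insert 0 ((Iio k).map (Fin.succEmb N)) := by
  ext i
  simp only [Finset.mem_Iio, Finset.mem_insert, Finset.mem_map, Fin.succEmb,
    Function.Embedding.coeFn_mk]
  constructor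
  · intro h
    rcases Fin.eq_zero_or_eq_succ i with h0 | ⟨j, rfl⟩
    · exact Or.inl h0
    · exact Or.inr ⟨j, by simpa [Fin.succ_lt_succ_iff] using h, rfl⟩
  · rintro (rfl | ⟨j, hj, rfl⟩)
    · exact Fin.succ_pos k
    · exact Fin.succ_lt_succ_iff.mpr hj

lemma sum_Iio_succ' {N : ℕ} (f : Fin (N+1) → ℝ) (k : Fin N) :
    ∑ i ∈ Iio k.succ, f i = f 0 + ∑ i ∈ Iio k, f i.succ := by
  rw [Iio_succ_eq, Finset.sum_insert, Finset.sum_map]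
  · rfl
  · simp only [Finset.mem_map, Fin.succEmb, Function.Embedding.coeFn_mk]
    rintro ⟨j, _, hj⟩
    exact Fin.succ_ne_zero j hj

lemma coeff_basis_univ {M : ℕ} (y : Fin (M+1) → ℝ) (p : Fin (M+1)) :
    (Lagrange.basis univ y p).coeff M = (∏ i ∈ univ.erase p, (y p - y i))⁻¹ := by
  unfold Lagrange.basis Lagrange.basisDivisor
  rw [Finset.prod_mul_distrib, ← map_prod, Polynomial.coeff_C_mul]
  have hm : (∏ j ∈ univ.erase p, (X - C (y j)) : ℝ[X]).Monic :=
    monic_prod_of_monic _ _ fun j _ => monic_X_sub_C _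
  have hdeg : (∏ j ∈ univ.erase p, (X - C (y j)) : ℝ[X]).natDegree = M := by
    rw [natDegree_prod_of_monic _ _ fun j _ => monic_X_sub_C _]
    simp [Finset.card_erase_of_mem]
  have h1 := hm.coeff_natDegree
  rw [hdeg] at h1
  rw [h1, mul_one, Finset.prod_inv_distrib]

lemma divided_diff {M : ℕ} (y : Fin (M+1) → ℝ) (hy : Function.Injective y)
    (f : ℝ[X]) (hf : f.degree < (M+1 : ℕ)) :
    ∑ p, f.eval (y p) / ∏ i ∈ univ.erase p, (y p - y i) = f.coeff M := by
  have hcard : f.degree < (#(univ : Finset (Fin (M+1))) : ℕ) := by simpa using hf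
  have h := Lagrange.eq_interpolate (Function.Injective.injOn hy) hcard
  conv_rhs => rw [h]
  rw [Lagrange.interpolate_apply, Polynomial.finset_sum_coeff]
  refine Finset.sum_congr rfl fun p _ => ?_
  rw [Polynomial.coeff_C_mul, coeff_basis_univ y p, div_eq_mul_inv]

lemma lag_frac {M : ℕ} (y : Fin (M+1) → ℝ) (hy : Function.Injective y) (b : ℝ)
    (hb : ∀ i, b ≠ y i) (f : ℝ[X]) (hf : f.degree < (M+1 : ℕ)) :
    ∑ p, f.eval (y p) / ((b - y p) * ∏ i ∈ univ.erase p, (y p - y i))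
      = f.eval b / ∏ i, (b - y i) := by
  set z : Fin (M+2) → ℝ := Fin.cons b y with hz
  have hzi : Function.Injective z := by
    rw [hz, Fin.cons_injective_iff]
    exact ⟨by rintro ⟨i, rfl⟩; exact hb i rfl, hy⟩
  have hd := divided_diff z hzi f (lt_trans hf (by exact_mod_cast Nat.lt_succ_self (M+1)))
  have hc : f.coeff (M+1) = 0 := Polynomial.coeff_eq_zero_of_degree_lt hf
  rw [hc, Fin.sum_univ_succ] at hd
  have h0 : f.eval (z 0) / ∏ i ∈ univ.erase 0, (z 0 - z i) = f.eval b / ∏ i, (b - y i) := by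
    rw [prod_erase_zero']
    simp [hz]
  rw [h0] at hd
  have hq : ∀ q : Fin (M+1),
      f.eval (z q.succ) / ∏ i ∈ univ.erase q.succ, (z q.succ - z i)
        = -(f.eval (y q) / ((b - y q) * ∏ i ∈ univ.erase q, (y q - y i))) := by
    intro q
    rw [prod_erase_succ (fun i => z q.succ - z i) q]
    simp only [hz, Fin.cons_succ, Fin.cons_zero]
    rw [show (y q - b) = -(b - y q) by ring, neg_mul, div_neg]
  rw [Finset.sum_congr rfl (fun q _ => hq q), Finset.sum_neg_distrib] at hd
  linarith [hd]

lemma keyV : ∀ (m : ℕ) (c b : ℝ) (y : Fin m → ℝ), Function.Injective y → (∀ i, b ≠ y i) →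
    ∑ τ : Equiv.Perm (Fin m), ∏ k : Fin m,
      (c + ∑ i ∈ Finset.Iio k, y (τ i)) /
        ((Fin.cons b (fun i => y (τ i)) : Fin _ → ℝ) k.castSucc - y (τ k))
    = (∏ j ∈ Finset.range m, (c + j * b)) / ∏ i, (b - y i) := by
  intro m
  induction m with
  | zero => intro c b y hy hb; simp
  | succ m ih =>
    intro c b y hy hb
    have key : ∀ (p : Fin (m+1)) (e : Equiv.Perm (Fin m)),
        (∏ k : Fin (m+1),
          (c + ∑ i ∈ Finset.Iio k, y ((Equiv.Perm.decomposeFin.symm (p, e)) i)) /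
          ((Fin.cons b (fun i => y ((Equiv.Perm.decomposeFin.symm (p, e)) i)) : Fin _ → ℝ) k.castSucc
            - y ((Equiv.Perm.decomposeFin.symm (p, e)) k)))
        = (c / (b - y p)) * ∏ k : Fin m,
            ((c + y p) + ∑ i ∈ Finset.Iio k, (fun i => y (Equiv.swap 0 p (Fin.succ i))) (e i)) /
            ((Fin.cons (y p) (fun i => (fun i => y (Equiv.swap 0 p (Fin.succ i))) (e i)) : Fin _ → ℝ) k.castSucc
              - (fun i => y (Equiv.swap 0 p (Fin.succ i))) (e k)) := by
      intro p e
      have hσ : ∀ x : Fin (m+1), y ((Equiv.Perm.decomposeFin.symm (p, e)) x)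
          = (Fin.cons (y p) (fun i => y (Equiv.swap 0 p (Fin.succ (e i)))) : Fin _ → ℝ) x := by
        intro x
        refine Fin.cases ?_ (fun i => ?_) x
        · simp
        · simp [Equiv.Perm.decomposeFin_symm_apply_succ]
      simp only [hσ]
      rw [Fin.prod_univ_succ]
      congr 1
      · rw [show (Finset.Iio (0 : Fin (m+1))) = ∅ by ext i; simp]
        simp
      · apply Finset.prod_congr rfl
        intro k _
        rw [sum_Iio_succ' _ k, ← Fin.succ_castSucc]
        simp only [Fin.cons_succ, Fin.cons_zero, add_assoc]
    have hy' : ∀ p : Fin (m+1),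
        Function.Injective (fun i : Fin m => y (Equiv.swap 0 p (Fin.succ i))) := by
      intro p a a' h
      exact Fin.succ_injective _ ((Equiv.swap 0 p).injective (hy h))
    have hb' : ∀ (p : Fin (m+1)) (i : Fin m), y p ≠ y (Equiv.swap 0 p (Fin.succ i)) := by
      intro p i h
      have h3 := congrArg (Equiv.swap 0 p) (hy h)
      rw [Equiv.swap_apply_right, Equiv.swap_apply_self] at h3
      exact Fin.succ_ne_zero i h3.symm
    set f : ℝ[X] := C c * ∏ j ∈ Finset.range m, (C ((j:ℝ)+1) * X + C c) with hfdef
    have hfe : ∀ t : ℝ, f.eval t = c * ∏ j ∈ Finset.range m, (((j:ℝ)+1) * t + c) := by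
      intro t; simp [hfdef, Polynomial.eval_prod]
    have hfd : f.degree < ((m+1 : ℕ) : WithBot ℕ) := by
      have h1 : f.natDegree ≤ m := by
        refine le_trans (Polynomial.natDegree_mul_le) ?_
        simp only [Polynomial.natDegree_C, zero_add]
        refine le_trans (Polynomial.natDegree_prod_le _ _) ?_
        refine le_trans (Finset.sum_le_card_nsmul _ _ 1 ?_) (by simp)
        intro j _; exact Polynomial.natDegree_linear_le
      refine lt_of_le_of_lt (Polynomial.degree_le_natDegree) ?_
      exact_mod_cast Nat.lt_succ_of_le h1
    rw [← Equiv.sum_comp (Equiv.Perm.decomposeFin.symm :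
          Fin (m+1) × Equiv.Perm (Fin m) ≃ Equiv.Perm (Fin (m+1))), Fintype.sum_prod_type]
    have main : ∀ p : Fin (m+1), (∑ e : Equiv.Perm (Fin m), ∏ k : Fin (m+1),
        (c + ∑ i ∈ Finset.Iio k, y ((Equiv.Perm.decomposeFin.symm (p, e)) i)) /
        ((Fin.cons b (fun i => y ((Equiv.Perm.decomposeFin.symm (p, e)) i)) : Fin _ → ℝ) k.castSucc
          - y ((Equiv.Perm.decomposeFin.symm (p, e)) k)))
        = f.eval (y p) / ((b - y p) * ∏ i ∈ univ.erase p, (y p - y i)) := by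
      intro p
      rw [Finset.sum_congr rfl (fun e _ => key p e), ← Finset.mul_sum,
        ih (c + y p) (y p) (fun i : Fin m => y (Equiv.swap 0 p (Fin.succ i))) (hy' p) (hb' p),
        prod_swap_succ (fun q => y p - y q) p, div_mul_div_comm]
      rw [hfe (y p)]
      have hnum : ∀ j ∈ Finset.range m, ((c + y p) + (j:ℝ) * y p) = (((j:ℝ)+1) * (y p) + c) :=
        fun j _ => by ring
      rw [Finset.prod_congr rfl hnum]
    rw [Finset.sum_congr rfl (fun p _ => main p), lag_frac y hy b hb f hfd, hfe b,
      Finset.prod_range_succ']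
    have hnum2 : ∀ j ∈ Finset.range m, (c + ((j+1 : ℕ) : ℝ) * b) = (((j:ℝ)+1) * b + c) :=
      fun j _ => by push_cast; ring
    rw [Finset.prod_congr rfl hnum2]
    push_cast
    ring

theorem stmt15 (n : ℕ) (l : Fin (n+1) → ℝ) (hl : Function.Injective l) :
    ∑ σ : Equiv.Perm (Fin (n+1)), l (σ 0) * ∏ k : Fin n,
      (∑ i ∈ Finset.Iic k.castSucc, l (σ i)) / (l (σ k.castSucc) - l (σ k.succ))
    = (n.factorial : ℝ) * ∑ j, l j := by
  classical
  have hy' : ∀ p : Fin (n+1),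
      Function.Injective (fun i : Fin n => l (Equiv.swap 0 p (Fin.succ i))) := by
    intro p a a' h
    exact Fin.succ_injective _ ((Equiv.swap 0 p).injective (hl h))
  have hb' : ∀ (p : Fin (n+1)) (i : Fin n), l p ≠ l (Equiv.swap 0 p (Fin.succ i)) := by
    intro p i h
    have h3 := congrArg (Equiv.swap 0 p) (hl h)
    rw [Equiv.swap_apply_right, Equiv.swap_apply_self] at h3
    exact Fin.succ_ne_zero i h3.symm
  set f : ℝ[X] := X^(n+1) - ∏ q : Fin (n+1), (X - C (l q)) with hfdef
  have hmonic : (∏ q : Fin (n+1), (X - C (l q)) : ℝ[X]).Monic :=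
    monic_prod_of_monic _ _ fun q _ => monic_X_sub_C _
  have hndeg : (∏ q : Fin (n+1), (X - C (l q)) : ℝ[X]).natDegree = n+1 := by
    rw [natDegree_prod_of_monic _ _ fun q _ => monic_X_sub_C _]; simp
  have hdegs : (X^(n+1) : ℝ[X]).degree = (∏ q : Fin (n+1), (X - C (l q)) : ℝ[X]).degree := by
    rw [Polynomial.degree_X_pow, Polynomial.degree_eq_natDegree hmonic.ne_zero, hndeg]
  have hfd : f.degree < ((n+1 : ℕ) : WithBot ℕ) := by
    have h := Polynomial.degree_sub_lt hdegs (pow_ne_zero _ Polynomial.X_ne_zero)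
      (by rw [(Polynomial.monic_X_pow _).leadingCoeff, hmonic.leadingCoeff])
    rwa [Polynomial.degree_X_pow] at h
  have hcoeff : f.coeff n = ∑ j, l j := by
    rw [hfdef, Polynomial.coeff_sub, Polynomial.coeff_X_pow, if_neg (by omega)]
    have hrw : (∏ q : Fin (n+1), (X - C (l q)) : ℝ[X])
        = (Multiset.map (fun t => X - C t) ((univ : Finset (Fin (n+1))).val.map l)).prod := by
      rw [Finset.prod_eq_multiset_prod, Multiset.map_map]; rfl
    rw [hrw, Multiset.prod_X_sub_C_coeff _ (by simp)]
    have hcard : Multiset.card (((univ : Finset (Fin (n+1))).val.map l)) = n+1 := by simp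
    rw [hcard]
    have h1 : n + 1 - n = 1 := by omega
    rw [h1, Multiset.esymm, Multiset.powersetCard_one]
    simp [Finset.sum_eq_multiset_sum, Multiset.map_map, Function.comp_def]
  have heval : ∀ p, f.eval (l p) = (l p)^(n+1) := by
    intro p
    have h0 : ∏ q : Fin (n+1), (l p - l q) = 0 :=
      Finset.prod_eq_zero (Finset.mem_univ p) (by simp)
    simp [hfdef, Polynomial.eval_prod, h0]
  have key : ∀ (p : Fin (n+1)) (e : Equiv.Perm (Fin n)),
      l ((Equiv.Perm.decomposeFin.symm (p, e)) 0) * ∏ k : Fin n,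
        (∑ i ∈ Finset.Iic k.castSucc, l ((Equiv.Perm.decomposeFin.symm (p, e)) i)) /
          (l ((Equiv.Perm.decomposeFin.symm (p, e)) k.castSucc)
            - l ((Equiv.Perm.decomposeFin.symm (p, e)) k.succ))
      = l p * ∏ k : Fin n,
          (l p + ∑ i ∈ Finset.Iio k, (fun i => l (Equiv.swap 0 p (Fin.succ i))) (e i)) /
          ((Fin.cons (l p) (fun i => (fun i : Fin n => l (Equiv.swap 0 p (Fin.succ i))) (e i))
              : Fin _ → ℝ) k.castSucc
            - (fun i => l (Equiv.swap 0 p (Fin.succ i))) (e k)) := by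
    intro p e
    have hσ : ∀ x : Fin (n+1), l ((Equiv.Perm.decomposeFin.symm (p, e)) x)
        = (Fin.cons (l p) (fun i => l (Equiv.swap 0 p (Fin.succ (e i)))) : Fin _ → ℝ) x := by
      intro x
      refine Fin.cases ?_ (fun i => ?_) x
      · simp
      · simp [Equiv.Perm.decomposeFin_symm_apply_succ]
    simp only [hσ]
    rw [Fin.cons_zero]
    refine congrArg₂ (fun a b : ℝ => a * b) rfl ?_
    refine Finset.prod_congr rfl fun k _ => ?_
    rw [Iic_castSucc_eq, sum_Iio_succ' _ k]
    simp only [Fin.cons_succ, Fin.cons_zero]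
  rw [← Equiv.sum_comp (Equiv.Perm.decomposeFin.symm :
        Fin (n+1) × Equiv.Perm (Fin n) ≃ Equiv.Perm (Fin (n+1))), Fintype.sum_prod_type]
  have main : ∀ p : Fin (n+1),
      (∑ e : Equiv.Perm (Fin n), l ((Equiv.Perm.decomposeFin.symm (p, e)) 0) * ∏ k : Fin n,
        (∑ i ∈ Finset.Iic k.castSucc, l ((Equiv.Perm.decomposeFin.symm (p, e)) i)) /
          (l ((Equiv.Perm.decomposeFin.symm (p, e)) k.castSucc)
            - l ((Equiv.Perm.decomposeFin.symm (p, e)) k.succ)))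
      = (n.factorial : ℝ) * (f.eval (l p) / ∏ i ∈ univ.erase p, (l p - l i)) := by
    intro p
    rw [Finset.sum_congr rfl (fun e _ => key p e), ← Finset.mul_sum,
      keyV n (l p) (l p) (fun i : Fin n => l (Equiv.swap 0 p (Fin.succ i))) (hy' p) (hb' p),
      prod_swap_succ (fun q => l p - l q) p, heval p]
    have h1 : ∀ j ∈ Finset.range n, (l p + (j:ℝ) * l p) = ((j+1 : ℕ) : ℝ) * l p :=
      fun j _ => by push_cast; ring
    rw [Finset.prod_congr rfl h1, Finset.prod_mul_distrib, ← Nat.cast_prod,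
      Finset.prod_range_add_one_eq_factorial, Finset.prod_const, Finset.card_range]
    ring
  rw [Finset.sum_congr rfl (fun p _ => main p), ← Finset.mul_sum, divided_diff l hl f hfd, hcoeff]
end

section
/- Let λ₁,…,λ_{n+1} be pairwise distinct reals and Y, Z reals each distinct from all λ_k. Then ∑_{σ∈S_{n+1}} (1/((λ_{σ(1)} − Y)(λ_{σ(n+1)} − Z))) ∏_{k=1}^{n} 1/(λ_{σ(k)} − λ_{σ(k+1)}) = (Z − Y)^n · ∏_{k=1}^{n+1} 1/((λ_k − Y)(λ_k − Z)). -/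
open Finset

section Aux

variable {n : ℕ}

/-- The permutation of `Fin (n+2)` sending `Fin.last` to `j` and `castSucc k` to
`j.succAbove (τ k)`. -/
private def snocFun (j : Fin (n+2)) (τ : Equiv.Perm (Fin (n+1))) : Fin (n+2) → Fin (n+2) :=
  Fin.snoc (fun k => j.succAbove (τ k)) j

private lemma snocFun_injective (j : Fin (n+2)) (τ : Equiv.Perm (Fin (n+1))) :
    Function.Injective (snocFun j τ) := by
  intro a b hab
  induction a using Fin.lastCases with
  | last =>
    induction b using Fin.lastCases with
    | last => rfl
    | cast b =>
      simp only [snocFun, Fin.snoc_last, Fin.snoc_castSucc] at hab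
      exact absurd hab.symm (Fin.succAbove_ne j (τ b))
  | cast a =>
    induction b using Fin.lastCases with
    | last =>
      simp only [snocFun, Fin.snoc_last, Fin.snoc_castSucc] at hab
      exact absurd hab (Fin.succAbove_ne j (τ a))
    | cast b =>
      simp only [snocFun, Fin.snoc_castSucc] at hab
      exact congrArg Fin.castSucc (τ.injective (Fin.succAbove_right_injective hab))

private noncomputable def snocPerm (j : Fin (n+2)) (τ : Equiv.Perm (Fin (n+1))) :
    Equiv.Perm (Fin (n+2)) :=
  Equiv.ofBijective (snocFun j τ) ((Finite.injective_iff_bijective).mp (snocFun_injective j τ))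

private lemma snocPerm_castSucc (j : Fin (n+2)) (τ : Equiv.Perm (Fin (n+1))) (k : Fin (n+1)) :
    snocPerm j τ (Fin.castSucc k) = j.succAbove (τ k) := by
  simp [snocPerm, snocFun, Equiv.ofBijective_apply, Fin.snoc_castSucc]

private lemma snocPerm_last (j : Fin (n+2)) (τ : Equiv.Perm (Fin (n+1))) :
    snocPerm j τ (Fin.last (n+1)) = j := by
  simp [snocPerm, snocFun, Equiv.ofBijective_apply, Fin.snoc_last]

private lemma snocPerm_bijective :
    Function.Bijective (fun p : Fin (n+2) × Equiv.Perm (Fin (n+1)) => snocPerm p.1 p.2) := by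
  rw [Fintype.bijective_iff_injective_and_card]
  constructor
  · rintro ⟨j, τ⟩ ⟨j', τ'⟩ h
    have hfun : ∀ i, snocFun j τ i = snocFun j' τ' i := by
      intro i
      have := congrArg (fun e : Equiv.Perm (Fin (n+2)) => e i) h
      simpa [snocPerm, Equiv.ofBijective_apply] using this
    have hj : j = j' := by
      have := hfun (Fin.last (n+1))
      simpa [snocFun, Fin.snoc_last] using this
    subst hj
    have hτ : τ = τ' := by
      apply Equiv.ext; intro k
      have := hfun (Fin.castSucc k)
      simp only [snocFun, Fin.snoc_castSucc] at this
      exact Fin.succAbove_right_injective this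
    rw [hτ]
  · simp [Fintype.card_perm, Fintype.card_prod, Nat.factorial_succ]

private lemma prod_erase_succAbove {M : Type*} [CommMonoid M] (j : Fin (n+1))
    (f : Fin (n+1) → M) :
    ∏ i ∈ univ.erase j, f i = ∏ k, f (j.succAbove k) := by
  have himg : univ.erase j = Finset.image j.succAbove univ := by
    ext i
    simp only [mem_erase, mem_univ, and_true, Finset.mem_image, true_and]
    constructor
    · intro hi
      obtain ⟨k, hk⟩ := Fin.exists_succAbove_eq hi
      exact ⟨k, hk⟩
    · rintro ⟨k, -, rfl⟩
      exact (Fin.succAbove_ne j k)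
  rw [himg, Finset.prod_image (fun a _ b _ h => Fin.succAbove_right_injective h)]

open Polynomial in
private lemma lagrange_sum (m : ℕ) (Y Z : ℝ) (l : Fin (m+1) → ℝ) (hl : Function.Injective l) :
    ∑ j, (l j - Y)^m * ∏ i ∈ univ.erase j, ((l j - l i)⁻¹ * (Z - l i)) = (Z - Y)^m := by
  have h := Lagrange.eq_interpolate (s := univ) (v := l) (f := (X - C Y)^m)
    (hl.injOn) (by
      rw [Polynomial.degree_pow, Polynomial.degree_X_sub_C, Finset.card_univ, Fintype.card_fin,
        nsmul_eq_mul, mul_one]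
      exact_mod_cast Nat.lt_succ_self m)
  have h2 := congrArg (Polynomial.eval Z) h
  simp only [Lagrange.interpolate_apply, Lagrange.basis, Lagrange.basisDivisor,
    Polynomial.eval_finset_sum, Polynomial.eval_mul, Polynomial.eval_prod, Polynomial.eval_pow,
    Polynomial.eval_sub, Polynomial.eval_X, Polynomial.eval_C] at h2
  rw [← h2]

end Aux

theorem stmt17 (n : ℕ) (Y Z : ℝ) (l : Fin (n+1) → ℝ) (hl : Function.Injective l)
    (hY : ∀ k, l k ≠ Y) (hZ : ∀ k, l k ≠ Z) :
    ∑ σ : Equiv.Perm (Fin (n+1)),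
      (1 / ((l (σ 0) - Y) * (l (σ (Fin.last n)) - Z))) *
        ∏ k : Fin n, 1 / (l (σ k.castSucc) - l (σ k.succ))
    = (Z - Y)^n * ∏ k, 1 / ((l k - Y) * (l k - Z)) := by
  induction n generalizing Z with
  | zero =>
    have hone : ∀ σ : Equiv.Perm (Fin 1), σ = 1 := fun σ => Subsingleton.elim _ _
    rw [Fintype.sum_eq_single 1 (fun σ h => absurd (hone σ) h)]
    simp
  | succ n ih =>
    rw [← Fintype.sum_bijective _ snocPerm_bijective _ _ (fun p => rfl), Fintype.sum_prod_type]
    have hstep : ∀ j : Fin (n+2),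
        (∑ τ : Equiv.Perm (Fin (n+1)),
          (1 / ((l ((snocPerm j τ) 0) - Y) * (l ((snocPerm j τ) (Fin.last (n+1))) - Z))) *
            ∏ k : Fin (n+1), 1 / (l ((snocPerm j τ) k.castSucc) - l ((snocPerm j τ) k.succ)))
        = (1 / (l j - Z)) *
            ((l j - Y)^n * ∏ k, 1 / ((l (j.succAbove k) - Y) * (l (j.succAbove k) - l j))) := by
      intro j
      rw [← ih (l j) (fun k => l (j.succAbove k))
        (hl.comp (Fin.succAbove_right_injective))
        (fun k => hY _) (fun k h => Fin.succAbove_ne j k (hl h)), Finset.mul_sum]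
      apply Finset.sum_congr rfl
      intro τ _
      have h0 : (snocPerm j τ) 0 = j.succAbove (τ 0) := by
        have : (0 : Fin (n+2)) = Fin.castSucc 0 := rfl
        rw [this, snocPerm_castSucc]
      rw [h0, snocPerm_last, Fin.prod_univ_castSucc]
      have hfac : ∀ k' : Fin n,
          (1 : ℝ) / (l ((snocPerm j τ) (Fin.castSucc k').castSucc) -
            l ((snocPerm j τ) (Fin.castSucc k').succ))
          = 1 / (l (j.succAbove (τ k'.castSucc)) - l (j.succAbove (τ k'.succ))) := by
        intro k'
        rw [show ((Fin.castSucc k').succ) = Fin.castSucc (k'.succ) from (Fin.succ_castSucc _).symm,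
          snocPerm_castSucc, snocPerm_castSucc]
      rw [Finset.prod_congr rfl (fun k' _ => hfac k')]
      rw [show ((Fin.last n).succ) = Fin.last (n+1) from Fin.succ_last n,
        snocPerm_castSucc, snocPerm_last]
      simp only [one_div, mul_inv]
      ring
    rw [Finset.sum_congr rfl (fun j _ => hstep j)]
    rw [← lagrange_sum (n+1) Y Z l hl, Finset.sum_mul]
    apply Finset.sum_congr rfl
    intro j _
    rw [prod_erase_succAbove j, Fin.prod_univ_succAbove (fun i => 1 / ((l i - Y) * (l i - Z))) j]
    have hterm : ∀ k : Fin (n+1),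
        ((l j - l (j.succAbove k))⁻¹ * (Z - l (j.succAbove k))) *
          (1 / ((l (j.succAbove k) - Y) * (l (j.succAbove k) - Z)))
        = 1 / ((l (j.succAbove k) - Y) * (l (j.succAbove k) - l j)) := by
      intro k
      have h1 : l (j.succAbove k) - Y ≠ 0 := sub_ne_zero.mpr (hY _)
      have h2 : l (j.succAbove k) - Z ≠ 0 := sub_ne_zero.mpr (hZ _)
      have h3 : l j - l (j.succAbove k) ≠ 0 :=
        sub_ne_zero.mpr (fun h => (Fin.succAbove_ne j k) (hl h.symm))
      have h4 : l (j.succAbove k) - l j ≠ 0 :=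
        sub_ne_zero.mpr (fun h => (Fin.succAbove_ne j k) (hl h))
      field_simp
      ring
    have hP : (∏ k, ((l j - l (j.succAbove k))⁻¹ * (Z - l (j.succAbove k)))) *
        ∏ k, (1 / ((l (j.succAbove k) - Y) * (l (j.succAbove k) - Z)))
        = ∏ k, 1 / ((l (j.succAbove k) - Y) * (l (j.succAbove k) - l j)) := by
      rw [← Finset.prod_mul_distrib]
      exact Finset.prod_congr rfl (fun k _ => hterm k)
    have hs : (1 / (l j - Z)) * (l j - Y)^n
        = (l j - Y)^(n+1) * (1 / ((l j - Y) * (l j - Z))) := by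
      have h1 : l j - Y ≠ 0 := sub_ne_zero.mpr (hY _)
      have h2 : l j - Z ≠ 0 := sub_ne_zero.mpr (hZ _)
      field_simp
      ring
    calc (1 / (l j - Z)) *
          ((l j - Y)^n * ∏ k, 1 / ((l (j.succAbove k) - Y) * (l (j.succAbove k) - l j)))
        = ((1 / (l j - Z)) * (l j - Y)^n) *
            ∏ k, 1 / ((l (j.succAbove k) - Y) * (l (j.succAbove k) - l j)) := by ring
      _ = ((l j - Y)^(n+1) * (1 / ((l j - Y) * (l j - Z)))) *
            ((∏ k, ((l j - l (j.succAbove k))⁻¹ * (Z - l (j.succAbove k)))) *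
              ∏ k, (1 / ((l (j.succAbove k) - Y) * (l (j.succAbove k) - Z)))) := by rw [hs, hP]
      _ = (l j - Y)^(n+1) * (∏ k, ((l j - l (j.succAbove k))⁻¹ * (Z - l (j.succAbove k)))) *
            (1 / ((l j - Y) * (l j - Z)) *
              ∏ k, 1 / ((l (j.succAbove k) - Y) * (l (j.succAbove k) - Z))) := by ring
end
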